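/- arXiv:1805.10918 — 7 statements merged into one kernel-verified Lean document; each statement's English description precedes it below -/
import Mathlib

section
/- For real k, p ≥ 1, ∫_𝕋 |cos t|^{2p} |sin t|^{2kp} dm ≤ (1/(kp+1)) · ∫_𝕋 |cos t|^{2p} dm · ∫_𝕋 |sin t|^{2kp} dm, where m is the normalized Haar measure on the torus 𝕋 = ℝ/2πℤ. -/
open Real intervalIntegral MeasureTheory Set

-- pointwise crossing inequality
lemma aux_ptwise (p q lam u x : ℝ) (hp : 1 ≤ p) (hq : 0 < q)
    (hl0 : 0 ≤ lam) (hu : u ^ (p-1) = lam) (hu0 : 0 ≤ u) (hu1 : u ≤ 1)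
    (hx0 : 0 ≤ x) (hx1 : x ≤ 1) :
    (x ^ p - lam * x) * ((1-x) ^ q - (1-u) ^ q) ≤ 0 := by
  have hp1 : (0:ℝ) ≤ p - 1 := by linarith
  have hxp : x ^ p = x * x ^ (p-1) := by
    nth_rewrite 1 [show p = 1 + (p-1) by ring]
    rw [Real.rpow_add_of_nonneg hx0 zero_le_one hp1, Real.rpow_one]
  rcases le_total x u with h | h
  · apply mul_nonpos_iff.mpr; right
    constructor
    · have h1 : x ^ (p-1) ≤ lam := hu ▸ Real.rpow_le_rpow hx0 h hp1
      have := mul_le_mul_of_nonneg_left h1 hx0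
      nlinarith [hxp]
    · have : (1-u) ^ q ≤ (1-x) ^ q :=
        Real.rpow_le_rpow (by linarith) (by linarith) hq.le
      linarith
  · apply mul_nonpos_iff.mpr; left
    constructor
    · have h1 : lam ≤ x ^ (p-1) := hu ▸ Real.rpow_le_rpow hu0 h hp1
      have := mul_le_mul_of_nonneg_left h1 hx0
      nlinarith [hxp]
    · have : (1-x) ^ q ≤ (1-u) ^ q :=
        Real.rpow_le_rpow (by linarith) (by linarith) hq.le
      linarith

theorem stmt_2 (k p : ℝ) (hk : 1 ≤ k) (hp : 1 ≤ p) :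
    (1 / (2 * π)) * ∫ t in (0:ℝ)..(2 * π), |Real.cos t| ^ (2 * p) * |Real.sin t| ^ (2 * k * p) ≤
      (1 / (k * p + 1)) *
        ((1 / (2 * π)) * ∫ t in (0:ℝ)..(2 * π), |Real.cos t| ^ (2 * p)) *
        ((1 / (2 * π)) * ∫ t in (0:ℝ)..(2 * π), |Real.sin t| ^ (2 * k * p)) := by
  have hq : 1 ≤ k * p := one_le_mul_of_one_le_of_one_le hk hp
  have hq0 : (0:ℝ) < k * p := by linarith
  have hπ : (0:ℝ) < π := Real.pi_pos
  set q : ℝ := k * p with hqdef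
  -- continuity facts
  have h2p : (0:ℝ) ≤ 2 * p := by linarith
  have h2q : (0:ℝ) ≤ 2 * q := by linarith
  have hFc : Continuous fun t : ℝ => |Real.cos t| ^ (2 * p) :=
    Real.continuous_cos.abs.rpow_const (fun x => Or.inr h2p)
  have hGc : Continuous fun t : ℝ => |Real.sin t| ^ (2 * k * p) := by
    exact Real.continuous_sin.abs.rpow_const (fun x => Or.inr (by nlinarith))
  set F : ℝ → ℝ := fun t => |Real.cos t| ^ (2 * p) with hFdef
  set G : ℝ → ℝ := fun t => |Real.sin t| ^ (2 * k * p) with hGdef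
  set A : ℝ := ∫ t in (0:ℝ)..(2 * π), F t with hAdef
  set B : ℝ := ∫ t in (0:ℝ)..(2 * π), G t with hBdef
  -- G in terms of 2*q
  have hGq : ∀ t, G t = |Real.sin t| ^ (2 * q) := by
    intro t; rw [hGdef, hqdef]; ring_nf
  -- ∫ cos^2 = π
  have hcos2 : ∫ t in (0:ℝ)..(2*π), Real.cos t ^ 2 = π := by
    rw [integral_cos_sq]
    simp [Real.sin_two_pi, Real.cos_two_pi]
  -- key2' : ∫ cos^2 * G = (1/(2q+2)) * B
  have key2 : ∫ t in (0:ℝ)..(2*π), Real.cos t ^ 2 * G t = (1/(2*q+2)) * B := by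
    have hsc : Continuous fun t : ℝ => Real.sin t ^ (2*q) :=
      Real.continuous_sin.rpow_const (fun x => Or.inr h2q)
    have hGc' : Continuous fun t : ℝ => |Real.sin t| ^ (2*q) :=
      Real.continuous_sin.abs.rpow_const (fun x => Or.inr h2q)
    have haux_per : ∀ f : ℝ → ℝ, Continuous f → (∀ t, f (t + π) = f t) →
        ∫ t in (0:ℝ)..(2*π), f t = 2 * ∫ t in (0:ℝ)..π, f t := by
      intro f hf hper
      have h1 : ∫ t in π..(2*π), f t = ∫ t in (0:ℝ)..π, f t := by
        have := intervalIntegral.integral_comp_add_right (a := (0:ℝ)) (b := π) f π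
        simp only [zero_add, hper] at this
        rw [this]
        norm_num [two_mul]
      rw [← intervalIntegral.integral_add_adjacent_intervals (a := (0:ℝ)) (b := π) (c := 2*π)
        (hf.intervalIntegrable _ _) (hf.intervalIntegrable _ _), h1]
      ring
    have haux_ftc : ∫ t in (0:ℝ)..π,
        ((2*q+2) * ((Real.cos t)^2 * Real.sin t ^ (2*q)) - Real.sin t ^ (2*q)) = 0 := by
      have hc2 : Continuous fun t : ℝ =>
          ((2*q+2) * ((Real.cos t)^2 * Real.sin t ^ (2*q)) - Real.sin t ^ (2*q)) := by
        continuity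
      have key := intervalIntegral.integral_eq_sub_of_hasDerivAt_of_le
        (f := fun t => Real.cos t * Real.sin t ^ (2*q+1))
        (f' := fun t => ((2*q+2) * ((Real.cos t)^2 * Real.sin t ^ (2*q)) - Real.sin t ^ (2*q)))
        (a := 0) (b := π) Real.pi_pos.le
        ?_ ?_ (hc2.intervalIntegrable _ _)
      · rw [key]
        norm_num [Real.zero_rpow (by positivity : 2*q+1 ≠ 0)]
      · exact (Real.continuous_cos.mul (Real.continuous_sin.rpow_const
          (fun x => Or.inr (by linarith)))).continuousOn
      · intro t ht
        have hst : 0 < Real.sin t := Real.sin_pos_of_pos_of_lt_pi ht.1 ht.2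
        have hd := (Real.hasDerivAt_cos t).mul
            ((Real.hasDerivAt_sin t).rpow_const (p := 2*q+1) (Or.inl hst.ne'))
        refine hd.congr_deriv ?_
        symm
        have e1 : (2*q+1-1 : ℝ) = 2*q := by ring
        have e2 : Real.sin t ^ (2*q+1) = Real.sin t * Real.sin t ^ (2*q) := by
          nth_rewrite 1 [show (2*q+1 : ℝ) = 1 + 2*q by ring]
          rw [Real.rpow_add hst, Real.rpow_one]
        have e3 : Real.sin t ^ 2 = 1 - Real.cos t ^ 2 := Real.sin_sq t
        rw [e1, e2]
        linear_combination Real.sin t ^ (2*q) * e3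
    have hper1 : ∀ t : ℝ, Real.cos (t+π) ^ 2 * |Real.sin (t+π)| ^ (2*q)
        = Real.cos t ^ 2 * |Real.sin t| ^ (2*q) := by
      intro t; rw [Real.cos_add_pi, Real.sin_add_pi, abs_neg, neg_sq]
    have hper2 : ∀ t : ℝ, |Real.sin (t+π)| ^ (2*q) = |Real.sin t| ^ (2*q) := by
      intro t; rw [Real.sin_add_pi, abs_neg]
    have e1 := haux_per (fun t => Real.cos t ^ 2 * |Real.sin t| ^ (2*q)) ((Real.continuous_cos.pow 2).mul hGc') hper1
    have e2 := haux_per _ hGc' hper2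
    have habs : ∀ t ∈ uIcc (0:ℝ) π, |Real.sin t| ^ (2*q) = Real.sin t ^ (2*q) := by
      intro t ht
      rw [uIcc_of_le Real.pi_pos.le] at ht
      rw [abs_of_nonneg (Real.sin_nonneg_of_nonneg_of_le_pi ht.1 ht.2)]
    have hcongr : EqOn (fun t => |Real.sin t| ^ (2*q)) (fun t => Real.sin t ^ (2*q))
        (uIcc (0:ℝ) π) := fun t ht => habs t ht
    have hcongr2 : EqOn (fun t => Real.cos t ^ 2 * |Real.sin t| ^ (2*q))
        (fun t => Real.cos t ^ 2 * Real.sin t ^ (2*q)) (uIcc (0:ℝ) π) := by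
      intro t ht; simp only; rw [habs t ht]
    have hBq : B = ∫ t in (0:ℝ)..(2*π), |Real.sin t| ^ (2*q) := by
      rw [hBdef]; exact intervalIntegral.integral_congr (fun t _ => hGq t)
    have hLq : ∫ t in (0:ℝ)..(2*π), Real.cos t ^ 2 * G t
        = ∫ t in (0:ℝ)..(2*π), Real.cos t ^ 2 * |Real.sin t| ^ (2*q) :=
      intervalIntegral.integral_congr (fun t _ => by simp only [hGq])
    rw [hLq, hBq, e1, e2, intervalIntegral.integral_congr hcongr,
      intervalIntegral.integral_congr hcongr2]
    rw [intervalIntegral.integral_sub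
        (f := fun t => (2*q+2) * (Real.cos t ^ 2 * Real.sin t ^ (2*q)))
        (g := fun t => Real.sin t ^ (2*q)) ((continuous_const.mul
        ((Real.continuous_cos.pow 2).mul hsc)).intervalIntegrable _ _)
        (hsc.intervalIntegrable _ _), intervalIntegral.integral_const_mul] at haux_ftc
    have h2q2 : (2*q+2) ≠ 0 := by positivity
    field_simp
    linarith [haux_ftc]
  -- λ and u
  have hA0 : 0 ≤ A :=
    intervalIntegral.integral_nonneg (by positivity) (fun t _ => Real.rpow_nonneg (abs_nonneg _) _)
  have hAπ : A ≤ π := by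
    have hmono : A ≤ ∫ t in (0:ℝ)..(2*π), Real.cos t ^ 2 := by
      rw [hAdef]
      apply intervalIntegral.integral_mono_on (by positivity)
        (hFc.intervalIntegrable _ _) ((Real.continuous_cos.pow 2).intervalIntegrable _ _)
      intro t _
      have h1 : |Real.cos t| ^ (2*p) ≤ |Real.cos t| ^ (2:ℝ) :=
        Real.rpow_le_rpow_of_exponent_ge' (abs_nonneg _) (abs_cos_le_one t)
          (by norm_num) (by linarith)
      calc F t ≤ |Real.cos t| ^ (2:ℝ) := h1
      _ = Real.cos t ^ 2 := by
          rw [show (2:ℝ) = ((2:ℕ):ℝ) by norm_num, Real.rpow_natCast, sq_abs]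
    calc A ≤ ∫ t in (0:ℝ)..(2*π), Real.cos t ^ 2 := hmono
    _ = π := hcos2
  set lam : ℝ := A / π with hlamdef
  have hlam0 : 0 ≤ lam := div_nonneg hA0 hπ.le
  have hlam1 : lam ≤ 1 := (div_le_one hπ).mpr hAπ
  have hlamA : lam * π = A := by rw [hlamdef]; exact div_mul_cancel₀ A hπ.ne'
  set u : ℝ := lam ^ (p-1)⁻¹ with hudef
  have hu0 : 0 ≤ u := Real.rpow_nonneg hlam0 _
  have hu1 : u ≤ 1 := Real.rpow_le_one hlam0 hlam1 (inv_nonneg.2 (by linarith))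
  have hu : u ^ (p-1) = lam := by
    rcases eq_or_lt_of_le hp with h1 | h1
    · have hlameq : lam = 1 := by
        have hcong : ∫ t in (0:ℝ)..(2*π), F t = ∫ t in (0:ℝ)..(2*π), Real.cos t ^ 2 := by
          apply intervalIntegral.integral_congr
          intro t _
          show |Real.cos t| ^ (2*p) = Real.cos t ^ 2
          rw [← h1]
          rw [show (2:ℝ)*1 = ((2:ℕ):ℝ) by norm_num, Real.rpow_natCast, sq_abs]
        rw [hlamdef, hAdef, hcong, hcos2, div_self hπ.ne']
      rw [hudef, hlameq, ← h1]
      simp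
    · rw [hudef, ← Real.rpow_mul hlam0]
      rw [inv_mul_cancel₀ (by linarith : p - 1 ≠ 0), Real.rpow_one]
  set g0 : ℝ := (1-u) ^ q with hg0def
  -- pointwise crossing
  have hptw : ∀ t ∈ Icc (0:ℝ) (2*π),
      (F t - lam * Real.cos t ^ 2) * (G t - g0) ≤ 0 := by
    intro t _
    have hx0 : (0:ℝ) ≤ Real.cos t ^ 2 := sq_nonneg _
    have hx1 : Real.cos t ^ 2 ≤ 1 := Real.cos_sq_le_one t
    have hF : F t = (Real.cos t ^ 2) ^ p := by
      rw [hFdef]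
      simp only
      rw [Real.rpow_mul (abs_nonneg _), show ((2:ℝ)) = ((2:ℕ):ℝ) by norm_num,
        Real.rpow_natCast, sq_abs]
    have hG : G t = (1 - Real.cos t ^ 2) ^ q := by
      rw [hGq t, Real.rpow_mul (abs_nonneg _), show ((2:ℝ)) = ((2:ℕ):ℝ) by norm_num,
        Real.rpow_natCast, sq_abs, Real.sin_sq]
    rw [hF, hG, hg0def]
    exact aux_ptwise p q lam u (Real.cos t ^ 2) hp hq0 hlam0 hu hu0 hu1 hx0 hx1
  -- integral of the crossing product is nonpositive
  have hneg : ∫ t in (0:ℝ)..(2*π), (F t - lam * Real.cos t ^ 2) * (G t - g0) ≤ 0 := by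
    have h := intervalIntegral.integral_nonneg (μ := MeasureTheory.volume)
      (f := fun t => -((F t - lam * Real.cos t ^ 2) * (G t - g0)))
      (a := 0) (b := 2*π) (by positivity) (fun t ht => neg_nonneg.2 (hptw t ht))
    rw [intervalIntegral.integral_neg] at h
    linarith
  -- expand
  have hc_FG : Continuous fun t => F t * G t := hFc.mul hGc
  have hc_cG : Continuous fun t => Real.cos t ^ 2 * G t := (Real.continuous_cos.pow 2).mul hGc
  have hfun : (fun t => (F t - lam * Real.cos t ^ 2) * (G t - g0))
      = fun t => (F t * G t - lam * (Real.cos t ^ 2 * G t))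
          - (g0 * F t - (lam * g0) * Real.cos t ^ 2) := by
    funext t; ring
  rw [hfun,
    intervalIntegral.integral_sub
      (f := fun t => F t * G t - lam * (Real.cos t ^ 2 * G t))
      (g := fun t => g0 * F t - lam * g0 * Real.cos t ^ 2)
      ((hc_FG.sub (continuous_const.mul hc_cG)).intervalIntegrable _ _)
      (((continuous_const.mul hFc).sub
        (continuous_const.mul (Real.continuous_cos.pow 2))).intervalIntegrable _ _),
    intervalIntegral.integral_sub (f := fun t => F t * G t)
      (g := fun t => lam * (Real.cos t ^ 2 * G t)) (hc_FG.intervalIntegrable _ _)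
      ((continuous_const.mul hc_cG).intervalIntegrable _ _),
    intervalIntegral.integral_sub (f := fun t => g0 * F t)
      (g := fun t => lam * g0 * Real.cos t ^ 2) ((continuous_const.mul hFc).intervalIntegrable _ _)
      ((continuous_const.mul (Real.continuous_cos.pow 2)).intervalIntegrable _ _),
    intervalIntegral.integral_const_mul, intervalIntegral.integral_const_mul,
    intervalIntegral.integral_const_mul, ← hAdef, hcos2, key2] at hneg
  -- main bound
  have hmain : ∫ t in (0:ℝ)..(2*π), F t * G t ≤ lam * ((1/(2*q+2)) * B) := by
    have h0 : g0 * A - lam * g0 * π = 0 := by rw [← hlamA]; ring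
    linarith [hneg]
  show (1/(2*π)) * (∫ t in (0:ℝ)..(2*π), F t * G t)
      ≤ 1 / (q + 1) * (1 / (2 * π) * A) * (1 / (2 * π) * B)
  have h2q2 : (2*q+2) ≠ 0 := by positivity
  have hq1 : q + 1 ≠ 0 := by positivity
  calc (1/(2*π)) * ∫ t in (0:ℝ)..(2*π), F t * G t
      ≤ (1/(2*π)) * (lam * ((1/(2*q+2)) * B)) := by
        apply mul_le_mul_of_nonneg_left hmain (by positivity)
    _ = 1 / (q + 1) * (1 / (2 * π) * A) * (1 / (2 * π) * B) := by
        rw [hlamdef]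
        field_simp
        try exact Or.inl trivial
end

section
/- For real p, k ≥ 1, the ratio Γ(p+1)Γ(kp+1)/Γ(kp+p+1) is at most 1/(kp+1). -/
open Real

theorem key_ineq (k p : ℝ) (hk : 1 ≤ k) (hp : 1 ≤ p) :
    Real.Gamma (p + 1) * Real.Gamma (k * p + 2) ≤ Real.Gamma (k * p + p + 1) := by
  have hkp : 1 ≤ k * p := by nlinarith
  set t : ℝ := k * p + p - 1 with ht
  have htpos : 0 < t := by nlinarith
  set a : ℝ := (k * p) / t with ha
  have ha0 : 0 ≤ a := div_nonneg (by nlinarith) htpos.le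
  have hb0 : 0 ≤ 1 - a := by
    rw [sub_nonneg, ha, div_le_one htpos]; nlinarith
  have hab : a + (1 - a) = 1 := by ring
  have h2 : (2 : ℝ) ∈ Set.Ioi (0:ℝ) := by norm_num
  have hs : (k * p + p + 1 : ℝ) ∈ Set.Ioi (0:ℝ) := by simp; nlinarith
  have hcv := Real.convexOn_log_Gamma
  have h1 := hcv.2 h2 hs ha0 hb0 hab
  have h2' := hcv.2 h2 hs hb0 ha0 (by ring)
  have e1 : a • (2:ℝ) + (1 - a) • (k * p + p + 1) = p + 1 := by
    simp only [smul_eq_mul, ha]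
    field_simp
    ring
  have e2 : (1 - a) • (2:ℝ) + a • (k * p + p + 1) = k * p + 2 := by
    simp only [smul_eq_mul, ha]
    field_simp
    ring
  rw [e1] at h1
  rw [e2] at h2'
  simp only [smul_eq_mul, Function.comp_apply, Real.Gamma_two, Real.log_one, mul_zero,
    zero_add, add_zero] at h1 h2'
  have hsum : Real.log (Real.Gamma (p + 1)) + Real.log (Real.Gamma (k * p + 2)) ≤
      Real.log (Real.Gamma (k * p + p + 1)) := by
    have hr : (1 - a) * Real.log (Real.Gamma (k * p + p + 1)) +
        a * Real.log (Real.Gamma (k * p + p + 1)) = Real.log (Real.Gamma (k * p + p + 1)) := by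
      ring
    linarith
  have g1 : 0 < Real.Gamma (p + 1) := Real.Gamma_pos_of_pos (by linarith)
  have g2 : 0 < Real.Gamma (k * p + 2) := Real.Gamma_pos_of_pos (by linarith)
  have g3 : 0 < Real.Gamma (k * p + p + 1) := Real.Gamma_pos_of_pos (by nlinarith)
  have := Real.exp_le_exp.mpr hsum
  rwa [Real.exp_add, Real.exp_log g1, Real.exp_log g2, Real.exp_log g3] at this

theorem stmt_3 (k p : ℝ) (hk : 1 ≤ k) (hp : 1 ≤ p) :
    Real.Gamma (p + 1) * Real.Gamma (k * p + 1) / Real.Gamma (k * p + p + 1) ≤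
      1 / (k * p + 1) := by
  have hkp : 1 ≤ k * p := by nlinarith
  have hc : (0:ℝ) < k * p + 1 := by linarith
  have g3 : 0 < Real.Gamma (k * p + p + 1) := Real.Gamma_pos_of_pos (by nlinarith)
  have key := key_ineq k p hk hp
  have hrec : Real.Gamma (k * p + 2) = (k * p + 1) * Real.Gamma (k * p + 1) := by
    have := Real.Gamma_add_one (show (k*p+1:ℝ) ≠ 0 by positivity)
    rw [show k * p + 1 + 1 = k * p + 2 by ring] at this
    exact this
  rw [hrec] at key
  rw [div_le_div_iff₀ g3 hc]
  nlinarith [Real.Gamma_pos_of_pos (show (0:ℝ) < p + 1 by linarith)]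
end

section
/- If f is a vector-valued trigonometric polynomial on 𝕋 of degree at most d with values in a normed space E, then for p ≥ 1, ∫_𝕋 ‖f'‖^p dm ≤ d^p ∫_𝕋 ‖f‖^p dm. -/
open Real intervalIntegral
open Finset

noncomputable def bU (d k : ℕ) : ℝ := (2 * k + 1) * π / (2 * d)
noncomputable def bZ (d k : ℕ) : ℂ := Complex.exp (Complex.I * bU d k)

lemma bZ_ne_zero (d k : ℕ) : bZ d k ≠ 0 := Complex.exp_ne_zero _

lemma bZ_pow (d k m : ℕ) : bZ d k ^ m = Complex.exp (Complex.I * (m * bU d k)) := by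
  rw [bZ, ← Complex.exp_nat_mul]; ring_nf

lemma bZ_pow_2d {d : ℕ} (hd : 0 < d) (k : ℕ) : bZ d k ^ (2 * d) = -1 := by
  have hd' : (d:ℂ) ≠ 0 := Nat.cast_ne_zero.2 hd.ne'
  rw [bZ_pow, bU]
  have : (Complex.I * ((2*d : ℕ) * (((2 * (k:ℝ) + 1) * π / (2 * d) : ℝ) : ℂ)) : ℂ)
      = (2 * k + 1 : ℕ) * (π * Complex.I) := by
    push_cast
    field_simp
  rw [this, Complex.exp_nat_mul, Complex.exp_pi_mul_I, Odd.neg_one_pow ⟨k, by ring⟩]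

lemma bZ_ne_one {d : ℕ} (hd : 0 < d) (k : ℕ) : bZ d k ≠ 1 := by
  intro h
  have := bZ_pow_2d hd k
  rw [h, one_pow] at this
  norm_num at this

lemma bZ_sub_one_ne_zero {d : ℕ} (hd : 0 < d) (k : ℕ) : bZ d k - 1 ≠ 0 :=
  sub_ne_zero.2 (bZ_ne_one hd k)

-- reflection
lemma bZ_reflect {d : ℕ} (hd : 0 < d) {k : ℕ} (hk : k < 2 * d) :
    bZ d (2 * d - 1 - k) = (bZ d k)⁻¹ := by
  have hd' : ((2:ℝ) * d) ≠ 0 := by positivity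
  have h1 : bU d (2 * d - 1 - k) = 2 * π - bU d k := by
    rw [bU, bU]
    have : ((2 * d - 1 - k : ℕ) : ℝ) = 2 * d - 1 - k := by
      push_cast [Nat.cast_sub (by omega : k ≤ 2*d-1), Nat.cast_sub (by omega : 1 ≤ 2*d)]
      ring
    rw [this]
    field_simp
    ring
  rw [bZ, bZ, h1, ← Complex.exp_neg]
  push_cast
  rw [mul_sub]
  rw [Complex.exp_sub]
  have : Complex.exp (Complex.I * (2 * π)) = 1 := by
    simpa [mul_comm] using Complex.exp_int_mul_two_pi_mul_I 1
  rw [this, one_div, ← Complex.exp_neg]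

lemma bZ_eq_omega_pow {d : ℕ} (k : ℕ) :
    bZ d k = Complex.exp (Complex.I * (π / (2 * d))) ^ (2 * k + 1) := by
  rw [← Complex.exp_nat_mul, bZ, bU]
  push_cast
  ring_nf

lemma powsum {d : ℕ} (hd : 0 < d) {m : ℕ} (hm : 0 < m) (hm' : m < 2 * d) :
    ∑ k ∈ range (2 * d), bZ d k ^ m = 0 := by
  set ω := Complex.exp (Complex.I * (π / (2 * d))) with hω
  have key : ∀ k, bZ d k ^ m = ω ^ m * (ω ^ (2 * m)) ^ k := by
    intro k
    rw [bZ_eq_omega_pow, ← pow_mul, ← pow_mul, ← pow_add]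
    congr 1
    ring
  simp_rw [key]
  rw [← mul_sum, geom_sum_eq, ← pow_mul]
  · have h1 : ω ^ (2 * m * (2 * d)) = 1 := by
      rw [hω, ← Complex.exp_nat_mul]
      have : ((2 * m * (2 * d) : ℕ) : ℂ) * (Complex.I * (π / (2 * d))) = (m : ℤ) * (2 * π * Complex.I) := by
        have hd' : (d:ℂ) ≠ 0 := Nat.cast_ne_zero.2 hd.ne'
        push_cast
        field_simp
      rw [this, Complex.exp_int_mul_two_pi_mul_I]
    rw [h1]
    simp
  · -- ω ^ (2 * m) ≠ 1
    intro h
    rw [hω, ← Complex.exp_nat_mul, Complex.exp_eq_one_iff] at h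
    obtain ⟨n, hn⟩ := h
    have hd' : (d:ℂ) ≠ 0 := Nat.cast_ne_zero.2 hd.ne'
    have hπ : (π:ℂ) ≠ 0 := by
      simpa using Real.pi_ne_zero
    have hI : Complex.I ≠ 0 := Complex.I_ne_zero
    have : ((m:ℂ)) = 2 * d * n := by
      field_simp at hn
      have h0 : ((m:ℂ) - 2 * d * n) * (2 * Complex.I * π) = 0 := by
        push_cast at hn
        linear_combination (Complex.I * π) * hn
      rcases mul_eq_zero.1 h0 with h | h
      · linear_combination h
      · exact absurd h (by simp [Complex.I_ne_zero, hπ])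
    have h2 : (m:ℤ) = 2 * d * n := by exact_mod_cast this
    rcases le_or_gt n 0 with h|h
    · nlinarith [hm, hm']
    · nlinarith [hm, hm']

lemma pair_inv {d : ℕ} (hd : 0 < d) (k : ℕ) :
    1 / (bZ d k - 1) + 1 / ((bZ d k)⁻¹ - 1) = -1 := by
  have h0 := bZ_ne_zero d k
  have h1 := sub_ne_zero.2 (bZ_ne_one hd k)
  have h1' : (1:ℂ) - bZ d k ≠ 0 := fun h => bZ_ne_one hd k (by linear_combination -h)
  have e1 : (bZ d k)⁻¹ - 1 = (1 - bZ d k) / bZ d k := by field_simp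
  rw [e1]
  rw [div_add_div _ _ h1 (div_ne_zero h1' h0)]
  rw [div_eq_iff (mul_ne_zero h1 (div_ne_zero h1' h0))]
  field_simp
  ring

lemma invsum {d : ℕ} (hd : 0 < d) :
    ∑ k ∈ range (2 * d), 1 / (bZ d k - 1) = -(d:ℂ) := by
  have hrefl := Finset.sum_range_reflect (fun k => 1 / (bZ d k - 1)) (2 * d)
  have h2 : (2 : ℂ) * (∑ k ∈ range (2 * d), 1 / (bZ d k - 1)) = -(2 * d) := by
    calc (2 : ℂ) * (∑ k ∈ range (2 * d), 1 / (bZ d k - 1))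
        = (∑ k ∈ range (2 * d), 1 / (bZ d k - 1))
          + ∑ k ∈ range (2 * d), 1 / (bZ d (2 * d - 1 - k) - 1) := by rw [hrefl]; ring
      _ = ∑ k ∈ range (2 * d), (1 / (bZ d k - 1) + 1 / ((bZ d k)⁻¹ - 1)) := by
          rw [← Finset.sum_add_distrib]
          apply Finset.sum_congr rfl
          intro k hk
          rw [bZ_reflect hd (Finset.mem_range.1 hk)]
      _ = ∑ k ∈ range (2 * d), (-1 : ℂ) := Finset.sum_congr rfl fun k _ => pair_inv hd k
      _ = -(2 * d) := by simp
  have h3 : (2:ℂ) * (∑ k ∈ range (2 * d), 1 / (bZ d k - 1)) = 2 * (-(d:ℂ)) := by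
    rw [h2]; ring
  exact mul_left_cancel₀ (two_ne_zero' ℂ) h3

lemma Tsum {d : ℕ} (hd : 0 < d) : ∀ m, m < 2 * d →
    ∑ k ∈ range (2 * d), bZ d k ^ (m + 1) / (bZ d k - 1) = d := by
  intro m
  induction m with
  | zero =>
    intro _
    have : ∀ k ∈ range (2 * d), bZ d k ^ (0 + 1) / (bZ d k - 1) = 1 + 1 / (bZ d k - 1) := by
      intro k _
      have h1 := sub_ne_zero.2 (bZ_ne_one hd k)
      field_simp
      ring
    rw [Finset.sum_congr rfl this, Finset.sum_add_distrib, invsum hd]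
    simp only [Finset.sum_const, Finset.card_range, nsmul_eq_mul, mul_one]
    push_cast
    ring
  | succ n ih =>
    intro hn
    have : ∀ k ∈ range (2 * d), bZ d k ^ (n + 1 + 1) / (bZ d k - 1)
        = bZ d k ^ (n + 1) + bZ d k ^ (n + 1) / (bZ d k - 1) := by
      intro k _
      have h1 := sub_ne_zero.2 (bZ_ne_one hd k)
      field_simp
      ring
    rw [Finset.sum_congr rfl this, Finset.sum_add_distrib, ih (by omega),
      powsum hd (Nat.succ_pos n) hn, zero_add]

lemma Sd_zero {d : ℕ} (hd : 0 < d) :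
    ∑ k ∈ range (2 * d), bZ d k ^ (d + 1) / (bZ d k - 1) ^ 2 = 0 := by
  have hrefl := Finset.sum_range_reflect (fun k => bZ d k ^ (d+1) / (bZ d k - 1) ^ 2) (2 * d)
  have key : ∀ k ∈ range (2 * d), bZ d (2*d-1-k) ^ (d+1) / (bZ d (2*d-1-k) - 1) ^ 2
      = -(bZ d k ^ (d+1) / (bZ d k - 1) ^ 2) := by
    intro k hk
    rw [bZ_reflect hd (Finset.mem_range.1 hk)]
    have h0 := bZ_ne_zero d k
    have h1 := sub_ne_zero.2 (bZ_ne_one hd k)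
    have h2d := bZ_pow_2d hd k
    have h1' : (1:ℂ) - bZ d k ≠ 0 := fun h => bZ_ne_one hd k (by linear_combination -h)
    have e1 : (bZ d k)⁻¹ - 1 = (1 - bZ d k) / bZ d k := by field_simp
    rw [e1, inv_pow]
    field_simp
    linear_combination (bZ d k ^ 2 - 2 * bZ d k ^ 3 + bZ d k ^ 4) * h2d
  have h2 : (2 : ℂ) * (∑ k ∈ range (2 * d), bZ d k ^ (d+1) / (bZ d k - 1) ^ 2) = 0 := by
    calc (2 : ℂ) * (∑ k ∈ range (2 * d), bZ d k ^ (d+1) / (bZ d k - 1) ^ 2)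
        = (∑ k ∈ range (2 * d), bZ d k ^ (d+1) / (bZ d k - 1) ^ 2)
          + ∑ k ∈ range (2 * d), bZ d (2*d-1-k) ^ (d+1) / (bZ d (2*d-1-k) - 1) ^ 2 := by
          rw [hrefl]; ring
      _ = ∑ k ∈ range (2 * d), (bZ d k ^ (d+1) / (bZ d k - 1) ^ 2
            + -(bZ d k ^ (d+1) / (bZ d k - 1) ^ 2)) := by
          rw [← Finset.sum_add_distrib]
          exact Finset.sum_congr rfl fun k hk => by rw [key k hk]
      _ = 0 := by simp
  have := mul_left_cancel₀ (two_ne_zero' ℂ) (h2.trans (by ring : (0:ℂ) = 2 * 0))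
  exact this

lemma Ssum {d : ℕ} (hd : 0 < d) : ∀ m, m ≤ 2 * d →
    ∑ k ∈ range (2 * d), bZ d k ^ (m + 1) / (bZ d k - 1) ^ 2 = (d:ℂ) * m - (d:ℂ) ^ 2 := by
  have hstep : ∀ m, m < 2 * d →
      ∑ k ∈ range (2 * d), bZ d k ^ (m + 1 + 1) / (bZ d k - 1) ^ 2
        = (∑ k ∈ range (2 * d), bZ d k ^ (m + 1) / (bZ d k - 1) ^ 2) + (d:ℂ) := by
    intro m hm
    have : ∀ k ∈ range (2 * d), bZ d k ^ (m + 1 + 1) / (bZ d k - 1) ^ 2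
        = bZ d k ^ (m + 1) / (bZ d k - 1) + bZ d k ^ (m + 1) / (bZ d k - 1) ^ 2 := by
      intro k _
      have h1 := sub_ne_zero.2 (bZ_ne_one hd k)
      field_simp
      ring
    rw [Finset.sum_congr rfl this, Finset.sum_add_distrib, Tsum hd m hm, add_comm]
  have hlin : ∀ m, m ≤ 2 * d →
      ∑ k ∈ range (2 * d), bZ d k ^ (m + 1) / (bZ d k - 1) ^ 2
        = (∑ k ∈ range (2 * d), bZ d k ^ (0 + 1) / (bZ d k - 1) ^ 2) + (d:ℂ) * m := by
    intro m
    induction m with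
    | zero => intro _; norm_num
    | succ n ih =>
      intro hn
      rw [hstep n (by omega), ih (by omega)]
      push_cast
      ring
  have h0 : (∑ k ∈ range (2 * d), bZ d k ^ (0 + 1) / (bZ d k - 1) ^ 2) = -(d:ℂ) ^ 2 := by
    have hd' := hlin d (by omega)
    rw [Sd_zero hd] at hd'
    linear_combination -hd'
  intro m hm
  rw [hlin m hm, h0]
  ring

noncomputable def bC (d k : ℕ) : ℂ := Complex.I * bZ d k ^ (d + 1) / (d * (bZ d k - 1) ^ 2)

lemma RieszA {d : ℕ} (hd : 0 < d) {l : ℤ} (hl1 : -(d:ℤ) ≤ l) (hl2 : l ≤ d) :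
    ∑ k ∈ range (2 * d), bC d k * Complex.exp (Complex.I * l * bU d k) = Complex.I * l := by
  set m := (l + d).toNat with hm
  have hml : (m : ℤ) = l + d := Int.toNat_of_nonneg (by omega)
  have hm2d : m ≤ 2 * d := by omega
  have key : ∀ k ∈ range (2 * d), bC d k * Complex.exp (Complex.I * l * bU d k)
      = (Complex.I / d) * (bZ d k ^ (m + 1) / (bZ d k - 1) ^ 2) := by
    intro k _
    have h0 := bZ_ne_zero d k
    have h1 := sub_ne_zero.2 (bZ_ne_one hd k)
    have hd' : (d:ℂ) ≠ 0 := Nat.cast_ne_zero.2 hd.ne'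
    have e1 : Complex.exp (Complex.I * l * bU d k) = bZ d k ^ l := by
      rw [bZ, show Complex.I * l * (bU d k : ℂ) = (l:ℂ) * (Complex.I * bU d k) by ring,
        Complex.exp_int_mul]
    have e2 : (bZ d k) ^ l = bZ d k ^ m / bZ d k ^ d := by
      rw [show l = (m:ℤ) - (d:ℤ) by omega, zpow_sub₀ h0, zpow_natCast, zpow_natCast]
    rw [bC, e1, e2]
    field_simp
    ring
  rw [Finset.sum_congr rfl key, ← Finset.mul_sum, Ssum hd m hm2d]
  have hmc : (m:ℂ) = (l:ℂ) + d := by exact_mod_cast congrArg (Int.cast : ℤ → ℂ) hml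
  have hd' : (d:ℂ) ≠ 0 := Nat.cast_ne_zero.2 hd.ne'
  rw [hmc]
  field_simp
  ring

lemma bZ_conj (d k : ℕ) : (starRingEnd ℂ) (bZ d k) = (bZ d k)⁻¹ := by
  rw [bZ, ← Complex.exp_conj, map_mul, Complex.conj_I, Complex.conj_ofReal,
    show -Complex.I * (bU d k : ℂ) = -(Complex.I * bU d k) by ring, Complex.exp_neg]

lemma norm_bZ_sub_one_sq {d : ℕ} (hd : 0 < d) (k : ℕ) :
    ((‖bZ d k - 1‖ ^ 2 : ℝ) : ℂ) = -(bZ d k - 1) ^ 2 / bZ d k := by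
  have h0 := bZ_ne_zero d k
  rw [← Complex.normSq_eq_norm_sq (bZ d k - 1), ← Complex.mul_conj (bZ d k - 1), map_sub,
    bZ_conj, map_one]
  field_simp
  ring

lemma norm_bZ_sub_one_pos {d : ℕ} (hd : 0 < d) (k : ℕ) : 0 < ‖bZ d k - 1‖ :=
  norm_pos_iff.2 (sub_ne_zero.2 (bZ_ne_one hd k))

lemma norm_bC (d k : ℕ) : ‖bC d k‖ = 1 / (d * ‖bZ d k - 1‖ ^ 2) := by
  rw [bC, norm_div, norm_mul, norm_mul, Complex.norm_I, norm_pow, norm_pow]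
  have h1 : ‖bZ d k‖ = 1 := by
    rw [bZ, mul_comm, Complex.norm_exp_ofReal_mul_I]
  rw [h1]
  simp [Complex.norm_natCast]

lemma RieszB {d : ℕ} (hd : 0 < d) : ∑ k ∈ range (2 * d), ‖bC d k‖ = d := by
  have hS0 := Ssum hd 0 (by omega)
  have hsum : ∑ k ∈ range (2 * d), ((‖bZ d k - 1‖ ^ 2)⁻¹ : ℝ) = (d:ℝ) ^ 2 := by
    have hc : ∀ k ∈ range (2 * d),
        (((‖bZ d k - 1‖ ^ 2)⁻¹ : ℝ) : ℂ) = -(bZ d k ^ (0 + 1) / (bZ d k - 1) ^ 2) := by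
      intro k _
      have h0 := bZ_ne_zero d k
      have h1 := sub_ne_zero.2 (bZ_ne_one hd k)
      rw [Complex.ofReal_inv, norm_bZ_sub_one_sq hd k]
      rw [pow_one]
      field_simp
    have : ((∑ k ∈ range (2 * d), ((‖bZ d k - 1‖ ^ 2)⁻¹ : ℝ) : ℝ) : ℂ) = ((d:ℝ)^2 : ℂ) := by
      rw [Complex.ofReal_sum, Finset.sum_congr rfl hc]
      have : ∑ k ∈ range (2*d), -(bZ d k ^ (0+1) / (bZ d k - 1)^2)
          = -∑ k ∈ range (2*d), bZ d k ^ (0+1) / (bZ d k - 1)^2 := by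
        simp
      rw [this, hS0]
      push_cast
      ring
    exact_mod_cast this
  have : ∀ k ∈ range (2 * d), ‖bC d k‖ = (1/(d:ℝ)) * ((‖bZ d k - 1‖ ^ 2)⁻¹ : ℝ) := by
    intro k _
    rw [norm_bC]
    field_simp
  rw [Finset.sum_congr rfl this, ← Finset.mul_sum, hsum]
  have hd' : (d:ℝ) ≠ 0 := Nat.cast_ne_zero.2 hd.ne'
  field_simp

theorem stmt_7 {E : Type*} [NormedAddCommGroup E] [NormedSpace ℂ E]
    (d : ℕ) (p : ℝ) (hp : 1 ≤ p) (v : ℤ → E)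
    (f f' : ℝ → E)
    (hf : ∀ t : ℝ, f t = ∑ l ∈ Finset.Icc (-(d:ℤ)) (d:ℤ), Complex.exp (Complex.I * l * t) • v l)
    (hf' : ∀ t : ℝ, f' t =
      ∑ l ∈ Finset.Icc (-(d:ℤ)) (d:ℤ), (Complex.I * l * Complex.exp (Complex.I * l * t)) • v l) :
    (1 / (2 * π)) * ∫ t in (0:ℝ)..(2 * π), ‖f' t‖ ^ p ≤
      (d : ℝ) ^ p * ((1 / (2 * π)) * ∫ t in (0:ℝ)..(2 * π), ‖f t‖ ^ p) := by
  have hp0 : (0:ℝ) ≤ p := by linarith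
  have hpne : p ≠ 0 := by linarith
  rcases Nat.eq_zero_or_pos d with hd0 | hd
  · subst hd0
    have hf'0 : ∀ t : ℝ, f' t = 0 := by
      intro t
      rw [hf' t]
      simp
    have hL : (∫ t in (0:ℝ)..(2*π), ‖f' t‖ ^ p) = 0 := by
      simp [hf'0, Real.zero_rpow hpne]
    rw [hL, Nat.cast_zero, Real.zero_rpow hpne]
    simp
  have hd' : (0:ℝ) < d := Nat.cast_pos.2 hd
  -- continuity of f and f'
  have hfc : Continuous f := by
    rw [funext hf]
    apply continuous_finset_sum
    intro l _
    exact (Complex.continuous_exp.comp (by continuity)).smul continuous_const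
  have hf'c : Continuous f' := by
    rw [funext hf']
    apply continuous_finset_sum
    intro l _
    exact ((continuous_const.mul (Complex.continuous_exp.comp (by continuity)))).smul
      continuous_const
  -- periodicity
  have hper : Function.Periodic f (2 * π) := by
    intro t
    rw [hf (t + 2 * π), hf t]
    refine Finset.sum_congr rfl fun l _ => ?_
    congr 1
    have : Complex.I * l * ((t + 2*π : ℝ):ℂ) = Complex.I * l * t + l * (2 * π * Complex.I) := by
      push_cast; ring
    rw [this, Complex.exp_add, Complex.exp_int_mul_two_pi_mul_I, mul_one]
  set g : ℝ → ℝ := fun t => ‖f t‖ ^ p with hg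
  have hgc : Continuous g := by
    apply Continuous.rpow_const (continuous_norm.comp hfc)
    intro x; exact Or.inr hp0
  have hgper : Function.Periodic g (2 * π) := fun t => by simp only [hg, hper t]
  have hshift : ∀ u : ℝ, (∫ t in (0:ℝ)..(2*π), g (t + u)) = ∫ t in (0:ℝ)..(2*π), g t := by
    intro u
    rw [intervalIntegral.integral_comp_add_right g u, show (0:ℝ)+u = u by ring,
      show 2*π+u = u + 2*π by ring, hgper.intervalIntegral_add_eq u 0, zero_add]
  -- convolution identity
  have hconv : ∀ t : ℝ, f' t = ∑ k ∈ range (2*d), bC d k • f (t + bU d k) := by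
    intro t
    rw [hf' t]
    symm
    calc ∑ k ∈ range (2*d), bC d k • f (t + bU d k)
        = ∑ k ∈ range (2*d), ∑ l ∈ Finset.Icc (-(d:ℤ)) (d:ℤ),
            (bC d k * Complex.exp (Complex.I * l * bU d k) * Complex.exp (Complex.I * l * t)) • v l := by
          refine Finset.sum_congr rfl fun k _ => ?_
          rw [hf (t + bU d k), Finset.smul_sum]
          refine Finset.sum_congr rfl fun l _ => ?_
          rw [smul_smul]
          congr 1
          have : Complex.I * l * ((t + bU d k : ℝ) : ℂ)
              = Complex.I * l * (bU d k : ℂ) + Complex.I * l * (t:ℂ) := by push_cast; ring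
          rw [this, Complex.exp_add]
          ring
      _ = ∑ l ∈ Finset.Icc (-(d:ℤ)) (d:ℤ), ∑ k ∈ range (2*d),
            (bC d k * Complex.exp (Complex.I * l * bU d k) * Complex.exp (Complex.I * l * t)) • v l :=
          Finset.sum_comm
      _ = ∑ l ∈ Finset.Icc (-(d:ℤ)) (d:ℤ), (Complex.I * l * Complex.exp (Complex.I * l * t)) • v l := by
          refine Finset.sum_congr rfl fun l hl => ?_
          obtain ⟨hl1, hl2⟩ := Finset.mem_Icc.1 hl
          rw [← Finset.sum_smul, ← Finset.sum_mul, RieszA hd hl1 hl2]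
  -- weights
  set w : ℕ → ℝ := fun k => ‖bC d k‖ / d with hw
  have hwnn : ∀ k ∈ range (2*d), 0 ≤ w k := fun k _ => div_nonneg (norm_nonneg _) hd'.le
  have hwsum : ∑ k ∈ range (2*d), w k = 1 := by
    simp only [hw]
    rw [← Finset.sum_div, RieszB hd, div_self hd'.ne']
  -- pointwise bound
  have hpt : ∀ t : ℝ, ‖f' t‖ ^ p ≤ (d:ℝ) ^ p * ∑ k ∈ range (2*d), w k * g (t + bU d k) := by
    intro t
    have snn : (0:ℝ) ≤ ∑ k ∈ range (2*d), w k * ‖f (t + bU d k)‖ :=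
      Finset.sum_nonneg fun k hk => mul_nonneg (hwnn k hk) (norm_nonneg _)
    have h1 : ‖f' t‖ ≤ ∑ k ∈ range (2*d), ‖bC d k‖ * ‖f (t + bU d k)‖ := by
      rw [hconv t]
      exact (norm_sum_le _ _).trans (le_of_eq (Finset.sum_congr rfl fun k _ => norm_smul _ _))
    have h2 : ∑ k ∈ range (2*d), ‖bC d k‖ * ‖f (t + bU d k)‖
        = (d:ℝ) * ∑ k ∈ range (2*d), w k * ‖f (t + bU d k)‖ := by
      rw [Finset.mul_sum]
      refine Finset.sum_congr rfl fun k _ => ?_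
      simp only [hw]
      field_simp
    have h3 : ‖f' t‖ ^ p ≤ ((d:ℝ) * ∑ k ∈ range (2*d), w k * ‖f (t + bU d k)‖) ^ p :=
      Real.rpow_le_rpow (norm_nonneg _) (h1.trans h2.le) hp0
    have h4 : ((d:ℝ) * ∑ k ∈ range (2*d), w k * ‖f (t + bU d k)‖) ^ p
        = (d:ℝ)^p * (∑ k ∈ range (2*d), w k * ‖f (t + bU d k)‖) ^ p :=
      Real.mul_rpow hd'.le snn
    have h5 : (∑ k ∈ range (2*d), w k * ‖f (t + bU d k)‖) ^ p
        ≤ ∑ k ∈ range (2*d), w k * ‖f (t + bU d k)‖ ^ p :=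
      Real.rpow_arith_mean_le_arith_mean_rpow _ w _ hwnn hwsum (fun k _ => norm_nonneg _) hp
    calc ‖f' t‖ ^ p ≤ (d:ℝ)^p * (∑ k ∈ range (2*d), w k * ‖f (t + bU d k)‖) ^ p := by
          rw [← h4]; exact h3
      _ ≤ (d:ℝ)^p * ∑ k ∈ range (2*d), w k * ‖f (t + bU d k)‖ ^ p := by
          apply mul_le_mul_of_nonneg_left h5 (Real.rpow_nonneg hd'.le p)
      _ = (d:ℝ)^p * ∑ k ∈ range (2*d), w k * g (t + bU d k) := rfl
  -- integrate
  have hint1 : IntervalIntegrable (fun t => ‖f' t‖ ^ p) MeasureTheory.volume 0 (2*π) := by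
    apply Continuous.intervalIntegrable
    apply Continuous.rpow_const (continuous_norm.comp hf'c)
    intro x; exact Or.inr hp0
  have hintk : ∀ k : ℕ, IntervalIntegrable (fun t => w k * g (t + bU d k))
      MeasureTheory.volume 0 (2*π) := by
    intro k
    exact (continuous_const.mul (hgc.comp (continuous_id.add continuous_const))).intervalIntegrable _ _
  have hint2 : IntervalIntegrable (fun t => (d:ℝ)^p * ∑ k ∈ range (2*d), w k * g (t + bU d k))
      MeasureTheory.volume 0 (2*π) := by
    apply Continuous.intervalIntegrable
    exact continuous_const.mul (continuous_finset_sum _ fun k _ =>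
      continuous_const.mul (hgc.comp (continuous_id.add continuous_const)))
  have hbig : (∫ t in (0:ℝ)..(2*π), ‖f' t‖ ^ p)
      ≤ ∫ t in (0:ℝ)..(2*π), (d:ℝ)^p * ∑ k ∈ range (2*d), w k * g (t + bU d k) := by
    apply intervalIntegral.integral_mono_on (by positivity) hint1 hint2
    intro t _
    exact hpt t
  have hrhs : (∫ t in (0:ℝ)..(2*π), (d:ℝ)^p * ∑ k ∈ range (2*d), w k * g (t + bU d k))
      = (d:ℝ)^p * ∫ t in (0:ℝ)..(2*π), g t := by
    rw [intervalIntegral.integral_const_mul]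
    congr 1
    rw [intervalIntegral.integral_finset_sum fun k _ => hintk k]
    have : ∀ k ∈ range (2*d), (∫ t in (0:ℝ)..(2*π), w k * g (t + bU d k))
        = w k * ∫ t in (0:ℝ)..(2*π), g t := by
      intro k _
      rw [intervalIntegral.integral_const_mul, hshift (bU d k)]
    rw [Finset.sum_congr rfl this, ← Finset.sum_mul, hwsum, one_mul]
  have h2pi : (0:ℝ) < 1 / (2*π) := by positivity
  calc (1 / (2 * π)) * ∫ t in (0:ℝ)..(2 * π), ‖f' t‖ ^ p
      ≤ (1 / (2 * π)) * ((d:ℝ)^p * ∫ t in (0:ℝ)..(2*π), g t) := by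
        apply mul_le_mul_of_nonneg_left _ h2pi.le
        rw [← hrhs]; exact hbig
    _ = (d : ℝ) ^ p * ((1 / (2 * π)) * ∫ t in (0:ℝ)..(2 * π), ‖f t‖ ^ p) := by
        ring
end

section
/- Let f be an E-valued trigonometric polynomial of degree at most d on 𝕋, h an integrable complex-valued function on 𝕋, p ≥ 1, and n a positive integer. Then |∫_𝕋 ‖f(t)‖^p h(nt) dm(t) − ∫_𝕋 ‖f‖^p dm · ∫_𝕋 h(nt) dm(t)| ≤ 2π (pd/n) ∫_𝕋 ‖f‖^p dm · ∫_𝕋 |h(nt)| dm(t). -/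
open Real intervalIntegral
noncomputable section Stmt8Aux
namespace Stmt8Aux
open Complex Finset MeasureTheory


def eim (m : ℤ) (s : ℝ) : ℂ := Complex.exp (Complex.I * m * s)

lemma eim_add (m m' : ℤ) (s : ℝ) : eim m s * eim m' s = eim (m + m') s := by
  unfold eim
  rw [← Complex.exp_add]
  congr 1
  push_cast
  ring

lemma eim_abs (m : ℤ) (s : ℝ) : ‖eim m s‖ = 1 := by
  unfold eim
  rw [show Complex.I * (m:ℂ) * (s:ℝ) = ((m * s : ℝ) : ℂ) * Complex.I by push_cast; ring]
  exact Complex.norm_exp_ofReal_mul_I _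

lemma eim_conj (m : ℤ) (s : ℝ) : (starRingEnd ℂ) (eim m s) = eim (-m) s := by
  unfold eim
  rw [← Complex.exp_conj]
  congr 1
  simp [Complex.conj_I]

lemma eim_zero (s : ℝ) : eim 0 s = 1 := by simp [eim]

lemma geo_sum (N : ℕ) (m : ℤ) (hm : m.natAbs < N) :
    ∑ j ∈ range N, eim m (2 * π * j / N) = if m = 0 then (N:ℂ) else 0 := by
  have hN : 0 < N := lt_of_le_of_lt (Nat.zero_le _) hm
  have hNC : (N:ℂ) ≠ 0 := Nat.cast_ne_zero.mpr hN.ne'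
  by_cases h0 : m = 0
  · subst h0; simp [eim_zero]
  · rw [if_neg h0]
    set z : ℂ := Complex.exp (2 * π * Complex.I * m / N) with hz
    have hterm : ∀ j ∈ range N, eim m (2 * π * j / N) = z ^ j := by
      intro j _
      rw [hz, ← Complex.exp_nat_mul]
      unfold eim
      congr 1
      push_cast
      field_simp
    rw [Finset.sum_congr rfl hterm]
    have hzN : z ^ N = 1 := by
      rw [hz, ← Complex.exp_nat_mul]
      rw [show (N:ℂ) * (2 * π * Complex.I * m / N) = (m:ℂ) * (2 * π * Complex.I) by
        field_simp]
      exact_mod_cast Complex.exp_int_mul_two_pi_mul_I m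
    have hz1 : z ≠ 1 := by
      intro hcon
      rw [hz] at hcon
      obtain ⟨k, hk⟩ := Complex.exp_eq_one_iff.mp hcon
      have hpi : (π:ℂ) ≠ 0 := Complex.ofReal_ne_zero.mpr Real.pi_ne_zero
      have hmk : (m:ℂ) = k * N := by
        field_simp at hk
        have h2 : (m:ℂ) * (2 * π * Complex.I) = ((k:ℂ) * N) * (2 * π * Complex.I) := by
          linear_combination (2 * π * Complex.I) * hk
        have h2πI : (2 * (π:ℂ) * Complex.I) ≠ 0 := by
          simp [hpi, Complex.I_ne_zero]
        exact mul_right_cancel₀ h2πI h2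
      have hmk' : m = k * N := by exact_mod_cast hmk
      have hk0 : k ≠ 0 := by
        rintro rfl
        simp at hmk'
        exact h0 hmk'
      have habs : m.natAbs = k.natAbs * N := by
        rw [hmk', Int.natAbs_mul, Int.natAbs_natCast]
      have : N ≤ m.natAbs := by
        rw [habs]
        exact Nat.le_mul_of_pos_left N (Int.natAbs_pos.mpr hk0)
      omega
    show ∑ j ∈ range N, z ^ j = 0
    rw [geom_sum_eq hz1, hzN]
    simp




lemma cnt_boole (N : ℕ) (a : ℤ) :
    (∑ x ∈ range N, ∑ y ∈ range N, (if (x:ℤ) - (y:ℤ) = a then (1:ℂ) else 0))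
      = ((N - a.natAbs : ℕ) : ℂ) := by
  have h1 : ∀ x ∈ range N, (∑ y ∈ range N, (if (x:ℤ) - (y:ℤ) = a then (1:ℂ) else 0))
      = if a ≤ (x:ℤ) ∧ (x:ℤ) < a + N then 1 else 0 := by
    intro x hx
    by_cases hc : a ≤ (x:ℤ) ∧ (x:ℤ) < a + (N:ℤ)
    · rw [if_pos hc]
      refine (Finset.sum_eq_single_of_mem (((x:ℤ) - a).toNat)
        (by simp only [Finset.mem_range]; omega) ?_).trans (by rw [if_pos (by omega)])
      intro y hy hne
      simp only [Finset.mem_range] at hy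
      rw [if_neg ?_]
      intro hcc
      exact hne (by omega)
    · rw [if_neg hc]
      refine Finset.sum_eq_zero fun y hy => ?_
      simp only [Finset.mem_range] at hy
      rw [if_neg (by omega)]
  rw [Finset.sum_congr rfl h1, Finset.sum_boole]
  refine congrArg _ ?_
  have heq : Finset.filter (fun x : ℕ => a ≤ (x:ℤ) ∧ (x:ℤ) < a + N) (range N)
      = Finset.Ico a.toNat (min ((a+N).toNat) N) := by
    ext x
    simp only [Finset.mem_filter, Finset.mem_range, Finset.mem_Ico, lt_min_iff]
    omega
  rw [heq, Nat.card_Ico]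
  omega

lemma cnt_const (N : ℕ) (a : ℤ) (c : ℂ) :
    (∑ x ∈ range N, ∑ y ∈ range N, (if (x:ℤ) - (y:ℤ) = a then c else 0))
      = ((N - a.natAbs : ℕ) : ℂ) * c := by
  rw [← cnt_boole N a, Finset.sum_mul]
  refine Finset.sum_congr rfl fun x _ => ?_
  rw [Finset.sum_mul]
  refine Finset.sum_congr rfl fun y _ => ?_
  by_cases hc : (x:ℤ) - y = a
  · rw [if_pos hc, if_pos hc, one_mul]
  · rw [if_neg hc, if_neg hc, zero_mul]

def Gd (d : ℕ) (s : ℝ) : ℂ := ∑ a ∈ range (2*d), eim a s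

def Kker (d : ℕ) (s : ℝ) : ℂ :=
  (Complex.I/2) * ∑ a ∈ range (2*d), ∑ b ∈ range (2*d),
    (eim ((d:ℤ) + a - b) s - eim (-(d:ℤ) + a - b) s)

lemma eim_mul3 (m m₁ m₂ : ℤ) (s : ℝ) :
    eim m s * (eim m₁ s * eim (-m₂) s) = eim (m + m₁ - m₂) s := by
  rw [eim_add, eim_add]
  congr 1
  ring

lemma Kker_eq (d : ℕ) (s : ℝ) :
    Kker d s = (Complex.I/2) * ((eim d s - eim (-(d:ℤ)) s) *
      (Gd d s * (∑ b ∈ range (2*d), eim (-(b:ℤ)) s))) := by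
  unfold Kker Gd
  congr 1
  rw [Finset.sum_mul_sum, Finset.mul_sum]
  refine Finset.sum_congr rfl fun a _ => ?_
  rw [Finset.mul_sum]
  refine Finset.sum_congr rfl fun b _ => ?_
  rw [sub_mul, eim_mul3, eim_mul3]


lemma eim_congr {i i' : ℤ} (s : ℝ) (h : i = i') : eim i s = eim i' s := by rw [h]

lemma geo_sub (N : ℕ) (m m' : ℤ) (hm : m.natAbs < N) (hm' : m'.natAbs < N) :
    ∑ j ∈ range N, (eim m (2*π*j/N) - eim m' (2*π*j/N))
      = (if m = 0 then (N:ℂ) else 0) - (if m' = 0 then (N:ℂ) else 0) := by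
  rw [Finset.sum_sub_distrib, geo_sum N m hm, geo_sum N m' hm']

lemma Kker_cid (d : ℕ) (l : ℤ) (hl : -(d:ℤ) ≤ l) (hl' : l ≤ d) :
    ∑ j ∈ range (4*d), Kker d (2*π*j/((4*d : ℕ):ℝ)) * eim (-l) (2*π*j/((4*d:ℕ):ℝ))
      = Complex.I * l * ((4*d : ℕ):ℂ) := by
  rcases Nat.eq_zero_or_pos d with rfl | hd
  · simp
  have hterm : ∀ s : ℝ, Kker d s * eim (-l) s
      = (Complex.I/2) * ∑ a ∈ range (2*d), ∑ b ∈ range (2*d),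
        (eim ((d:ℤ) + a - b - l) s - eim (-(d:ℤ) + a - b - l) s) := by
    intro s
    unfold Kker
    rw [mul_assoc, Finset.sum_mul]
    congr 1
    refine Finset.sum_congr rfl fun a _ => ?_
    rw [Finset.sum_mul]
    refine Finset.sum_congr rfl fun b _ => ?_
    rw [sub_mul, eim_add, eim_add]
    exact congrArg₂ Sub.sub (eim_congr s (by ring)) (eim_congr s (by ring))
  rw [Finset.sum_congr rfl fun j _ => hterm _, ← Finset.mul_sum]
  rw [Finset.sum_comm]
  rw [Finset.sum_congr rfl fun a _ => Finset.sum_comm]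
  have hinner : ∀ a ∈ range (2*d), ∀ b ∈ range (2*d),
      ∑ j ∈ range (4*d), (eim ((d:ℤ) + a - b - l) (2*π*j/((4*d:ℕ):ℝ))
          - eim (-(d:ℤ) + a - b - l) (2*π*j/((4*d:ℕ):ℝ)))
      = (if (a:ℤ) - b = l - d then ((4*d:ℕ):ℂ) else 0)
        - (if (a:ℤ) - b = l + d then ((4*d:ℕ):ℂ) else 0) := by
    intro a ha b hb
    simp only [Finset.mem_range] at ha hb
    rw [geo_sub (4*d) _ _ (by omega) (by omega)]
    congr 1
    · exact if_congr (by omega) rfl rfl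
    · exact if_congr (by omega) rfl rfl
  rw [Finset.sum_congr rfl fun a ha => Finset.sum_congr rfl fun b hb => hinner a ha b hb]
  rw [Finset.sum_congr rfl fun a _ => Finset.sum_sub_distrib _ _, Finset.sum_sub_distrib]
  rw [cnt_const (2*d) (l - d) _, cnt_const (2*d) (l + d) _]
  have hz : ((2*d - (l-(d:ℤ)).natAbs : ℕ):ℤ) - ((2*d - (l+(d:ℤ)).natAbs : ℕ):ℤ) = 2*l := by
    omega
  have hc : ((2*d - (l-(d:ℤ)).natAbs : ℕ):ℂ) - ((2*d - (l+(d:ℤ)).natAbs : ℕ):ℂ) = 2*l := by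
    exact_mod_cast congrArg (Int.cast : ℤ → ℂ) hz
  linear_combination (Complex.I/2) * ((4*d:ℕ):ℂ) * hc

lemma conj_Gd (d : ℕ) (s : ℝ) :
    (starRingEnd ℂ) (Gd d s) = ∑ b ∈ range (2*d), eim (-(b:ℤ)) s := by
  unfold Gd
  rw [map_sum]
  exact Finset.sum_congr rfl fun b _ => eim_conj b s

lemma Kabs_le (d : ℕ) (s : ℝ) : ‖Kker d s‖ ≤ Complex.normSq (Gd d s) := by
  rw [Kker_eq, ← conj_Gd, norm_mul, norm_mul, norm_mul]
  have h1 : ‖Complex.I/2‖ = 1/2 := by simp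
  have h2 : ‖eim d s - eim (-(d:ℤ)) s‖ ≤ 2 := by
    have h := norm_add_le (eim d s) (-(eim (-(d:ℤ)) s))
    rw [← sub_eq_add_neg, norm_neg] at h
    rw [eim_abs, eim_abs] at h
    linarith
  have h3 : ‖(starRingEnd ℂ) (Gd d s)‖ = ‖Gd d s‖ := Complex.norm_conj _
  have h4 : ‖Gd d s‖ ^ 2 = Complex.normSq (Gd d s) := Complex.sq_norm _
  rw [h1, h3]
  nlinarith [norm_nonneg (Gd d s), norm_nonneg (eim d s - eim (-(d:ℤ)) s)]

lemma Gd_sq_sum (d : ℕ) (hd : 0 < d) :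
    ∑ j ∈ range (4*d), (Complex.normSq (Gd d (2*π*j/((4*d:ℕ):ℝ))) : ℝ)
      = 2*d*(4*(d:ℝ)) := by
  have hterm : ∀ s : ℝ, ((Complex.normSq (Gd d s) : ℝ):ℂ)
      = ∑ a ∈ range (2*d), ∑ b ∈ range (2*d), eim ((a:ℤ) - b) s := by
    intro s
    rw [← Complex.mul_conj, conj_Gd]
    nth_rewrite 1 [Gd]
    rw [Finset.sum_mul_sum]
    refine Finset.sum_congr rfl fun a _ => Finset.sum_congr rfl fun b _ => ?_
    rw [eim_add]
    exact eim_congr s (by ring)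
  have hC : ∑ j ∈ range (4*d), ((Complex.normSq (Gd d (2*π*j/((4*d:ℕ):ℝ))) : ℝ):ℂ)
      = ((2*d*(4*(d:ℝ)) : ℝ):ℂ) := by
    rw [Finset.sum_congr rfl fun j _ => hterm _]
    rw [Finset.sum_comm]
    rw [Finset.sum_congr rfl fun a _ => Finset.sum_comm]
    have hinner : ∀ a ∈ range (2*d), ∀ b ∈ range (2*d),
        ∑ j ∈ range (4*d), eim ((a:ℤ) - b) (2*π*j/((4*d:ℕ):ℝ))
          = (if (a:ℤ) - b = 0 then ((4*d:ℕ):ℂ) else 0) := by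
      intro a ha b hb
      simp only [Finset.mem_range] at ha hb
      exact geo_sum (4*d) _ (by omega)
    rw [Finset.sum_congr rfl fun a ha => Finset.sum_congr rfl fun b hb => hinner a ha b hb]
    rw [cnt_const (2*d) 0 _]
    simp only [Int.natAbs_zero, Nat.sub_zero]
    push_cast
    ring
  have := hC
  rw [← Complex.ofReal_sum] at this
  exact_mod_cast this

lemma Ksum_bound (d : ℕ) :
    ∑ j ∈ range (4*d), ‖Kker d (2*π*j/((4*d:ℕ):ℝ))‖ ≤ 2*d*(4*(d:ℝ)) := by
  rcases Nat.eq_zero_or_pos d with rfl | hd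
  · simp
  calc ∑ j ∈ range (4*d), ‖Kker d (2*π*j/((4*d:ℕ):ℝ))‖
      ≤ ∑ j ∈ range (4*d), (Complex.normSq (Gd d (2*π*j/((4*d:ℕ):ℝ))) : ℝ) :=
        Finset.sum_le_sum fun j _ => Kabs_le d _
    _ = 2*d*(4*(d:ℝ)) := Gd_sq_sum d hd

variable {E : Type*} [NormedAddCommGroup E] [NormedSpace ℂ E]

def trigP (v : ℤ → E) (d : ℕ) (j : ℕ) (t : ℝ) : E :=
  ∑ l ∈ Finset.Icc (-(d:ℤ)) (d:ℤ), ((Complex.I * l)^j * Complex.exp (Complex.I * l * t)) • v l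

lemma hasDerivAt_trigP (v : ℤ → E) (d : ℕ) (j : ℕ) (t : ℝ) :
    HasDerivAt (fun u => trigP v d j u) (trigP v d (j+1) t) t := by
  unfold trigP
  refine HasDerivAt.fun_sum fun l _ => ?_
  have h0 : HasDerivAt (fun u:ℝ => (u:ℂ)) 1 t := by
    simpa using (hasDerivAt_id t).ofReal_comp
  have h1 : HasDerivAt (fun u:ℝ => Complex.I*l*(u:ℂ)) (Complex.I*l) t := by
    simpa using h0.const_mul (Complex.I*l)
  have h2 : HasDerivAt (fun u:ℝ => Complex.exp (Complex.I*l*u))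
      (Complex.exp (Complex.I*l*t) * (Complex.I*l)) t := h1.cexp
  have h3 := (h2.const_mul ((Complex.I*(l:ℂ))^j)).smul_const (v l)
  have hco : (Complex.I*(l:ℂ))^j * (Complex.exp (Complex.I*l*t) * (Complex.I*l))
      = (Complex.I*l)^(j+1) * Complex.exp (Complex.I*l*t) := by ring
  rw [hco] at h3
  exact h3

lemma continuous_trigP (v : ℤ → E) (d : ℕ) (j : ℕ) : Continuous (fun u => trigP v d j u) :=
  continuous_iff_continuousAt.mpr fun t => (hasDerivAt_trigP v d j t).continuousAt

lemma norm_trigP_le (v : ℤ → E) (d : ℕ) (j : ℕ) (t : ℝ) :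
    ‖trigP v d j t‖ ≤ ∑ l ∈ Finset.Icc (-(d:ℤ)) (d:ℤ), |(l:ℝ)|^j * ‖v l‖ := by
  refine (norm_sum_le _ _).trans (Finset.sum_le_sum fun l _ => ?_)
  rw [norm_smul]
  refine mul_le_mul_of_nonneg_right (le_of_eq ?_) (norm_nonneg _)
  rw [norm_mul, norm_pow, norm_mul, Complex.norm_I, one_mul]
  have he : ‖Complex.exp (Complex.I*l*t)‖ = 1 := by
    rw [show Complex.I * (l:ℂ) * (t:ℝ) = ((l * t : ℝ) : ℂ) * Complex.I by push_cast; ring]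
    exact Complex.norm_exp_ofReal_mul_I _
  rw [he, mul_one, Complex.norm_intCast]

lemma trigP_periodic (v : ℤ → E) (d : ℕ) (j : ℕ) :
    Function.Periodic (fun u => trigP v d j u) (2*π) := by
  intro t
  show trigP v d j (t + 2*π) = trigP v d j t
  unfold trigP
  refine Finset.sum_congr rfl fun l _ => ?_
  have harg : Complex.I*(l:ℂ)*((t + 2*π : ℝ):ℂ) = Complex.I*l*t + l*(2*π*Complex.I) := by
    push_cast; ring
  rw [harg, Complex.exp_add, Complex.exp_int_mul_two_pi_mul_I, mul_one]

lemma trigP_rep (v : ℤ → E) (d : ℕ) (t : ℝ) :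
    trigP v d 1 t = ∑ j ∈ range (4*d),
      ((((4*d:ℕ):ℂ))⁻¹ * Kker d (2*π*j/((4*d:ℕ):ℝ))) •
        trigP v d 0 (t - 2*π*j/((4*d:ℕ):ℝ)) := by
  have hexp : ∀ (l : ℤ) (σ : ℝ), Complex.exp (Complex.I*l*((t - σ : ℝ):ℂ))
      = eim (-l) σ * eim l t := by
    intro l σ
    rw [eim, eim, ← Complex.exp_add]
    congr 1
    push_cast
    ring
  symm
  calc ∑ j ∈ range (4*d), ((((4*d:ℕ):ℂ))⁻¹ * Kker d (2*π*j/((4*d:ℕ):ℝ))) •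
        trigP v d 0 (t - 2*π*j/((4*d:ℕ):ℝ))
      = ∑ j ∈ range (4*d), ∑ l ∈ Finset.Icc (-(d:ℤ)) (d:ℤ),
          ((((4*d:ℕ):ℂ))⁻¹ * Kker d (2*π*j/((4*d:ℕ):ℝ)) *
            ((Complex.I*(l:ℂ))^0 * Complex.exp (Complex.I*l*((t - 2*π*j/((4*d:ℕ):ℝ) : ℝ):ℂ)))) • v l := by
        refine Finset.sum_congr rfl fun j _ => ?_
        rw [trigP, Finset.smul_sum]
        exact Finset.sum_congr rfl fun l _ => smul_smul _ _ _
    _ = ∑ l ∈ Finset.Icc (-(d:ℤ)) (d:ℤ), ∑ j ∈ range (4*d),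
          ((((4*d:ℕ):ℂ))⁻¹ * Kker d (2*π*j/((4*d:ℕ):ℝ)) *
            ((Complex.I*(l:ℂ))^0 * Complex.exp (Complex.I*l*((t - 2*π*j/((4*d:ℕ):ℝ) : ℝ):ℂ)))) • v l :=
        Finset.sum_comm
    _ = trigP v d 1 t := ?_
  unfold trigP
  refine Finset.sum_congr rfl fun l hl => ?_
  rw [← Finset.sum_smul]
  congr 1
  have hstep : ∀ j ∈ range (4*d),
      (((4*d:ℕ):ℂ))⁻¹ * Kker d (2*π*j/((4*d:ℕ):ℝ)) *
          ((Complex.I*(l:ℂ))^0 * Complex.exp (Complex.I*l*((t - 2*π*j/((4*d:ℕ):ℝ) : ℝ):ℂ)))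
        = (((4*d:ℕ):ℂ))⁻¹ * ((Kker d (2*π*j/((4*d:ℕ):ℝ)) * eim (-l) (2*π*j/((4*d:ℕ):ℝ))) * eim l t) := by
    intro j _
    rw [pow_zero, one_mul, hexp]
    ring
  rw [Finset.sum_congr rfl hstep]
  rw [← Finset.mul_sum, ← Finset.sum_mul]
  simp only [Finset.mem_Icc] at hl
  rw [Kker_cid d l hl.1 hl.2]
  rcases Nat.eq_zero_or_pos d with rfl | hd
  · have hl0 : l = 0 := by omega
    subst hl0
    simp [eim]
  · have hN : ((4*d:ℕ):ℂ) ≠ 0 := by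
      simp only [ne_eq, Nat.cast_eq_zero]
      omega
    rw [pow_one, eim]
    have hdC : (d:ℂ) ≠ 0 := Nat.cast_ne_zero.mpr hd.ne'
    field_simp
    try ring

lemma norm_trigP1_le (v : ℤ → E) (d : ℕ) (t : ℝ) :
    ‖trigP v d 1 t‖ ≤ ∑ j ∈ range (4*d),
      ((4*(d:ℝ)))⁻¹ * ‖Kker d (2*π*j/((4*d:ℕ):ℝ))‖
        * ‖trigP v d 0 (t - 2*π*j/((4*d:ℕ):ℝ))‖ := by
  rw [trigP_rep v d t]
  refine (norm_sum_le _ _).trans (Finset.sum_le_sum fun j _ => ?_)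
  rw [norm_smul, norm_mul, norm_inv, Complex.norm_natCast]
  refine le_of_eq ?_
  push_cast
  ring

lemma rpow_mvt (p : ℝ) (hp : 1 ≤ p) {x y : ℝ} (hy : 0 ≤ y) (hxy : y ≤ x) :
    x ^ p - y ^ p ≤ p * x ^ (p-1) * (x - y) := by
  have hx : 0 ≤ x := le_trans hy hxy
  have hd : ∀ u ∈ Set.Icc y x, HasDerivWithinAt (fun z : ℝ => z ^ p)
      (p * u ^ (p-1)) (Set.Icc y x) u := fun u _ =>
    (Real.hasDerivAt_rpow_const (Or.inr hp)).hasDerivWithinAt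
  have hb : ∀ u ∈ Set.Icc y x, ‖p * u ^ (p-1)‖ ≤ p * x ^ (p-1) := by
    intro u hu
    rw [Real.norm_eq_abs, abs_mul, _root_.abs_of_nonneg (by linarith : (0:ℝ) ≤ p),
      _root_.abs_of_nonneg (Real.rpow_nonneg (le_trans hy hu.1) _)]
    exact mul_le_mul_of_nonneg_left
      (Real.rpow_le_rpow (le_trans hy hu.1) hu.2 (by linarith)) (by linarith)
  have := Convex.norm_image_sub_le_of_norm_hasDerivWithin_le hd hb (convex_Icc y x)
    (Set.left_mem_Icc.mpr hxy) (Set.right_mem_Icc.mpr hxy)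
  rw [Real.norm_eq_abs, Real.norm_eq_abs] at this
  calc x ^ p - y ^ p ≤ |x ^ p - y ^ p| := le_abs_self _
    _ ≤ p * x ^ (p-1) * |x - y| := this
    _ = p * x ^ (p-1) * (x - y) := by rw [_root_.abs_of_nonneg (by linarith : (0:ℝ) ≤ x - y)]

section Main

variable (v : ℤ → E) (d : ℕ)

def phi (t : ℝ) : ℝ := ‖trigP v d 0 t‖
def psi (t : ℝ) : ℝ := ‖trigP v d 1 t‖
def CC (k : ℕ) : ℝ := ∑ l ∈ Finset.Icc (-(d:ℤ)) (d:ℤ), |(l:ℝ)|^k * ‖v l‖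

lemma CC_nonneg (k : ℕ) : 0 ≤ CC v d k :=
  Finset.sum_nonneg fun l _ => mul_nonneg (pow_nonneg (abs_nonneg _) _) (norm_nonneg _)

lemma phi_nonneg (t : ℝ) : 0 ≤ phi v d t := norm_nonneg _
lemma psi_nonneg (t : ℝ) : 0 ≤ psi v d t := norm_nonneg _

lemma phi_cont : Continuous (phi v d) := (continuous_trigP v d 0).norm
lemma psi_cont : Continuous (psi v d) := (continuous_trigP v d 1).norm

lemma phi_le (t : ℝ) : phi v d t ≤ CC v d 0 := by
  have := norm_trigP_le v d 0 t
  simpa [CC, phi] using this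

lemma psi_le (t : ℝ) : psi v d t ≤ CC v d 1 := by
  have := norm_trigP_le v d 1 t
  simpa [CC, psi] using this

lemma phi_per : Function.Periodic (phi v d) (2*π) := fun t =>
  congrArg Norm.norm (trigP_periodic v d 0 t)

lemma psi_per : Function.Periodic (psi v d) (2*π) := fun t =>
  congrArg Norm.norm (trigP_periodic v d 1 t)

lemma trig_lip (k : ℕ) (a b : ℝ) :
    ‖trigP v d k b - trigP v d k a‖ ≤ CC v d (k+1) * |b - a| := by
  have hd : ∀ u ∈ (Set.univ : Set ℝ), HasDerivWithinAt (fun z => trigP v d k z)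
      (trigP v d (k+1) u) Set.univ u := fun u _ =>
    (hasDerivAt_trigP v d k u).hasDerivWithinAt
  have hb : ∀ u ∈ (Set.univ : Set ℝ), ‖trigP v d (k+1) u‖ ≤ CC v d (k+1) :=
    fun u _ => norm_trigP_le v d (k+1) u
  have := Convex.norm_image_sub_le_of_norm_hasDerivWithin_le hd hb convex_univ
    (Set.mem_univ a) (Set.mem_univ b)
  simpa using this

lemma phi_lip (a b : ℝ) : |phi v d b - phi v d a| ≤ CC v d 1 * |b - a| :=
  le_trans (abs_norm_sub_norm_le _ _) (trig_lip v d 0 a b)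

lemma psi_lip (a b : ℝ) : |psi v d b - psi v d a| ≤ CC v d 2 * |b - a| :=
  le_trans (abs_norm_sub_norm_le _ _) (trig_lip v d 1 a b)

variable (p : ℝ)

def Phi (η : ℝ) (w : ℝ) : ℝ := (phi v d w + CC v d 1 * η)^(p-1) * (psi v d w + 2 * CC v d 2 * η)

lemma Phi_cont (hp : 1 ≤ p) (η : ℝ) : Continuous (Phi v d p η) := by
  unfold Phi
  exact (((phi_cont v d).add continuous_const).rpow_const
    (fun x => Or.inr (by linarith))).mul ((psi_cont v d).add continuous_const)

lemma Phi_nonneg (hp : 1 ≤ p) (η : ℝ) (hη : 0 ≤ η) (w : ℝ) : 0 ≤ Phi v d p η w := by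
  have h1 := phi_nonneg v d w
  have h2 := psi_nonneg v d w
  have h3 := mul_nonneg (CC_nonneg v d 1) hη
  have h4 := mul_nonneg (mul_nonneg (by norm_num : (0:ℝ) ≤ 2) (CC_nonneg v d 2)) hη
  exact mul_nonneg (Real.rpow_nonneg (by linarith) _) (by linarith)

lemma Phi_per (η : ℝ) : Function.Periodic (Phi v d p η) (2*π) := fun t => by
  unfold Phi; rw [phi_per v d t, psi_per v d t]

lemma abs_rpow_sub_le_aux (hp : 1 ≤ p) {x y M : ℝ} (hy : 0 ≤ y) (hxy : y ≤ x) (hxM : x ≤ M) :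
    |x ^ p - y ^ p| ≤ p * M^(p-1) * |x - y| := by
  have hx : 0 ≤ x := le_trans hy hxy
  rw [_root_.abs_of_nonneg (sub_nonneg.mpr (Real.rpow_le_rpow hy hxy (by linarith : (0:ℝ) ≤ p))),
    _root_.abs_of_nonneg (sub_nonneg.mpr hxy)]
  calc x ^ p - y ^ p ≤ p * x^(p-1) * (x - y) := rpow_mvt p hp hy hxy
    _ ≤ p * M^(p-1) * (x - y) := by
      refine mul_le_mul_of_nonneg_right (mul_le_mul_of_nonneg_left
        (Real.rpow_le_rpow hx hxM (by linarith)) (by linarith)) (by linarith)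

lemma abs_rpow_sub_le (hp : 1 ≤ p) {x y M : ℝ} (hx : 0 ≤ x) (hy : 0 ≤ y)
    (hxM : x ≤ M) (hyM : y ≤ M) :
    |x ^ p - y ^ p| ≤ p * M^(p-1) * |x - y| := by
  rcases le_total y x with hc | hc
  · exact abs_rpow_sub_le_aux p hp hy hc hxM
  · rw [abs_sub_comm, abs_sub_comm x y]
    exact abs_rpow_sub_le_aux p hp hx hc hyM

lemma step0 (hp : 1 ≤ p) {η a b : ℝ} (hη : 0 < η) (hab : a ≤ b) (hba : b - a ≤ η) :
    |phi v d b ^ p - phi v d a ^ p| ≤ p * ∫ w in a..b, Phi v d p η w := by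
  have hCC1 := CC_nonneg v d 1
  have hCC2 := CC_nonneg v d 2
  set M := max (phi v d a) (phi v d b) with hM
  have hM0 : 0 ≤ M := le_trans (phi_nonneg v d a) (le_max_left _ _)
  set c₀ := M^(p-1) * (psi v d a + CC v d 2 * η) with hc₀
  -- step A : |φb^p − φa^p| ≤ p * c₀ * (b−a)
  have hψbound : ∀ x ∈ Set.Icc a b, psi v d x ≤ psi v d a + CC v d 2 * η := by
    intro x hx
    have h1 := psi_lip v d a x
    have h2 : |x - a| ≤ η := by
      rw [_root_.abs_of_nonneg (by linarith [hx.1] : (0:ℝ) ≤ x - a)]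
      linarith [hx.2]
    have := le_abs_self (psi v d x - psi v d a)
    nlinarith
  have hφlip : |phi v d b - phi v d a| ≤ (psi v d a + CC v d 2 * η) * (b - a) := by
    refine le_trans (abs_norm_sub_norm_le _ _) ?_
    have hder : ∀ x ∈ Set.Icc a b, HasDerivWithinAt (fun z => trigP v d 0 z)
        (trigP v d 1 x) (Set.Icc a b) x := fun x _ =>
      (hasDerivAt_trigP v d 0 x).hasDerivWithinAt
    have hbnd : ∀ x ∈ Set.Icc a b, ‖trigP v d 1 x‖ ≤ psi v d a + CC v d 2 * η :=
      fun x hx => hψbound x hx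
    have := Convex.norm_image_sub_le_of_norm_hasDerivWithin_le hder hbnd (convex_Icc a b)
      (Set.left_mem_Icc.mpr hab) (Set.right_mem_Icc.mpr hab)
    rw [Real.norm_eq_abs, _root_.abs_of_nonneg (by linarith : (0:ℝ) ≤ b - a)] at this
    exact this
  have hA : |phi v d b ^ p - phi v d a ^ p| ≤ p * (c₀ * (b - a)) := by
    have h1 := abs_rpow_sub_le p hp (phi_nonneg v d b) (phi_nonneg v d a)
      (le_max_right _ _ : phi v d b ≤ M) (le_max_left _ _)
    have h2 : p * M^(p-1) * |phi v d b - phi v d a|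
        ≤ p * M^(p-1) * ((psi v d a + CC v d 2 * η) * (b - a)) := by
      refine mul_le_mul_of_nonneg_left hφlip ?_
      have := Real.rpow_nonneg hM0 (p-1)
      nlinarith
    calc |phi v d b ^ p - phi v d a ^ p| ≤ p * M^(p-1) * |phi v d b - phi v d a| := h1
      _ ≤ p * M^(p-1) * ((psi v d a + CC v d 2 * η) * (b - a)) := h2
      _ = p * (c₀ * (b - a)) := by rw [hc₀]; ring
  -- step B : c₀ ≤ Phi η w for all w ∈ [a,b]
  have hB : ∀ w ∈ Set.Icc a b, c₀ ≤ Phi v d p η w := by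
    intro w hw
    have hwa : |a - w| ≤ η := by
      rw [abs_sub_comm, _root_.abs_of_nonneg (by linarith [hw.1] : (0:ℝ) ≤ w - a)]
      linarith [hw.2]
    have hwb : |b - w| ≤ η := by
      rw [_root_.abs_of_nonneg (by linarith [hw.2] : (0:ℝ) ≤ b - w)]
      linarith [hw.1]
    have hMle : M ≤ phi v d w + CC v d 1 * η := by
      have h1 := phi_lip v d w a
      have h2 := phi_lip v d w b
      have h3 := le_abs_self (phi v d a - phi v d w)
      have h4 := le_abs_self (phi v d b - phi v d w)
      have h5 : CC v d 1 * |a - w| ≤ CC v d 1 * η := mul_le_mul_of_nonneg_left hwa hCC1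
      have h6 : CC v d 1 * |b - w| ≤ CC v d 1 * η := mul_le_mul_of_nonneg_left hwb hCC1
      rw [hM]
      refine max_le (by linarith) (by linarith)
    have hψle : psi v d a + CC v d 2 * η ≤ psi v d w + 2 * CC v d 2 * η := by
      have h1 := psi_lip v d w a
      have h2 := le_abs_self (psi v d a - psi v d w)
      have h3 : CC v d 2 * |a - w| ≤ CC v d 2 * η := mul_le_mul_of_nonneg_left hwa hCC2
      linarith
    unfold Phi
    refine mul_le_mul (Real.rpow_le_rpow hM0 hMle (by linarith)) hψle ?_ ?_
    · have := psi_nonneg v d a; nlinarith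
    · exact Real.rpow_nonneg (by linarith [phi_nonneg v d w, mul_nonneg hCC1 hη.le]) _
  -- integrate
  have hint : IntervalIntegrable (Phi v d p η) MeasureTheory.volume a b :=
    (Phi_cont v d p hp η).intervalIntegrable a b
  have hconst : IntervalIntegrable (fun _ : ℝ => c₀) MeasureTheory.volume a b :=
    intervalIntegrable_const
  have hI : c₀ * (b - a) ≤ ∫ w in a..b, Phi v d p η w := by
    have := intervalIntegral.integral_mono_on hab hconst hint hB
    rw [intervalIntegral.integral_const, smul_eq_mul] at this
    linarith
  refine hA.trans ?_
  have hp0 : (0:ℝ) ≤ p := by linarith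
  nlinarith

lemma chain (hp : 1 ≤ p) {η : ℝ} (hη : 0 < η) :
    ∀ (m : ℕ) {a b : ℝ}, a ≤ b → b - a ≤ m * η →
    |phi v d b ^ p - phi v d a ^ p| ≤ p * ∫ w in a..b, Phi v d p η w := by
  intro m
  induction m with
  | zero =>
    intro a b hab hba
    push_cast at hba
    have : b = a := le_antisymm (by linarith) hab
    subst this
    simp
  | succ m ih =>
    intro a b hab hba
    push_cast at hba
    set c := max a (b - η) with hc
    have hac : a ≤ c := le_max_left _ _
    have hcb : c ≤ b := max_le hab (by linarith)
    have h1 : b - c ≤ η := by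
      have := le_max_right a (b - η)
      linarith
    have h2 : c - a ≤ m * η := by
      rcases max_choice a (b - η) with hm | hm <;> rw [hc, hm]
      · simp; positivity
      · linarith
    have hL := ih hac h2
    have hR := step0 v d p hp hη hcb h1
    have hadd : (∫ w in a..c, Phi v d p η w) + (∫ w in c..b, Phi v d p η w)
        = ∫ w in a..b, Phi v d p η w :=
      intervalIntegral.integral_add_adjacent_intervals
        ((Phi_cont v d p hp η).intervalIntegrable a c)
        ((Phi_cont v d p hp η).intervalIntegrable c b)
    calc |phi v d b ^ p - phi v d a ^ p|
        ≤ |phi v d b ^ p - phi v d c ^ p| + |phi v d c ^ p - phi v d a ^ p| :=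
          abs_sub_le _ _ _
      _ ≤ (p * ∫ w in c..b, Phi v d p η w) + p * ∫ w in a..c, Phi v d p η w := add_le_add hR hL
      _ = p * ∫ w in a..b, Phi v d p η w := by rw [← hadd]; ring

lemma keyL (hp : 1 ≤ p) {η : ℝ} (hη : 0 < η) {a b : ℝ} (hab : a ≤ b) :
    |phi v d b ^ p - phi v d a ^ p| ≤ p * ∫ w in a..b, Phi v d p η w := by
  refine chain v d p hp hη ⌈(b - a)/η⌉₊ hab ?_
  have h1 : (b - a)/η ≤ ⌈(b - a)/η⌉₊ := Nat.le_ceil _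
  rw [div_le_iff₀ hη] at h1
  linarith

lemma g_cont (hp : 1 ≤ p) : Continuous (fun s => phi v d s ^ p) :=
  (phi_cont v d).rpow_const fun x => Or.inr (by linarith)

lemma g_per : Function.Periodic (fun s => phi v d s ^ p) (2*π) := fun t =>
  congrArg (fun x : ℝ => x ^ p) (phi_per v d t)

lemma riemann (hp : 1 ≤ p) (n : ℕ) (hn : 1 ≤ n) (t : ℝ) {η : ℝ} (hη : 0 < η) :
    |(∑ k ∈ range n, (2*π/n) * phi v d (t + k*(2*π/n)) ^ p) - ∫ s in (0:ℝ)..(2*π), phi v d s ^ p|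
      ≤ p * (π/n) * ∫ s in (0:ℝ)..(2*π), Phi v d p η s := by
  have hπ := Real.pi_pos
  have hn0 : (0:ℝ) < n := by exact_mod_cast hn
  set T : ℝ := 2*π/n with hT
  have hT0 : 0 < T := by positivity
  have hnT : (n:ℝ) * T = 2*π := by
    rw [hT]
    field_simp
  set c : ℝ := t - T/2 with hc
  set g : ℝ → ℝ := fun s => phi v d s ^ p with hg
  have hgc : Continuous g := g_cont v d p hp
  have hgint : ∀ a b : ℝ, IntervalIntegrable g MeasureTheory.volume a b :=
    fun a b => hgc.intervalIntegrable a b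
  have hPhic : Continuous (Phi v d p η) := Phi_cont v d p hp η
  have hPhiint : ∀ a b : ℝ, IntervalIntegrable (Phi v d p η) MeasureTheory.volume a b :=
    fun a b => hPhic.intervalIntegrable a b
  have hPhinn : ∀ w, 0 ≤ Phi v d p η w := Phi_nonneg v d p hp η hη.le
  -- shift the full integral
  have hshift : ∀ (u : ℝ → ℝ), Function.Periodic u (2*π) →
      (∫ s in (0:ℝ)..(2*π), u s) = ∫ s in c..(c + 2*π), u s := by
    intro u hu
    have := hu.intervalIntegral_add_eq 0 c
    rw [zero_add] at this
    exact this
  -- split into n intervals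
  have hsplit : ∀ (u : ℝ → ℝ), (∀ a b : ℝ, IntervalIntegrable u MeasureTheory.volume a b) →
      (∫ s in c..(c + 2*π), u s) = ∑ k ∈ range n, ∫ s in (c + k*T)..(c + (k+1)*T), u s := by
    intro u hu
    have := intervalIntegral.sum_integral_adjacent_intervals
      (a := fun k : ℕ => c + k*T) (n := n) (fun k _ => hu _ _)
    simp only [Nat.cast_zero, zero_mul, add_zero, Nat.cast_add, Nat.cast_one] at this
    rw [hnT] at this
    rw [← this]
  -- per-interval estimate
  have hperk : ∀ k : ℕ, |T * g (t + k*T) - ∫ s in (c + k*T)..(c + (k+1)*T), g s|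
      ≤ (T/2) * (p * ∫ s in (c + k*T)..(c + (k+1)*T), Phi v d p η s) := by
    intro k
    set a₀ : ℝ := c + k*T with ha₀
    set b₀ : ℝ := c + (k+1)*T with hb₀
    set tk : ℝ := t + k*T with htk
    have htk_mid : tk = a₀ + T/2 := by rw [htk, ha₀, hc]; ring
    have htk_mid' : b₀ = tk + T/2 := by rw [htk, hb₀, hc]; ring
    have hab : a₀ ≤ b₀ := by rw [ha₀, hb₀]; nlinarith
    have hatk : a₀ ≤ tk := by rw [htk_mid]; linarith
    have htkb : tk ≤ b₀ := by rw [htk_mid']; linarith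
    -- T * g tk − ∫ g = ∫ (g tk − g s)
    have heq : T * g tk - ∫ s in a₀..b₀, g s = ∫ s in a₀..b₀, (g tk - g s) := by
      rw [intervalIntegral.integral_sub intervalIntegrable_const (hgint _ _),
        intervalIntegral.integral_const, smul_eq_mul]
      rw [show b₀ - a₀ = T by rw [ha₀, hb₀]; ring]
    rw [heq]
    have habs : |∫ s in a₀..b₀, (g tk - g s)| ≤ ∫ s in a₀..b₀, |g tk - g s| :=
      intervalIntegral.abs_integral_le_integral_abs hab
    have hcontabs : Continuous (fun s => |g tk - g s|) := (continuous_const.sub hgc).abs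
    have habsint : ∀ x y : ℝ, IntervalIntegrable (fun s => |g tk - g s|)
        MeasureTheory.volume x y := fun x y => hcontabs.intervalIntegrable x y
    -- bounds on the two halves
    have hCL : ∀ s ∈ Set.Icc a₀ tk, |g tk - g s| ≤ p * ∫ w in a₀..tk, Phi v d p η w := by
      intro s hs
      have h1 : |g tk - g s| ≤ p * ∫ w in s..tk, Phi v d p η w := by
        rw [hg]
        exact keyL v d p hp hη hs.2
      refine h1.trans (mul_le_mul_of_nonneg_left ?_ (by linarith : (0:ℝ) ≤ p))
      refine intervalIntegral.integral_mono_interval hs.1 hs.2 le_rfl ?_ (hPhiint _ _)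
      exact MeasureTheory.ae_of_all _ fun w => hPhinn w
    have hCR : ∀ s ∈ Set.Icc tk b₀, |g tk - g s| ≤ p * ∫ w in tk..b₀, Phi v d p η w := by
      intro s hs
      have h1 : |g tk - g s| ≤ p * ∫ w in tk..s, Phi v d p η w := by
        rw [hg, abs_sub_comm]
        exact keyL v d p hp hη hs.1
      refine h1.trans (mul_le_mul_of_nonneg_left ?_ (by linarith : (0:ℝ) ≤ p))
      refine intervalIntegral.integral_mono_interval le_rfl hs.1 hs.2 ?_ (hPhiint _ _)
      exact MeasureTheory.ae_of_all _ fun w => hPhinn w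
    have hsplit2 : (∫ s in a₀..b₀, |g tk - g s|)
        = (∫ s in a₀..tk, |g tk - g s|) + ∫ s in tk..b₀, |g tk - g s| :=
      (intervalIntegral.integral_add_adjacent_intervals (habsint _ _) (habsint _ _)).symm
    have hL2 : (∫ s in a₀..tk, |g tk - g s|) ≤ (T/2) * (p * ∫ w in a₀..tk, Phi v d p η w) := by
      have := intervalIntegral.integral_mono_on hatk (habsint _ _)
        intervalIntegrable_const hCL
      rw [intervalIntegral.integral_const, smul_eq_mul] at this
      rw [show tk - a₀ = T/2 by rw [htk_mid]; ring] at this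
      exact this
    have hR2 : (∫ s in tk..b₀, |g tk - g s|) ≤ (T/2) * (p * ∫ w in tk..b₀, Phi v d p η w) := by
      have := intervalIntegral.integral_mono_on htkb (habsint _ _)
        intervalIntegrable_const hCR
      rw [intervalIntegral.integral_const, smul_eq_mul] at this
      rw [show b₀ - tk = T/2 by rw [htk_mid']; ring] at this
      exact this
    have hPhisplit : (∫ w in a₀..tk, Phi v d p η w) + (∫ w in tk..b₀, Phi v d p η w)
        = ∫ w in a₀..b₀, Phi v d p η w :=
      intervalIntegral.integral_add_adjacent_intervals (hPhiint _ _) (hPhiint _ _)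
    calc |∫ s in a₀..b₀, (g tk - g s)| ≤ ∫ s in a₀..b₀, |g tk - g s| := habs
      _ = (∫ s in a₀..tk, |g tk - g s|) + ∫ s in tk..b₀, |g tk - g s| := hsplit2
      _ ≤ (T/2) * (p * ∫ w in a₀..tk, Phi v d p η w)
          + (T/2) * (p * ∫ w in tk..b₀, Phi v d p η w) := add_le_add hL2 hR2
      _ = (T/2) * (p * ∫ w in a₀..b₀, Phi v d p η w) := by rw [← hPhisplit]; ring
  -- assemble
  have hgsplit := hsplit g hgint
  have hgshift := hshift g (g_per v d p)
  have hPhishift := hshift (Phi v d p η) (Phi_per v d p η)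
  have hPhisplit' := hsplit (Phi v d p η) hPhiint
  calc |(∑ k ∈ range n, (2*π/n) * phi v d (t + k*(2*π/n)) ^ p) - ∫ s in (0:ℝ)..(2*π), phi v d s ^ p|
      = |∑ k ∈ range n, (T * g (t + k*T) - ∫ s in (c + k*T)..(c + (k+1)*T), g s)| := by
        rw [Finset.sum_sub_distrib]
        rw [hgshift, hgsplit]
    _ ≤ ∑ k ∈ range n, |T * g (t + k*T) - ∫ s in (c + k*T)..(c + (k+1)*T), g s| :=
        Finset.abs_sum_le_sum_abs _ _
    _ ≤ ∑ k ∈ range n, (T/2) * (p * ∫ s in (c + k*T)..(c + (k+1)*T), Phi v d p η s) :=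
        Finset.sum_le_sum fun k _ => hperk k
    _ = (T/2) * (p * ∑ k ∈ range n, ∫ s in (c + k*T)..(c + (k+1)*T), Phi v d p η s) := by
        simp only [Finset.mul_sum]
    _ = p * (π/n) * ∫ s in (0:ℝ)..(2*π), Phi v d p η s := by
        rw [← hPhisplit', ← hPhishift, hT]
        ring

lemma phic_cont (hp : 1 ≤ p) (cc : ℝ) : Continuous (fun s => (phi v d s + cc) ^ p) :=
  ((phi_cont v d).add continuous_const).rpow_const fun x => Or.inr (by linarith)

lemma phic_cont' (hp : 1 ≤ p) (cc : ℝ) : Continuous (fun s => (phi v d s + cc) ^ (p-1)) :=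
  ((phi_cont v d).add continuous_const).rpow_const fun x => Or.inr (by linarith)

lemma Q_nonneg (hp : 1 ≤ p) {cc : ℝ} (hcc : 0 ≤ cc) :
    0 ≤ ∫ s in (0:ℝ)..(2*π), (phi v d s + cc) ^ p := by
  refine intervalIntegral.integral_nonneg (by positivity) fun u _ => ?_
  exact Real.rpow_nonneg (by linarith [phi_nonneg v d u]) _

lemma transl_inv (hp : 1 ≤ p) (cc σ : ℝ) :
    (∫ s in (0:ℝ)..(2*π), (phi v d (s - σ) + cc) ^ p)
      = ∫ s in (0:ℝ)..(2*π), (phi v d s + cc) ^ p := by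
  have h1 : (∫ s in (0:ℝ)..(2*π), (phi v d (s - σ) + cc) ^ p)
      = ∫ s in (0-σ:ℝ)..(2*π - σ), (phi v d s + cc) ^ p :=
    intervalIntegral.integral_comp_sub_right (fun s => (phi v d s + cc)^p) σ
  rw [h1]
  have hper : Function.Periodic (fun s : ℝ => (phi v d s + cc)^p) (2*π) := fun x =>
    congrArg (fun y : ℝ => (y + cc)^p) (phi_per v d x)
  have h2 := hper.intervalIntegral_add_eq (-σ) 0
  rw [zero_add] at h2
  rw [show (0:ℝ) - σ = -σ by ring, show 2*π - σ = -σ + 2*π by ring]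
  exact h2

lemma holder_shift (hp : 1 ≤ p) {cc : ℝ} (hcc : 0 ≤ cc) (σ : ℝ) :
    (∫ s in (0:ℝ)..(2*π), (phi v d s + cc) ^ (p-1) * (phi v d (s - σ) + cc))
      ≤ ∫ s in (0:ℝ)..(2*π), (phi v d s + cc) ^ p := by
  have hπ := Real.pi_pos
  have hshiftc : Continuous (fun s : ℝ => phi v d (s - σ) + cc) :=
    ((phi_cont v d).comp (continuous_sub_right σ)).add continuous_const
  rcases eq_or_lt_of_le hp with hp1 | hp1
  · rw [← hp1]
    norm_num
    have := transl_inv v d 1 le_rfl cc σ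
    simp only [Real.rpow_one] at this
    rw [this]
  · set q := p/(p-1) with hq
    have hpq : p.HolderConjugate q := Real.HolderConjugate.conjExponent hp1
    have hqp : q.HolderConjugate p := hpq.symm
    have hpt : ∀ s ∈ Set.Icc (0:ℝ) (2*π),
        (phi v d s + cc) ^ (p-1) * (phi v d (s - σ) + cc)
          ≤ (phi v d s + cc) ^ p / q + (phi v d (s - σ) + cc) ^ p / p := by
      intro s _
      have hx : 0 ≤ phi v d s + cc := by linarith [phi_nonneg v d s]
      have hy : 0 ≤ phi v d (s - σ) + cc := by linarith [phi_nonneg v d (s - σ)]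
      have := Real.young_inequality ((phi v d s + cc) ^ (p-1)) (phi v d (s - σ) + cc) hqp
      rw [_root_.abs_of_nonneg (Real.rpow_nonneg hx _), _root_.abs_of_nonneg hy] at this
      rw [← Real.rpow_mul hx] at this
      rw [show (p-1) * q = p by rw [hq, mul_comm]; exact div_mul_cancel₀ p (by linarith)] at this
      exact this
    have hint1 : IntervalIntegrable
        (fun s => (phi v d s + cc) ^ (p-1) * (phi v d (s - σ) + cc))
        MeasureTheory.volume 0 (2*π) :=
      ((phic_cont' v d p hp cc).mul hshiftc).intervalIntegrable 0 (2*π)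
    have hc1 : Continuous (fun s : ℝ => (phi v d s + cc) ^ p / q) :=
      (phic_cont v d p hp cc).div_const q
    have hc2 : Continuous (fun s : ℝ => (phi v d (s - σ) + cc) ^ p / p) :=
      ((phic_cont v d p hp cc).comp (continuous_sub_right σ)).div_const p
    have hint2 : IntervalIntegrable
        (fun s => (phi v d s + cc) ^ p / q + (phi v d (s - σ) + cc) ^ p / p)
        MeasureTheory.volume 0 (2*π) :=
      (hc1.add hc2).intervalIntegrable 0 (2*π)
    refine (intervalIntegral.integral_mono_on (by positivity) hint1 hint2 hpt).trans ?_
    have hsq : (∫ s in (0:ℝ)..(2*π), ((phi v d s + cc) ^ p / q + (phi v d (s - σ) + cc) ^ p / p))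
        = (∫ s in (0:ℝ)..(2*π), (phi v d s + cc) ^ p) / q
          + (∫ s in (0:ℝ)..(2*π), (phi v d (s - σ) + cc) ^ p) / p := by
      rw [intervalIntegral.integral_add (hc1.intervalIntegrable 0 (2*π))
        (hc2.intervalIntegrable 0 (2*π)), intervalIntegral.integral_div,
        intervalIntegral.integral_div]
    rw [hsq, transl_inv v d p hp cc σ]
    have hQ := Q_nonneg v d p hp hcc
    have h1q : p⁻¹ + q⁻¹ = 1 := hpq.inv_add_inv_eq_one
    have hp0 : 0 < p := by linarith
    have hq0 : 0 < q := hpq.symm.pos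
    have hs : q + p = q * p := by
      field_simp at h1q
      linarith [h1q]
    rw [div_add_div _ _ (ne_of_gt hq0) (ne_of_gt hp0)]
    rw [div_le_iff₀ (by positivity)]
    nlinarith [hQ, hs]

lemma BH (hp : 1 ≤ p) {cc : ℝ} (hcc : 0 ≤ cc) :
    (∫ s in (0:ℝ)..(2*π), (phi v d s + cc) ^ (p-1) * psi v d s)
      ≤ 2*d * ∫ s in (0:ℝ)..(2*π), (phi v d s + cc) ^ p := by
  have hπ := Real.pi_pos
  set Q := ∫ s in (0:ℝ)..(2*π), (phi v d s + cc) ^ p with hQdef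
  have hQ := Q_nonneg v d p hp hcc
  set w : ℕ → ℝ := fun j => (4*(d:ℝ))⁻¹ * ‖Kker d (2*π*j/((4*d:ℕ):ℝ))‖ with hw
  have hwnn : ∀ j, 0 ≤ w j := fun j => by
    rw [hw]
    positivity
  have hpt : ∀ s ∈ Set.Icc (0:ℝ) (2*π),
      (phi v d s + cc) ^ (p-1) * psi v d s
        ≤ ∑ j ∈ range (4*d), w j * ((phi v d s + cc) ^ (p-1)
            * (phi v d (s - 2*π*j/((4*d:ℕ):ℝ)) + cc)) := by
    intro s _
    have h1 : psi v d s ≤ ∑ j ∈ range (4*d), w j * (phi v d (s - 2*π*j/((4*d:ℕ):ℝ)) + cc) := by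
      refine (norm_trigP1_le v d s).trans (Finset.sum_le_sum fun j _ => ?_)
      rw [hw]
      have hKnn : 0 ≤ (4*(d:ℝ))⁻¹ * ‖Kker d (2*π*j/((4*d:ℕ):ℝ))‖ := by positivity
      have : (phi v d (s - 2*π*j/((4*d:ℕ):ℝ))) ≤ phi v d (s - 2*π*j/((4*d:ℕ):ℝ)) + cc := by
        linarith
      exact mul_le_mul_of_nonneg_left this hKnn
    calc (phi v d s + cc) ^ (p-1) * psi v d s
        ≤ (phi v d s + cc) ^ (p-1) * ∑ j ∈ range (4*d), w j * (phi v d (s - 2*π*j/((4*d:ℕ):ℝ)) + cc) := by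
          refine mul_le_mul_of_nonneg_left h1 ?_
          exact Real.rpow_nonneg (by linarith [phi_nonneg v d s]) _
      _ = ∑ j ∈ range (4*d), w j * ((phi v d s + cc) ^ (p-1)
            * (phi v d (s - 2*π*j/((4*d:ℕ):ℝ)) + cc)) := by
          rw [Finset.mul_sum]
          exact Finset.sum_congr rfl fun j _ => by ring
  have hcontj : ∀ j : ℕ, Continuous (fun s => w j * ((phi v d s + cc) ^ (p-1)
      * (phi v d (s - 2*π*j/((4*d:ℕ):ℝ)) + cc))) := by
    intro j
    exact continuous_const.mul ((phic_cont' v d p hp cc).mul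
      (((phi_cont v d).comp (continuous_sub_right _)).add continuous_const))
  have hint1 : IntervalIntegrable (fun s => (phi v d s + cc) ^ (p-1) * psi v d s)
      MeasureTheory.volume 0 (2*π) :=
    ((phic_cont' v d p hp cc).mul (psi_cont v d)).intervalIntegrable 0 (2*π)
  have hint2 : IntervalIntegrable (fun s => ∑ j ∈ range (4*d), w j * ((phi v d s + cc) ^ (p-1)
      * (phi v d (s - 2*π*j/((4*d:ℕ):ℝ)) + cc))) MeasureTheory.volume 0 (2*π) :=
    (continuous_finset_sum _ fun j _ => hcontj j).intervalIntegrable 0 (2*π)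
  refine (intervalIntegral.integral_mono_on (by positivity) hint1 hint2 hpt).trans ?_
  rw [intervalIntegral.integral_finset_sum (fun j _ => ((hcontj j).intervalIntegrable 0 (2*π)))]
  have hstep : ∀ j ∈ range (4*d),
      (∫ s in (0:ℝ)..(2*π), w j * ((phi v d s + cc) ^ (p-1)
        * (phi v d (s - 2*π*j/((4*d:ℕ):ℝ)) + cc))) ≤ w j * Q := by
    intro j _
    rw [intervalIntegral.integral_const_mul]
    exact mul_le_mul_of_nonneg_left (holder_shift v d p hp hcc _) (hwnn j)
  refine (Finset.sum_le_sum hstep).trans ?_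
  rw [← Finset.sum_mul]
  refine mul_le_mul_of_nonneg_right ?_ hQ
  -- ∑ w j ≤ 2d
  rcases Nat.eq_zero_or_pos d with rfl | hd
  · simp
  have hsum := Ksum_bound d
  have h4d : (0:ℝ) < 4*(d:ℝ) := by positivity
  rw [hw]
  have : ∑ j ∈ range (4*d), (4*(d:ℝ))⁻¹ * ‖Kker d (2*π*j/((4*d:ℕ):ℝ))‖
      = (4*(d:ℝ))⁻¹ * ∑ j ∈ range (4*d), ‖Kker d (2*π*j/((4*d:ℕ):ℝ))‖ := by
    rw [Finset.mul_sum]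
  rw [this]
  rw [inv_mul_le_iff₀ h4d]
  calc ∑ j ∈ range (4*d), ‖Kker d (2*π*j/((4*d:ℕ):ℝ))‖
      ≤ 2*d*(4*(d:ℝ)) := hsum
    _ = 4*(d:ℝ) * (2*d) := by ring

lemma A_nonneg : 0 ≤ ∫ s in (0:ℝ)..(2*π), phi v d s ^ p := by
  have hπ := Real.pi_pos
  refine intervalIntegral.integral_nonneg (by positivity) fun u _ => ?_
  exact Real.rpow_nonneg (phi_nonneg v d u) _

lemma tail1 (hp : 1 ≤ p) {c : ℝ} (hc : 0 ≤ c) :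
    (∫ s in (0:ℝ)..(2*π), (phi v d s + c) ^ p)
      ≤ (∫ s in (0:ℝ)..(2*π), phi v d s ^ p) + 2*π*(p*c*(CC v d 0 + c)^(p-1)) := by
  have hπ := Real.pi_pos
  have hC0 := CC_nonneg v d 0
  have hpt : ∀ s ∈ Set.Icc (0:ℝ) (2*π),
      (phi v d s + c) ^ p ≤ phi v d s ^ p + p*c*(CC v d 0 + c)^(p-1) := by
    intro s _
    have h1 : (phi v d s + c) ^ p - phi v d s ^ p ≤ p * (phi v d s + c)^(p-1) * c :=
      by
        have := rpow_mvt p hp (phi_nonneg v d s) (by linarith : phi v d s ≤ phi v d s + c)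
        calc (phi v d s + c) ^ p - phi v d s ^ p
            ≤ p * (phi v d s + c)^(p-1) * (phi v d s + c - phi v d s) := this
          _ = p * (phi v d s + c)^(p-1) * c := by ring
    have h2 : (phi v d s + c)^(p-1) ≤ (CC v d 0 + c)^(p-1) :=
      Real.rpow_le_rpow (by linarith [phi_nonneg v d s]) (by linarith [phi_le v d s])
        (by linarith)
    have hpnn : (0:ℝ) ≤ p := by linarith
    have h3 : p*c*(phi v d s + c)^(p-1) ≤ p*c*(CC v d 0 + c)^(p-1) :=
      mul_le_mul_of_nonneg_left h2 (mul_nonneg hpnn hc)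
    nlinarith [h3, h1]
  have hint1 : IntervalIntegrable (fun s => (phi v d s + c) ^ p) MeasureTheory.volume 0 (2*π) :=
    (phic_cont v d p hp c).intervalIntegrable 0 (2*π)
  have hint2 : IntervalIntegrable (fun s => phi v d s ^ p + p*c*(CC v d 0 + c)^(p-1))
      MeasureTheory.volume 0 (2*π) :=
    ((g_cont v d p hp).add continuous_const).intervalIntegrable 0 (2*π)
  have := intervalIntegral.integral_mono_on (by positivity) hint1 hint2 hpt
  rw [intervalIntegral.integral_add ((g_cont v d p hp).intervalIntegrable 0 (2*π))
    intervalIntegrable_const, intervalIntegral.integral_const, smul_eq_mul] at this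
  calc (∫ s in (0:ℝ)..(2*π), (phi v d s + c) ^ p)
      ≤ (∫ s in (0:ℝ)..(2*π), phi v d s ^ p) + (2*π - 0) * (p*c*(CC v d 0 + c)^(p-1)) := this
    _ = (∫ s in (0:ℝ)..(2*π), phi v d s ^ p) + 2*π*(p*c*(CC v d 0 + c)^(p-1)) := by ring

lemma tail2 (hp : 1 ≤ p) {c : ℝ} (hc : 0 ≤ c) :
    (∫ s in (0:ℝ)..(2*π), (phi v d s + c) ^ (p-1)) ≤ 2*π*((CC v d 0 + c)^(p-1)) := by
  have hπ := Real.pi_pos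
  have hpt : ∀ s ∈ Set.Icc (0:ℝ) (2*π),
      (phi v d s + c) ^ (p-1) ≤ (CC v d 0 + c)^(p-1) := fun s _ =>
    Real.rpow_le_rpow (by linarith [phi_nonneg v d s]) (by linarith [phi_le v d s])
      (by linarith)
  have hic : IntervalIntegrable (fun s => (phi v d s + c) ^ (p-1))
      MeasureTheory.volume 0 (2*π) := (phic_cont' v d p hp c).intervalIntegrable 0 (2*π)
  have := intervalIntegral.integral_mono_on (by positivity) hic intervalIntegrable_const hpt
  rw [intervalIntegral.integral_const, smul_eq_mul] at this
  calc (∫ s in (0:ℝ)..(2*π), (phi v d s + c) ^ (p-1))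
      ≤ (2*π - 0) * ((CC v d 0 + c)^(p-1)) := this
    _ = 2*π*((CC v d 0 + c)^(p-1)) := by ring

lemma sup_bound (hp : 1 ≤ p) (n : ℕ) (hn : 1 ≤ n) (t : ℝ) :
    |(∑ k ∈ range n, (2*π/n) * phi v d (t + k*(2*π/n)) ^ p) - ∫ s in (0:ℝ)..(2*π), phi v d s ^ p|
      ≤ 2*π*(p*(d:ℝ)/n) * ∫ s in (0:ℝ)..(2*π), phi v d s ^ p := by
  have hπ := Real.pi_pos
  have hn0 : (0:ℝ) < n := by exact_mod_cast hn
  have hp0 : (0:ℝ) ≤ p := by linarith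
  have hC0 := CC_nonneg v d 0
  have hC1 := CC_nonneg v d 1
  have hC2 := CC_nonneg v d 2
  set A := ∫ s in (0:ℝ)..(2*π), phi v d s ^ p with hA
  have hAnn : 0 ≤ A := A_nonneg v d p
  set Y : ℝ := (CC v d 0 + CC v d 1)^(p-1) with hY
  have hYnn : 0 ≤ Y := Real.rpow_nonneg (by linarith) _
  set Z : ℝ := 4*π*p*(d:ℝ)*CC v d 1 + 4*π*CC v d 2 with hZ
  have hZnn : 0 ≤ Z := by
    rw [hZ]
    have : (0:ℝ) ≤ 4*π*p*(d:ℝ)*CC v d 1 :=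
      mul_nonneg (mul_nonneg (mul_nonneg (by positivity) hp0) (Nat.cast_nonneg d)) hC1
    have : (0:ℝ) ≤ 4*π*CC v d 2 := mul_nonneg (by positivity) hC2
    linarith
  set E₁ : ℝ := p*(π/n)*Z*Y with hE₁
  have hE₁nn : 0 ≤ E₁ := by
    rw [hE₁]
    exact mul_nonneg (mul_nonneg (mul_nonneg hp0 (by positivity)) hZnn) hYnn
  refine le_of_forall_pos_le_add fun ε hε => ?_
  set η : ℝ := min 1 (ε/(E₁+1)) with hηdef
  have hη0 : 0 < η := lt_min (by norm_num) (div_pos hε (by linarith))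
  have hη1 : η ≤ 1 := min_le_left _ _
  have hηε : η * E₁ ≤ ε := by
    have h1 : η ≤ ε/(E₁+1) := min_le_right _ _
    have h2 : η * (E₁+1) ≤ ε := by
      rw [← le_div_iff₀ (by linarith : (0:ℝ) < E₁+1)]
      exact h1
    nlinarith
  have hr := riemann v d p hp n hn t hη0
  set cη : ℝ := CC v d 1 * η with hcη
  have hcηnn : 0 ≤ cη := mul_nonneg hC1 hη0.le
  -- decompose the Phi integral
  have hXnn : 0 ≤ (CC v d 0 + cη)^(p-1) := Real.rpow_nonneg (by linarith) _
  have hXY : (CC v d 0 + cη)^(p-1) ≤ Y := by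
    rw [hY]
    refine Real.rpow_le_rpow (by linarith) ?_ (by linarith)
    have : cη ≤ CC v d 1 := by rw [hcη]; nlinarith
    linarith
  have hdecomp : (∫ s in (0:ℝ)..(2*π), Phi v d p η s)
      = (∫ s in (0:ℝ)..(2*π), (phi v d s + cη) ^ (p-1) * psi v d s)
        + (∫ s in (0:ℝ)..(2*π), (phi v d s + cη) ^ (p-1)) * (2 * CC v d 2 * η) := by
    have hfe : Phi v d p η = fun w => (phi v d w + cη)^(p-1) * psi v d w
        + (phi v d w + cη)^(p-1) * (2 * CC v d 2 * η) := by
      funext w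
      rw [Phi, hcη]
      ring
    have hi1 : IntervalIntegrable (fun w => (phi v d w + cη)^(p-1) * psi v d w)
        MeasureTheory.volume 0 (2*π) :=
      ((phic_cont' v d p hp cη).mul (psi_cont v d)).intervalIntegrable 0 (2*π)
    have hi2 : IntervalIntegrable (fun w => (phi v d w + cη)^(p-1) * (2 * CC v d 2 * η))
        MeasureTheory.volume 0 (2*π) :=
      ((phic_cont' v d p hp cη).mul continuous_const).intervalIntegrable 0 (2*π)
    rw [hfe]
    rw [intervalIntegral.integral_add hi1 hi2]
    congr 1
    rw [← intervalIntegral.integral_mul_const]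
  have hBH := BH v d p hp hcηnn
  have ht1 := tail1 v d p hp hcηnn
  have ht2 := tail2 v d p hp hcηnn
  have hPhiB : (∫ s in (0:ℝ)..(2*π), Phi v d p η s) ≤ 2*(d:ℝ)*A + η * Z * Y := by
    rw [hdecomp]
    have hb1 : (∫ s in (0:ℝ)..(2*π), (phi v d s + cη) ^ (p-1) * psi v d s)
        ≤ 2*(d:ℝ)*((∫ s in (0:ℝ)..(2*π), phi v d s ^ p) + 2*π*(p*cη*(CC v d 0 + cη)^(p-1))) := by
      refine hBH.trans ?_
      exact mul_le_mul_of_nonneg_left ht1 (by positivity : (0:ℝ) ≤ 2*(d:ℝ))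
    have hb2 : (∫ s in (0:ℝ)..(2*π), (phi v d s + cη) ^ (p-1)) * (2 * CC v d 2 * η)
        ≤ (2*π*((CC v d 0 + cη)^(p-1))) * (2 * CC v d 2 * η) := by
      refine mul_le_mul_of_nonneg_right ht2
        (mul_nonneg (mul_nonneg (by norm_num) hC2) hη0.le)
    have hcomb := add_le_add hb1 hb2
    refine hcomb.trans ?_
    have hstep : η * Z * (CC v d 0 + cη)^(p-1) ≤ η * Z * Y :=
      mul_le_mul_of_nonneg_left hXY (mul_nonneg hη0.le hZnn)
    have hexp : 2*(d:ℝ)*(A + 2*π*(p*cη*(CC v d 0 + cη)^(p-1)))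
        + (2*π*((CC v d 0 + cη)^(p-1))) * (2 * CC v d 2 * η)
        = 2*(d:ℝ)*A + η * Z * (CC v d 0 + cη)^(p-1) := by
      rw [hZ, hcη]
      ring
    rw [hA] at hexp
    rw [hexp]
    linarith
  have hfinal : p * (π/n) * (∫ s in (0:ℝ)..(2*π), Phi v d p η s)
      ≤ 2*π*(p*(d:ℝ)/n) * A + η * E₁ := by
    have h1 : p * (π/n) * (∫ s in (0:ℝ)..(2*π), Phi v d p η s)
        ≤ p * (π/n) * (2*(d:ℝ)*A + η * Z * Y) :=
      mul_le_mul_of_nonneg_left hPhiB (mul_nonneg hp0 (by positivity))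
    refine h1.trans (le_of_eq ?_)
    rw [hE₁]
    ring
  calc |(∑ k ∈ range n, (2*π/n) * phi v d (t + k*(2*π/n)) ^ p) - ∫ s in (0:ℝ)..(2*π), phi v d s ^ p|
      ≤ p * (π/n) * ∫ s in (0:ℝ)..(2*π), Phi v d p η s := hr
    _ ≤ 2*π*(p*(d:ℝ)/n) * A + η * E₁ := hfinal
    _ ≤ 2*π*(p*(d:ℝ)/n) * A + ε := by linarith

end Main

lemma periodic_shift_h (h : ℝ → ℂ) (hhper : Function.Periodic h (2*π)) :
    ∀ (x : ℝ) (k : ℕ), h (x + 2*π*k) = h x := by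
  intro x k
  induction k with
  | zero => simp
  | succ k ih =>
    have harg : x + 2*π*((k:ℕ)+1:ℕ) = (x + 2*π*k) + 2*π := by push_cast; ring
    rw [harg, hhper (x + 2*π*k), ih]

lemma split_generic {F : Type*} [NormedAddCommGroup F] [NormedSpace ℝ F]
    (W : ℝ → F) (T : ℝ) (n : ℕ)
    (hW : ∀ k : ℕ, k < n → IntervalIntegrable W MeasureTheory.volume ((k:ℝ)*T) (((k:ℝ)+1)*T)) :
    ∫ u in (0:ℝ)..((n:ℝ)*T), W u = ∑ k ∈ range n, ∫ u in (0:ℝ)..T, W (u + k*T) := by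
  have hsum := intervalIntegral.sum_integral_adjacent_intervals
    (a := fun k : ℕ => (k:ℝ)*T) (n := n) (μ := MeasureTheory.volume)
    (fun k hk => by
      have := hW k hk
      simpa [add_mul] using this)
  simp only [Nat.cast_zero, zero_mul] at hsum
  rw [← hsum]
  refine Finset.sum_congr rfl fun k _ => ?_
  have := intervalIntegral.integral_comp_add_right (a := 0) (b := T) W ((k:ℝ)*T)
  rw [this]
  congr 1 <;> push_cast <;> ring

end Stmt8Aux

open Stmt8Aux Finset in
theorem stmt_8 {E : Type*} [NormedAddCommGroup E] [NormedSpace ℂ E]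
    (d : ℕ) (p : ℝ) (hp : 1 ≤ p) (n : ℕ) (hn : 1 ≤ n)
    (v : ℤ → E) (f : ℝ → E)
    (hf : ∀ t : ℝ, f t = ∑ l ∈ Finset.Icc (-(d:ℤ)) (d:ℤ), Complex.exp (Complex.I * l * t) • v l)
    (h : ℝ → ℂ)
    (hhper : Function.Periodic h (2 * π))
    (hhint : IntervalIntegrable h MeasureTheory.volume 0 (2 * π)) :
    ‖(1 / (2 * π)) * (∫ t in (0:ℝ)..(2 * π), ((‖f t‖ ^ p : ℝ) : ℂ) * h ((n : ℝ) * t)) -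
        (((1 / (2 * π)) * ∫ t in (0:ℝ)..(2 * π), ‖f t‖ ^ p : ℝ) : ℂ) *
        ((1 / (2 * π)) * ∫ t in (0:ℝ)..(2 * π), h ((n : ℝ) * t))‖ ≤
      2 * π * (p * d / n) * ((1 / (2 * π)) * ∫ t in (0:ℝ)..(2 * π), ‖f t‖ ^ p) *
        ((1 / (2 * π)) * ∫ t in (0:ℝ)..(2 * π), ‖h ((n : ℝ) * t)‖) := by
  classical
  have hπ := Real.pi_pos
  have hn0 : (0:ℝ) < n := by exact_mod_cast hn
  have hp0 : (0:ℝ) ≤ p := by linarith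
  -- identify f with trigP
  have hf' : ∀ t, ‖f t‖ = phi v d t := by
    intro t
    rw [hf t]
    unfold phi trigP
    exact congrArg Norm.norm (Finset.sum_congr rfl fun l _ => by rw [pow_zero, one_mul])
  simp only [hf']
  set T : ℝ := 2*π/(n:ℝ) with hT
  have hT0 : 0 < T := by positivity
  have hnT : (n:ℝ)*T = 2*π := by rw [hT]; field_simp
  set A : ℝ := ∫ s in (0:ℝ)..(2*π), phi v d s ^ p with hA
  have hAnn : 0 ≤ A := A_nonneg v d p
  -- integrability of h ∘ (n ·) on pieces
  have hWin : IntervalIntegrable (fun u => h ((n:ℝ)*u)) MeasureTheory.volume 0 T := by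
    have := hhint.comp_mul_left (c := (n:ℝ))
    rw [zero_div] at this
    exact this
  have hper2 := periodic_shift_h h hhper
  have hWshift : ∀ k : ℕ, (fun u : ℝ => h ((n:ℝ)*(u + k*T))) = (fun u : ℝ => h ((n:ℝ)*u)) := by
    intro k
    funext u
    have hk : (n:ℝ)*((k:ℝ)*T) = 2*π*k := by
      rw [show (n:ℝ)*((k:ℝ)*T) = ((n:ℝ)*T)*k by ring, hnT]
    have harg : (n:ℝ)*(u + k*T) = (n:ℝ)*u + 2*π*k := by
      have hexp : (n:ℝ)*(u + k*T) = (n:ℝ)*u + (n:ℝ)*((k:ℝ)*T) := by ring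
      rw [hexp, hk]
    rw [harg, hper2]
  have hWk : ∀ k : ℕ, k < n → IntervalIntegrable (fun u => h ((n:ℝ)*u))
      MeasureTheory.volume ((k:ℝ)*T) (((k:ℝ)+1)*T) := by
    intro k _
    have hk : (n:ℝ)*((k:ℝ)*T) = 2*π*k := by
      rw [show (n:ℝ)*((k:ℝ)*T) = ((n:ℝ)*T)*k by ring, hnT]
    have h1 := hWin.comp_sub_right ((k:ℝ)*T)
    have h2 : (fun u : ℝ => h ((n:ℝ)*(u - (k:ℝ)*T))) = fun u : ℝ => h ((n:ℝ)*u) := by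
      funext u
      have harg : (n:ℝ)*(u - (k:ℝ)*T) = ((n:ℝ)*u - 2*π*k) := by
        have hexp : (n:ℝ)*(u - (k:ℝ)*T) = (n:ℝ)*u - (n:ℝ)*((k:ℝ)*T) := by ring
        rw [hexp, hk]
      rw [harg]
      have := hper2 ((n:ℝ)*u - 2*π*k) k
      rw [show (n:ℝ)*u - 2*π*k + 2*π*k = (n:ℝ)*u by ring] at this
      rw [this]
    rw [h2] at h1
    rw [show (0:ℝ) + (k:ℝ)*T = (k:ℝ)*T by ring, show T + (k:ℝ)*T = ((k:ℝ)+1)*T by ring] at h1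
    exact h1
  -- continuity facts
  have hgcont : Continuous (fun u : ℝ => ((phi v d u ^ p : ℝ) : ℂ)) :=
    Complex.continuous_ofReal.comp (g_cont v d p hp)
  have h2πT : (2*π:ℝ) = (n:ℝ)*T := hnT.symm
  -- S1 : split the main integral
  have hW1k : ∀ k : ℕ, k < n → IntervalIntegrable
      (fun u => ((phi v d u ^ p : ℝ):ℂ) * h ((n:ℝ)*u)) MeasureTheory.volume
      ((k:ℝ)*T) (((k:ℝ)+1)*T) :=
    fun k hk => (hWk k hk).continuousOn_mul hgcont.continuousOn
  have hshiftcont : ∀ k : ℕ, Continuous (fun u : ℝ => ((phi v d (u + k*T) ^ p : ℝ):ℂ)) :=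
    fun k => hgcont.comp (continuous_add_right _)
  have hterm_int : ∀ k : ℕ, k ∈ range n → IntervalIntegrable
      (fun u : ℝ => ((phi v d (u + k*T) ^ p : ℝ):ℂ) * h ((n:ℝ)*u)) MeasureTheory.volume 0 T :=
    fun k _ => hWin.continuousOn_mul (hshiftcont k).continuousOn
  have S1 : (∫ t in (0:ℝ)..(2*π), ((phi v d t ^ p : ℝ):ℂ) * h ((n:ℝ)*t))
      = ∫ u in (0:ℝ)..T,
          (((∑ k ∈ range n, phi v d (u + k*T) ^ p : ℝ)):ℂ) * h ((n:ℝ)*u) := by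
    rw [h2πT, split_generic _ T n hW1k]
    have hterm : ∀ k ∈ range n,
        (∫ u in (0:ℝ)..T, ((phi v d (u + k*T) ^ p : ℝ):ℂ) * h ((n:ℝ)*(u + k*T)))
        = ∫ u in (0:ℝ)..T, ((phi v d (u + k*T) ^ p : ℝ):ℂ) * h ((n:ℝ)*u) := by
      intro k _
      refine intervalIntegral.integral_congr fun u _ => ?_
      rw [congrFun (hWshift k) u]
    rw [Finset.sum_congr rfl hterm]
    rw [← intervalIntegral.integral_finset_sum hterm_int]
    refine intervalIntegral.integral_congr fun u _ => ?_
    rw [← Finset.sum_mul]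
    congr 1
    push_cast
    ring
  -- S2 : split the h integral
  have S2 : (∫ t in (0:ℝ)..(2*π), h ((n:ℝ)*t)) = (n:ℂ) * ∫ u in (0:ℝ)..T, h ((n:ℝ)*u) := by
    rw [h2πT, split_generic _ T n hWk]
    have hterm : ∀ k ∈ range n,
        (∫ u in (0:ℝ)..T, h ((n:ℝ)*(u + k*T))) = ∫ u in (0:ℝ)..T, h ((n:ℝ)*u) := by
      intro k _
      refine intervalIntegral.integral_congr fun u _ => ?_
      rw [congrFun (hWshift k) u]
    rw [Finset.sum_congr rfl hterm, Finset.sum_const, Finset.card_range, nsmul_eq_mul]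
  -- S3 : split the |h| integral
  have hWabsk : ∀ k : ℕ, k < n → IntervalIntegrable
      (fun u => ‖h ((n:ℝ)*u)‖) MeasureTheory.volume ((k:ℝ)*T) (((k:ℝ)+1)*T) := by
    intro k hk
    have := (hWk k hk).norm
    simpa using this
  have S3 : (∫ t in (0:ℝ)..(2*π), ‖h ((n:ℝ)*t)‖)
      = (n:ℝ) * ∫ u in (0:ℝ)..T, ‖h ((n:ℝ)*u)‖ := by
    rw [h2πT, split_generic _ T n hWabsk]
    have hterm : ∀ k ∈ range n,
        (∫ u in (0:ℝ)..T, ‖h ((n:ℝ)*(u + k*T))‖)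
          = ∫ u in (0:ℝ)..T, ‖h ((n:ℝ)*u)‖ := by
      intro k _
      refine intervalIntegral.integral_congr fun u _ => ?_
      rw [congrFun (hWshift k) u]
    rw [Finset.sum_congr rfl hterm, Finset.sum_const, Finset.card_range, nsmul_eq_mul]
  -- pointwise bound on the Riemann sums
  have hrb : ∀ u : ℝ, |(∑ k ∈ range n, phi v d (u + k*T) ^ p) - ((n:ℝ)/(2*π))*A| ≤ p*d*A := by
    intro u
    have h1 := sup_bound v d p hp n hn u
    rw [← hT, ← hA] at h1
    set r : ℝ := (∑ k ∈ range n, phi v d (u + k*T) ^ p) - ((n:ℝ)/(2*π))*A with hr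
    have e1 : T * r = (∑ k ∈ range n, T * phi v d (u + k*T) ^ p) - A := by
      have hTA : T * (((n:ℝ)/(2*π))*A) = A := by
        rw [hT]
        field_simp
      rw [hr, mul_sub, Finset.mul_sum, hTA]
    have e2 : |(∑ k ∈ range n, T * phi v d (u + k*T) ^ p) - A| ≤ 2*π*(p*(d:ℝ)/n)*A := h1
    rw [← e1, abs_mul, _root_.abs_of_pos hT0] at e2
    have e3 : 2*π*(p*(d:ℝ)/n)*A = T*(p*d*A) := by
      rw [hT]
      field_simp
    rw [e3] at e2
    exact le_of_mul_le_mul_left e2 hT0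
  -- final assembly
  set B : ℝ := ∫ u in (0:ℝ)..T, ‖h ((n:ℝ)*u)‖ with hB
  have hBnn : 0 ≤ B := by
    rw [hB]
    exact intervalIntegral.integral_nonneg hT0.le fun u _ => norm_nonneg _
  set Scal : ℝ → ℝ := fun u => (∑ k ∈ range n, phi v d (u + k*T) ^ p) - ((n:ℝ)/(2*π))*A
    with hScal
  have hScont : Continuous Scal := by
    rw [hScal]
    exact (continuous_finset_sum _ fun k _ =>
      (g_cont v d p hp).comp (continuous_add_right _)).sub continuous_const
  have prod_int : IntervalIntegrable (fun u => ((Scal u : ℝ):ℂ) * h ((n:ℝ)*u))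
      MeasureTheory.volume 0 T :=
    hWin.continuousOn_mul (Complex.continuous_ofReal.comp hScont).continuousOn
  have sum_int : IntervalIntegrable
      (fun u => (((∑ k ∈ range n, phi v d (u + k*T) ^ p : ℝ)):ℂ) * h ((n:ℝ)*u))
      MeasureTheory.volume 0 T :=
    hWin.continuousOn_mul (Complex.continuous_ofReal.comp
      (continuous_finset_sum _ fun k _ =>
        (g_cont v d p hp).comp (continuous_add_right _))).continuousOn
  have hWabs0 : IntervalIntegrable (fun u => ‖h ((n:ℝ)*u)‖)
      MeasureTheory.volume 0 T := by
    simpa using hWin.norm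
  have hDeq : (1 / (2 * (π:ℂ))) * (∫ t in (0:ℝ)..(2*π), ((phi v d t ^ p : ℝ):ℂ) * h ((n:ℝ)*t))
      - ((1 / (2 * π) * A : ℝ):ℂ) * (1 / (2 * (π:ℂ)) * ∫ t in (0:ℝ)..(2*π), h ((n:ℝ)*t))
      = (1/(2*(π:ℂ))) * ∫ u in (0:ℝ)..T, ((Scal u : ℝ):ℂ) * h ((n:ℝ)*u) := by
    rw [S1, S2]
    have hsub : (∫ u in (0:ℝ)..T, ((Scal u : ℝ):ℂ) * h ((n:ℝ)*u))
        = (∫ u in (0:ℝ)..T, (((∑ k ∈ range n, phi v d (u + k*T) ^ p : ℝ)):ℂ) * h ((n:ℝ)*u))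
          - ((((n:ℝ)/(2*π))*A : ℝ):ℂ) * ∫ u in (0:ℝ)..T, h ((n:ℝ)*u) := by
      rw [← intervalIntegral.integral_const_mul]
      rw [← intervalIntegral.integral_sub sum_int (hWin.const_mul _)]
      refine intervalIntegral.integral_congr fun u _ => ?_
      rw [hScal]
      push_cast
      ring
    rw [hsub]
    push_cast
    ring
  rw [hDeq, norm_mul]
  have habs2π : ‖1/(2*(π:ℂ))‖ = 1/(2*π) := by
    rw [show (1/(2*(π:ℂ))) = (((1/(2*π):ℝ)):ℂ) by push_cast; ring]
    rw [Complex.norm_real, Real.norm_eq_abs]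
    rw [_root_.abs_of_pos (by positivity)]
  rw [habs2π]
  have hDb : ‖∫ u in (0:ℝ)..T, ((Scal u : ℝ):ℂ) * h ((n:ℝ)*u)‖ ≤ (p*d*A) * B := by
    refine (intervalIntegral.norm_integral_le_integral_norm hT0.le).trans ?_
    have hpt : ∀ u ∈ Set.Icc (0:ℝ) T, ‖((Scal u : ℝ):ℂ) * h ((n:ℝ)*u)‖
        ≤ (p*d*A) * ‖h ((n:ℝ)*u)‖ := by
      intro u _
      rw [norm_mul, Complex.norm_real, Real.norm_eq_abs]
      exact mul_le_mul_of_nonneg_right (hrb u) (norm_nonneg _)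
    have hint2 : IntervalIntegrable (fun u => (p*d*A) * ‖h ((n:ℝ)*u)‖)
        MeasureTheory.volume 0 T := hWabs0.const_mul _
    refine (intervalIntegral.integral_mono_on hT0.le prod_int.norm hint2 hpt).trans ?_
    rw [intervalIntegral.integral_const_mul]
  rw [S3]
  calc (1/(2*π)) * ‖∫ u in (0:ℝ)..T, ((Scal u : ℝ):ℂ) * h ((n:ℝ)*u)‖
      ≤ (1/(2*π)) * ((p*d*A) * B) := mul_le_mul_of_nonneg_left hDb (by positivity)
    _ = 2 * π * (p * d / n) * (1 / (2 * π) * A) * (1 / (2 * π) * ((n:ℝ) * B)) := by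
        field_simp
end Stmt8Aux
end

section
/- Let p > 1 and f_p(t) = (1 − t^p/2)^{1/p} for t ∈ [0,1]. For every ε > 0 there exists a polynomial w of degree at most ⌈4ε^{-2}⌉ such that f_p(t) ≤ w(t) ≤ (1+ε) f_p(t) for all t ∈ [0,1]. -/
open Polynomial Real

private lemma stmt10_base_mem {p t : ℝ} (hp : 1 < p) (ht : t ∈ Set.Icc (0:ℝ) 1) :
    (1:ℝ)/2 ≤ 1 - t ^ p / 2 ∧ 1 - t ^ p / 2 ≤ 1 := by
  have h1 : t ^ p ≤ 1 := Real.rpow_le_one ht.1 ht.2 (by linarith)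
  have h2 : 0 ≤ t ^ p := Real.rpow_nonneg ht.1 p
  constructor <;> linarith

private lemma stmt10_half_le {p t : ℝ} (hp : 1 < p) (ht : t ∈ Set.Icc (0:ℝ) 1) :
    (1:ℝ)/2 ≤ (1 - t ^ p / 2) ^ (1 / p) := by
  obtain ⟨hl, _⟩ := stmt10_base_mem hp ht
  have hp0 : 0 < p := by linarith
  calc (1:ℝ)/2 = ((1:ℝ)/2) ^ (1:ℝ) := by rw [Real.rpow_one]
    _ ≤ ((1:ℝ)/2) ^ (1/p) := by
        apply Real.rpow_le_rpow_of_exponent_ge (by norm_num) (by norm_num)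
        rw [div_le_one hp0]; linarith
    _ ≤ (1 - t ^ p / 2) ^ (1/p) :=
        Real.rpow_le_rpow (by norm_num) hl (by positivity)

private lemma stmt10_lip {p : ℝ} (hp : 1 < p) {s t : ℝ} (hs : s ∈ Set.Icc (0:ℝ) 1)
    (ht : t ∈ Set.Icc (0:ℝ) 1) :
    |(1 - s ^ p / 2) ^ (1 / p) - (1 - t ^ p / 2) ^ (1 / p)| ≤ |s - t| := by
  have hp0 : 0 < p := by linarith
  set f' : ℝ → ℝ := fun u => -(u ^ (p - 1) * (1 - u ^ p / 2) ^ (1 / p - 1) / 2) with hf'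
  have hderiv : ∀ u ∈ Set.Icc (0:ℝ) 1,
      HasDerivWithinAt (fun t : ℝ => (1 - t ^ p / 2) ^ (1 / p)) (f' u) (Set.Icc 0 1) u := by
    intro u hu
    obtain ⟨hl, _⟩ := stmt10_base_mem hp hu
    have hne : 1 - u ^ p / 2 ≠ 0 := by linarith
    have h1 : HasDerivAt (fun t : ℝ => 1 - t ^ p / 2) (-(p * u ^ (p - 1) / 2)) u := by
      have := (Real.hasDerivAt_rpow_const (x := u) (p := p) (Or.inr hp.le)).div_const 2
      simpa using this.const_sub 1
    have h2 : HasDerivAt (fun y : ℝ => y ^ (1 / p))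
        (1 / p * (1 - u ^ p / 2) ^ (1 / p - 1)) (1 - u ^ p / 2) :=
      Real.hasDerivAt_rpow_const (Or.inl hne)
    have h3 := h2.comp u h1
    have heq : 1 / p * (1 - u ^ p / 2) ^ (1 / p - 1) * -(p * u ^ (p - 1) / 2) = f' u := by
      simp only [hf']
      rw [show 1 / p * (1 - u ^ p / 2) ^ (1 / p - 1) * -(p * u ^ (p - 1) / 2) = (p⁻¹ * p) * -(u ^ (p - 1) * (1 - u ^ p / 2) ^ (1 / p - 1) / 2) by ring, inv_mul_cancel₀ hp0.ne', one_mul]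
    rw [heq] at h3
    exact h3.hasDerivWithinAt
  have hbound : ∀ u ∈ Set.Icc (0:ℝ) 1, ‖f' u‖ ≤ 1 := by
    intro u hu
    obtain ⟨hl, _⟩ := stmt10_base_mem hp hu
    have hA : u ^ (p - 1) ≤ 1 := Real.rpow_le_one hu.1 hu.2 (by linarith)
    have hA0 : 0 ≤ u ^ (p - 1) := Real.rpow_nonneg hu.1 _
    have hB : (1 - u ^ p / 2) ^ (1 / p - 1) ≤ ((1:ℝ)/2) ^ (1 / p - 1) := by
      apply Real.rpow_le_rpow_of_nonpos (by norm_num) hl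
      have : 1 / p ≤ 1 := by rw [div_le_one hp0]; linarith
      linarith
    have hB2 : ((1:ℝ)/2) ^ (1 / p - 1) ≤ 2 := by
      have h1p : 0 < 1 / p := by positivity
      calc ((1:ℝ)/2) ^ (1 / p - 1) ≤ ((1:ℝ)/2) ^ (-1 : ℝ) :=
            Real.rpow_le_rpow_of_exponent_ge (by norm_num) (by norm_num) (by linarith)
        _ = 2 := by rw [Real.rpow_neg_one]; norm_num
    have hB0 : 0 ≤ (1 - u ^ p / 2) ^ (1 / p - 1) := Real.rpow_nonneg (by linarith) _
    rw [hf', Real.norm_eq_abs, abs_neg, abs_of_nonneg (by positivity)]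
    calc u ^ (p - 1) * (1 - u ^ p / 2) ^ (1 / p - 1) / 2 ≤ 1 * 2 / 2 := by
          apply div_le_div_of_nonneg_right ?_ (by norm_num) |>.trans_eq rfl
          exact mul_le_mul hA (hB.trans hB2) hB0 zero_le_one
      _ = 1 := by norm_num
  have := Convex.norm_image_sub_le_of_norm_hasDerivWithin_le hderiv hbound
    (convex_Icc 0 1) ht hs
  simpa [Real.norm_eq_abs] using this

private lemma stmt10_bern_deg {n ν : ℕ} (h : ν ≤ n) :
    (bernsteinPolynomial ℝ n ν).natDegree ≤ n := by
  unfold bernsteinPolynomial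
  refine (Polynomial.natDegree_mul_le).trans ?_
  have h1 : ((Nat.choose n ν : ℝ[X]) * Polynomial.X ^ ν).natDegree ≤ ν :=
    (Polynomial.natDegree_mul_le).trans
      (by simp [Polynomial.natDegree_natCast, Polynomial.natDegree_X_pow])
  have h2 : ((1 - Polynomial.X : ℝ[X]) ^ (n - ν)).natDegree ≤ n - ν := by
    refine (Polynomial.natDegree_pow_le).trans ?_
    have : (1 - Polynomial.X : ℝ[X]).natDegree ≤ 1 := by
      refine (Polynomial.natDegree_sub_le _ _).trans ?_
      simp
    calc (n - ν) * (1 - Polynomial.X : ℝ[X]).natDegree ≤ (n - ν) * 1 :=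
          Nat.mul_le_mul_left _ this
      _ = n - ν := Nat.mul_one _
  omega

theorem stmt_10 (p : ℝ) (hp : 1 < p) (ε : ℝ) (hε : 0 < ε) :
    ∃ w : Polynomial ℝ, w.natDegree ≤ ⌈4 * ε⁻¹ ^ (2:ℕ)⌉₊ ∧
      ∀ t ∈ Set.Icc (0:ℝ) 1,
        (1 - t ^ p / 2) ^ (1 / p) ≤ w.eval t ∧
        w.eval t ≤ (1 + ε) * (1 - t ^ p / 2) ^ (1 / p) := by
  classical
  set g : ℝ → ℝ := fun t => (1 - t ^ p / 2) ^ (1 / p) with hg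
  set n : ℕ := ⌈4 * ε⁻¹ ^ (2:ℕ)⌉₊ with hn
  have hε2 : (0:ℝ) < 4 * ε⁻¹ ^ (2:ℕ) := by positivity
  have hnpos : 0 < n := Nat.ceil_pos.2 hε2
  have hn4 : 4 * ε⁻¹ ^ (2:ℕ) ≤ (n:ℝ) := Nat.le_ceil _
  have hnR : (0:ℝ) < n := by exact_mod_cast hnpos
  refine ⟨∑ k : Fin (n+1), Polynomial.C (g (((k:ℕ):ℝ)/(n:ℝ)) + ε/4) * bernsteinPolynomial ℝ n k,
    ?_, ?_⟩
  · apply Polynomial.natDegree_sum_le_of_forall_le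
    intro k _
    refine (Polynomial.natDegree_mul_le).trans ?_
    simpa using stmt10_bern_deg (Nat.lt_succ_iff.mp k.isLt)
  · intro t ht
    set x : unitInterval := ⟨t, ht⟩ with hx
    set b : Fin (n+1) → ℝ := fun k => (bernsteinPolynomial ℝ n k).eval t with hb
    have hbb : ∀ k : Fin (n+1), bernstein n (k : ℕ) x = b k := by
      intro k
      simp [hb, bernstein, Polynomial.toContinuousMapOn, Polynomial.toContinuousMap, hx]
    have hb0 : ∀ k, 0 ≤ b k := fun k => (hbb k) ▸ bernstein_nonneg
    have hsum : ∑ k : Fin (n+1), b k = 1 := by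
      have := bernstein.probability n x
      simpa [hbb] using this
    have hvar : ∑ k : Fin (n+1), (t - ((k:ℕ):ℝ)/(n:ℝ)) ^ 2 * b k = t * (1 - t) / n := by
      have := bernstein.variance hnpos.ne' x
      simp only [hbb] at this
      simpa [bernstein.z, hx] using this
    set E : ℝ := ∑ k : Fin (n+1), g (((k:ℕ):ℝ)/(n:ℝ)) * b k with hE
    have hzmem : ∀ k : Fin (n+1), ((k:ℕ):ℝ)/(n:ℝ) ∈ Set.Icc (0:ℝ) 1 := by
      intro k
      constructor
      · positivity
      · rw [div_le_one hnR]
        exact_mod_cast Nat.lt_succ_iff.mp k.isLt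
    set S1 : ℝ := ∑ k : Fin (n+1), |t - ((k:ℕ):ℝ)/(n:ℝ)| * b k with hS1
    have hS1nonneg : 0 ≤ S1 := Finset.sum_nonneg fun k _ => mul_nonneg (abs_nonneg _) (hb0 k)
    have step1 : ∑ k : Fin (n+1), (g (((k:ℕ):ℝ)/(n:ℝ)) - g t) * b k = E - g t := by
      simp [sub_mul, Finset.sum_sub_distrib, ← Finset.mul_sum, hsum, hE]
    have step2 : |E - g t| ≤ S1 := by
      rw [← step1]
      refine (Finset.abs_sum_le_sum_abs _ _).trans ?_
      apply Finset.sum_le_sum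
      intro k _
      rw [abs_mul, abs_of_nonneg (hb0 k)]
      refine mul_le_mul_of_nonneg_right ?_ (hb0 k)
      calc |g (((k:ℕ):ℝ)/(n:ℝ)) - g t| ≤ |((k:ℕ):ℝ)/(n:ℝ) - t| :=
            stmt10_lip hp (hzmem k) ht
        _ = |t - ((k:ℕ):ℝ)/(n:ℝ)| := abs_sub_comm _ _
    have hS1sq : S1 ^ 2 ≤ t * (1 - t) / n := by
      have cs := Finset.sum_mul_sq_le_sq_mul_sq Finset.univ
        (fun k : Fin (n+1) => |t - ((k:ℕ):ℝ)/(n:ℝ)| * Real.sqrt (b k))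
        (fun k : Fin (n+1) => Real.sqrt (b k))
      have e1 : ∀ k : Fin (n+1),
          (|t - ((k:ℕ):ℝ)/(n:ℝ)| * Real.sqrt (b k)) * Real.sqrt (b k)
            = |t - ((k:ℕ):ℝ)/(n:ℝ)| * b k := by
        intro k; rw [mul_assoc, Real.mul_self_sqrt (hb0 k)]
      have e2 : ∀ k : Fin (n+1),
          (|t - ((k:ℕ):ℝ)/(n:ℝ)| * Real.sqrt (b k)) ^ 2
            = (t - ((k:ℕ):ℝ)/(n:ℝ)) ^ 2 * b k := by
        intro k; rw [mul_pow, sq_abs, Real.sq_sqrt (hb0 k)]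
      have e3 : ∀ k : Fin (n+1), (Real.sqrt (b k)) ^ 2 = b k := fun k => Real.sq_sqrt (hb0 k)
      simp only [e1, e2, e3] at cs
      calc S1 ^ 2 ≤ (∑ k : Fin (n+1), (t - ((k:ℕ):ℝ)/(n:ℝ)) ^ 2 * b k)
            * (∑ k : Fin (n+1), b k) := cs
        _ = t * (1 - t) / n := by rw [hvar, hsum, mul_one]
    have key : t * (1 - t) / n ≤ (ε/4) ^ 2 := by
      have h14 : t * (1 - t) ≤ 1/4 := by nlinarith [sq_nonneg (2*t - 1)]
      have key2 : (1:ℝ)/4 / n ≤ (ε/4) ^ 2 := by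
        rw [div_le_iff₀ hnR]
        calc (1:ℝ)/4 = (ε/4) ^ 2 * (4 * ε⁻¹ ^ (2:ℕ)) := by
              field_simp
          _ ≤ (ε/4) ^ 2 * n := mul_le_mul_of_nonneg_left hn4 (by positivity)
      calc t * (1 - t) / n ≤ (1/4) / n := by
            gcongr
        _ ≤ (ε/4) ^ 2 := key2
    have hS1le : S1 ≤ ε/4 := by
      nlinarith [hS1sq.trans key, hS1nonneg, hε]
    have hclose : |E - g t| ≤ ε/4 := step2.trans hS1le
    have habs := abs_le.mp hclose
    have heval : (∑ k : Fin (n+1),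
        Polynomial.C (g (((k:ℕ):ℝ)/(n:ℝ)) + ε/4) * bernsteinPolynomial ℝ n k).eval t
        = E + ε/4 := by
      rw [Polynomial.eval_finset_sum]
      simp only [Polynomial.eval_mul, Polynomial.eval_C, add_mul, Finset.sum_add_distrib]
      rw [← Finset.mul_sum, hsum, mul_one, hE]
    rw [heval]
    have hhalf : (1:ℝ)/2 ≤ g t := stmt10_half_le hp ht
    constructor
    · linarith [habs.1]
    · nlinarith [habs.2, hhalf, hε]
end

section
/- For every p > 1 there exists a real polynomial w such that x^{p-1} ≤ w(x)^p for all x ∈ [0,2] and ∫_𝕋 w(1+cos t)^p dm < (∫_𝕋 (1+cos t)^p dm)^{(p-1)/p}. -/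
open Real intervalIntegral

theorem stmt_14 (p : ℝ) (hp : 1 < p) :
    ∃ w : Polynomial ℝ,
      (∀ x ∈ Set.Icc (0:ℝ) 2, x ^ (p - 1) ≤ (w.eval x) ^ p) ∧
      (1 / (2 * π)) * (∫ t in (0:ℝ)..(2 * π), (w.eval (1 + Real.cos t)) ^ p) <
        ((1 / (2 * π)) * ∫ t in (0:ℝ)..(2 * π), (1 + Real.cos t) ^ p) ^ ((p - 1) / p) := by
  have hp0 : (0:ℝ) < p := by linarith
  have hπ : (0:ℝ) < π := Real.pi_pos
  set α : ℝ := (p - 1) / p with hαdef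
  have hα0 : 0 < α := by rw [hαdef]; exact div_pos (by linarith) hp0
  have hα1 : α < 1 := by rw [hαdef, div_lt_one hp0]; linarith
  have hαp : α * p = p - 1 := div_mul_cancel₀ _ hp0.ne'
  have hcont : Continuous fun t : ℝ => (1 + Real.cos t) ^ p :=
    (continuous_const.add Real.continuous_cos).rpow_const fun x => Or.inr hp0.le
  have hbase : ∀ t : ℝ, (0:ℝ) ≤ 1 + Real.cos t := fun t => by
    nlinarith [Real.neg_one_le_cos t]
  set K : ℝ := ∫ t in (0:ℝ)..(2 * π), (1 + Real.cos t) ^ p with hKdef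
  have hKpos : 0 < K := by
    have h := integral_lt_integral_of_continuousOn_of_le_of_exists_lt
      (f := fun _ : ℝ => (0:ℝ)) (g := fun t => (1 + Real.cos t) ^ p)
      (a := 0) (b := 2 * π) (by positivity)
      continuousOn_const hcont.continuousOn
      (fun x _ => Real.rpow_nonneg (hbase x) p)
      ⟨0, ⟨le_refl _, by positivity⟩, by simp [Real.cos_zero]; positivity⟩
    simpa using h
  set I : ℝ := 1 / (2 * π) * K with hIdef
  have hIpos : 0 < I := by positivity
  set J : ℝ := I ^ (1 / p) with hJdef
  have hJ : 0 < J := Real.rpow_pos_of_pos hIpos _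
  have hJI : J ^ p = I := by
    rw [hJdef, ← Real.rpow_mul hIpos.le, one_div,
      inv_mul_cancel₀ hp0.ne', Real.rpow_one]
  set a : ℝ := α * J ^ (α - 1) with hadef
  set b : ℝ := (1 - α) * J ^ α with hbdef
  have ha : 0 < a := by
    have := Real.rpow_pos_of_pos hJ (α - 1); positivity
  have hb : 0 < b := by
    have := Real.rpow_pos_of_pos hJ α
    have : (0:ℝ) < 1 - α := by linarith
    positivity
  have hJm : J ^ (α - 1) = J ^ α / J := by
    rw [Real.rpow_sub hJ, Real.rpow_one]
  set T : ℝ := a * J + b with hTdef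
  have hT : T = J ^ α := by
    rw [hTdef, hadef, hbdef, hJm]; field_simp; ring
  have hTpos : 0 < T := hT ▸ Real.rpow_pos_of_pos hJ α
  -- tangent line above x^α
  have htang : ∀ x : ℝ, 0 ≤ x → x ^ α ≤ a * x + b := by
    intro x hx
    have h := Real.geom_mean_le_arith_mean2_weighted hα0.le
      (by linarith : (0:ℝ) ≤ 1 - α) (div_nonneg hx hJ.le) zero_le_one
      (by ring : α + (1 - α) = 1)
    rw [Real.one_rpow, mul_one, mul_one, Real.div_rpow hx hJ.le] at h
    have h2 := mul_le_mul_of_nonneg_left h (Real.rpow_pos_of_pos hJ α).le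
    have hJα : (0:ℝ) < J ^ α := Real.rpow_pos_of_pos hJ α
    calc x ^ α = J ^ α * (x ^ α / J ^ α) := by field_simp
      _ ≤ J ^ α * (α * (x / J) + (1 - α)) := h2
      _ = a * x + b := by rw [hadef, hbdef, hJm]; field_simp
  -- pointwise convexity bound
  have key : ∀ x : ℝ, 0 ≤ x →
      (a * x + b) ^ p ≤ T ^ (p - 1) * (a * J ^ (1 - p) * x ^ p + b) ∧
      (x ≠ J → (a * x + b) ^ p < T ^ (p - 1) * (a * J ^ (1 - p) * x ^ p + b)) := by
    intro x hx
    have hw1 : (0:ℝ) < a * J / T := by positivity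
    have hw2 : (0:ℝ) < b / T := by positivity
    have hwsum : a * J / T + b / T = 1 := by field_simp [hTdef]; exact hTdef.symm
    have hu : x * T / J ∈ Set.Ici (0:ℝ) := by
      simp only [Set.mem_Ici]; positivity
    have hv : T ∈ Set.Ici (0:ℝ) := Set.mem_Ici.mpr hTpos.le
    have hcomb : (a * J / T) • (x * T / J) + (b / T) • T = a * x + b := by
      simp only [smul_eq_mul]; field_simp
    have halg : (a * J / T) * (x * T / J) ^ p + (b / T) * T ^ p
        = T ^ (p - 1) * (a * J ^ (1 - p) * x ^ p + b) := by
      have hxT : (x * T / J) ^ p = x ^ p * T ^ p / J ^ p := by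
        rw [Real.div_rpow (by positivity) hJ.le, Real.mul_rpow hx hTpos.le]
      have hTp : T ^ p = T * T ^ (p - 1) := by
        have h := Real.rpow_add hTpos 1 (p - 1)
        rw [Real.rpow_one] at h
        rw [show (1:ℝ) + (p - 1) = p by ring] at h
        exact h
      have hJ1p : J ^ (1 - p) = J / J ^ p := by
        rw [Real.rpow_sub hJ, Real.rpow_one]
      have hJp : (0:ℝ) < J ^ p := Real.rpow_pos_of_pos hJ p
      rw [hxT, hTp, hJ1p]
      field_simp
    constructor
    · have h := (convexOn_rpow hp.le).2 hu hv hw1.le hw2.le hwsum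
      rw [hcomb] at h
      simp only [smul_eq_mul] at h
      calc (a * x + b) ^ p ≤ (a * J / T) * (x * T / J) ^ p + (b / T) * T ^ p := h
        _ = _ := halg
    · intro hxJ
      have hne : x * T / J ≠ T := by
        intro hEq
        apply hxJ
        rw [div_eq_iff hJ.ne'] at hEq
        have h0 : (x - J) * T = 0 := by linarith
        rcases mul_eq_zero.1 h0 with h | h
        · linarith
        · exact absurd h hTpos.ne'
      have h := (strictConvexOn_rpow hp).2 hu hv hne hw1 hw2 hwsum
      rw [hcomb] at h
      simp only [smul_eq_mul] at h
      calc (a * x + b) ^ p < (a * J / T) * (x * T / J) ^ p + (b / T) * T ^ p := h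
        _ = _ := halg
  -- the polynomial
  refine ⟨Polynomial.C b + Polynomial.C a * Polynomial.X, ?_, ?_⟩
  · intro x hx
    have hx0 : (0:ℝ) ≤ x := hx.1
    have h1 : x ^ (p - 1) = (x ^ α) ^ p := by
      rw [← Real.rpow_mul hx0, hαp]
    simp only [Polynomial.eval_add, Polynomial.eval_mul, Polynomial.eval_C,
      Polynomial.eval_X]
    rw [h1]
    have := htang x hx0
    calc (x ^ α) ^ p ≤ (a * x + b) ^ p :=
          Real.rpow_le_rpow (Real.rpow_nonneg hx0 α) this hp0.le
      _ = (b + a * x) ^ p := by ring_nf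
  · simp only [Polynomial.eval_add, Polynomial.eval_mul, Polynomial.eval_C,
      Polynomial.eval_X]
    set c1 : ℝ := T ^ (p - 1) * (a * J ^ (1 - p)) with hc1
    set c2 : ℝ := T ^ (p - 1) * b with hc2
    have hgcont : Continuous fun t : ℝ => (b + a * (1 + Real.cos t)) ^ p :=
      (continuous_const.add (continuous_const.mul
        (continuous_const.add Real.continuous_cos))).rpow_const
        fun x => Or.inr hp0.le
    have hlt : (∫ t in (0:ℝ)..(2 * π), (b + a * (1 + Real.cos t)) ^ p)
        < ∫ t in (0:ℝ)..(2 * π), (c1 * (1 + Real.cos t) ^ p + c2) := by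
      apply integral_lt_integral_of_continuousOn_of_le_of_exists_lt (by positivity)
        hgcont.continuousOn
        (((continuous_const.mul hcont).add continuous_const).continuousOn)
      · intro t _
        have h := (key (1 + Real.cos t) (hbase t)).1
        calc (b + a * (1 + Real.cos t)) ^ p
            = (a * (1 + Real.cos t) + b) ^ p := by ring_nf
          _ ≤ T ^ (p - 1) * (a * J ^ (1 - p) * (1 + Real.cos t) ^ p + b) := h
          _ = c1 * (1 + Real.cos t) ^ p + c2 := by rw [hc1, hc2]; ring
      · -- a point where 1 + cos t ≠ J
        by_cases hJ2 : J = 2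
        · refine ⟨π, ⟨hπ.le, by linarith⟩, ?_⟩
          have h := (key (1 + Real.cos π) (hbase π)).2 (by
            rw [Real.cos_pi, hJ2]; norm_num)
          calc (b + a * (1 + Real.cos π)) ^ p
              = (a * (1 + Real.cos π) + b) ^ p := by ring_nf
            _ < T ^ (p - 1) * (a * J ^ (1 - p) * (1 + Real.cos π) ^ p + b) := h
            _ = c1 * (1 + Real.cos π) ^ p + c2 := by rw [hc1, hc2]; ring
        · refine ⟨0, ⟨le_refl _, by positivity⟩, ?_⟩
          have h := (key (1 + Real.cos 0) (hbase 0)).2 (by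
            rw [Real.cos_zero]; intro hEq; exact hJ2 (by linarith))
          calc (b + a * (1 + Real.cos 0)) ^ p
              = (a * (1 + Real.cos 0) + b) ^ p := by ring_nf
            _ < T ^ (p - 1) * (a * J ^ (1 - p) * (1 + Real.cos 0) ^ p + b) := h
            _ = c1 * (1 + Real.cos 0) ^ p + c2 := by rw [hc1, hc2]; ring
    have hint : (∫ t in (0:ℝ)..(2 * π), (c1 * (1 + Real.cos t) ^ p + c2))
        = c1 * K + c2 * (2 * π) := by
      rw [intervalIntegral.integral_add
        ((hcont.intervalIntegrable _ _).const_mul c1)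
        (intervalIntegrable_const),
        intervalIntegral.integral_const_mul, intervalIntegral.integral_const,
        hKdef, smul_eq_mul, sub_zero]
      try ring
    rw [hint] at hlt
    have hstep : 1 / (2 * π) * (∫ t in (0:ℝ)..(2 * π), (b + a * (1 + Real.cos t)) ^ p)
        < c1 * I + c2 := by
      have h2π : (0:ℝ) < 1 / (2 * π) := by positivity
      have := mul_lt_mul_of_pos_left hlt h2π
      calc 1 / (2 * π) * (∫ t in (0:ℝ)..(2 * π), (b + a * (1 + Real.cos t)) ^ p)
          < 1 / (2 * π) * (c1 * K + c2 * (2 * π)) := this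
        _ = c1 * I + c2 := by rw [hIdef]; field_simp; try ring
    have hfinal : c1 * I + c2 = I ^ ((p - 1) / p) := by
      have h1 : J ^ (1 - p) * I = J := by
        rw [← hJI, ← Real.rpow_add hJ]
        norm_num
      have h2 : c1 * I + c2 = T ^ (p - 1) * T := by
        rw [hc1, hc2, hTdef]
        calc T ^ (p - 1) * (a * J ^ (1 - p)) * I + T ^ (p - 1) * b
            = T ^ (p - 1) * (a * (J ^ (1 - p) * I) + b) := by ring
          _ = T ^ (p - 1) * (a * J + b) := by rw [h1]
      rw [h2]
      have h3 : T ^ (p - 1) * T = T ^ p := by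
        have h := Real.rpow_add hTpos (p - 1) 1
        rw [Real.rpow_one] at h
        rw [show (p - 1) + 1 = p by ring] at h
        exact h.symm
      rw [h3, hT, ← Real.rpow_mul hJ.le, hαp, hJdef, ← Real.rpow_mul hIpos.le]
      congr 1
      field_simp
      try ring
    rw [← hfinal]
    exact hstep
end

section
/- Let p ≥ 1 and n a nonzero integer, and let R_k(t) = ∏_{j=1}^k (1 + cos(n_j t)) be a Riesz product with positive integer frequencies n_1 < ⋯ < n_k. Then |∫_𝕋 R_k(t)^p e^{int} dm(t)| ≤ (2π p deg(R_k)/|n|) ∫_𝕋 R_k^p dm, where deg(R_k) = n_1 + ⋯ + n_k. -/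
open Real intervalIntegral

noncomputable section RieszProductAux

open Complex MeasureTheory

/-- elementary exponential `e^{ils}` -/
noncomputable def rE (l : ℤ) (s : ℝ) : ℂ := Complex.exp (Complex.I * l * s)

lemma rE_cont (l : ℤ) : Continuous (rE l) := by
  unfold rE; fun_prop

lemma rE_add (a b : ℤ) (s : ℝ) : rE a s * rE b s = rE (a + b) s := by
  unfold rE; rw [← Complex.exp_add]; congr 1; push_cast; ring

lemma rE_abs (l : ℤ) (s : ℝ) : ‖rE l s‖ = 1 := by
  unfold rE
  rw [Complex.norm_exp]
  have : (Complex.I * l * s).re = 0 := by simp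
  rw [this, Real.exp_zero]

lemma rE_int (l : ℤ) :
    ∫ s in (0:ℝ)..(2 * π), rE l s = if l = 0 then ((2 * π : ℝ) : ℂ) else 0 := by
  unfold rE
  split_ifs with h
  · simp [h, Complex.ofReal_mul]
  · have hc : (Complex.I * l) ≠ 0 := by
      simp [Complex.I_ne_zero, Int.cast_injective]
      exact_mod_cast h
    have : ∀ s : ℝ, Complex.exp (Complex.I * l * s) = Complex.exp ((Complex.I * l) * s) := by
      intro s; ring_nf
    rw [intervalIntegral.integral_congr (fun s _ => this s)]
    rw [integral_exp_mul_complex hc]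
    have h2 : (Complex.I * l) * ((2 * π : ℝ) : ℂ) = (l : ℂ) * (2 * π * Complex.I) := by
      push_cast; ring
    rw [h2, Complex.exp_int_mul_two_pi_mul_I]
    simp

lemma cnt_lt (N : ℕ) (M : ℕ) (x : ℂ) :
    ∑ j ∈ Finset.range N, (if j < M then x else 0) = (min N M : ℕ) • x := by
  rw [Finset.sum_ite, Finset.sum_const, Finset.sum_const_zero, add_zero]
  congr 2
  have : (Finset.range N).filter (fun j => j < M) = Finset.range (min N M) := by
    ext j; simp only [Finset.mem_filter, Finset.mem_range]; omega
  rw [this, Finset.card_range]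

lemma cnt_ge (N : ℕ) (M : ℕ) (x : ℂ) :
    ∑ j ∈ Finset.range N, (if M ≤ j then x else 0) = ((N - M : ℕ)) • x := by
  rw [Finset.sum_ite, Finset.sum_const, Finset.sum_const_zero, add_zero]
  congr 2
  have : (Finset.range N).filter (fun j => M ≤ j) = Finset.Ico M N := by
    ext j; simp only [Finset.mem_filter, Finset.mem_range, Finset.mem_Ico]; omega
  rw [this, Nat.card_Ico]

lemma key_count (N : ℕ) (m : ℤ) (hm : |m| ≤ (N:ℤ)) (x : ℂ) :
    ∑ j ∈ Finset.range N, ∑ j' ∈ Finset.range N,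
      ((if ((N:ℤ) + j - j' - m = 0) then x else 0)
        - (if ((j:ℤ) - j' - N - m = 0) then x else 0))
      = m * x := by
  have habs := abs_le.mp hm
  have h1 : ∀ j ∈ Finset.range N,
      ∑ j' ∈ Finset.range N, (if ((N:ℤ) + j - j' - m = 0) then x else 0)
        = if (j:ℤ) < m then x else 0 := by
    intro j hj
    rw [Finset.mem_range] at hj
    rcases lt_or_ge (j:ℤ) m with h | h
    · rw [Finset.sum_eq_single_of_mem (((N:ℤ) + j - m).toNat)]
      · rw [if_pos (by omega), if_pos h]
      · rw [Finset.mem_range]; omega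
      · intro b hb hne
        rw [Finset.mem_range] at hb
        rw [if_neg (by omega)]
    · rw [if_neg (by omega), Finset.sum_eq_zero]
      intro b hb
      rw [Finset.mem_range] at hb
      rw [if_neg (by omega)]
  have h2 : ∀ j ∈ Finset.range N,
      ∑ j' ∈ Finset.range N, (if ((j:ℤ) - j' - N - m = 0) then x else 0)
        = if (N:ℤ) + m ≤ j then x else 0 := by
    intro j hj
    rw [Finset.mem_range] at hj
    rcases le_or_gt ((N:ℤ) + m) (j:ℤ) with h | h
    · rw [Finset.sum_eq_single_of_mem (((j:ℤ) - N - m).toNat)]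
      · rw [if_pos (by omega), if_pos h]
      · rw [Finset.mem_range]; omega
      · intro b hb hne
        rw [Finset.mem_range] at hb
        rw [if_neg (by omega)]
    · rw [if_neg (by omega), Finset.sum_eq_zero]
      intro b hb
      rw [Finset.mem_range] at hb
      rw [if_neg (by omega)]
  have hsplit : ∀ j ∈ Finset.range N,
      ∑ j' ∈ Finset.range N,
        ((if ((N:ℤ) + j - j' - m = 0) then x else 0)
          - (if ((j:ℤ) - j' - N - m = 0) then x else 0))
        = (if (j:ℤ) < m then x else 0) - (if (N:ℤ) + m ≤ j then x else 0) := by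
    intro j hj
    rw [Finset.sum_sub_distrib, h1 j hj, h2 j hj]
  rw [Finset.sum_congr rfl hsplit, Finset.sum_sub_distrib]
  rcases le_or_gt 0 m with h | h
  · have e1 : ∀ j ∈ Finset.range N, (if (j:ℤ) < m then x else 0) = (if j < m.toNat then x else 0) := by
      intro j hj; exact if_congr (by omega) rfl rfl
    have e2 : ∀ j ∈ Finset.range N, (if (N:ℤ) + m ≤ (j:ℤ) then x else 0) = (0:ℂ) := by
      intro j hj; rw [Finset.mem_range] at hj; rw [if_neg (by omega)]
    rw [Finset.sum_congr rfl e1, Finset.sum_congr rfl e2, cnt_lt, Finset.sum_const_zero,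
      sub_zero, nsmul_eq_mul]
    have : ((min N m.toNat : ℕ) : ℂ) = (m : ℂ) := by
      have h4 : (((min N m.toNat : ℕ) : ℤ) : ℂ) = ((m : ℤ) : ℂ) := by
        rw [show ((min N m.toNat : ℕ) : ℤ) = m from by omega]
      rw [Int.cast_natCast] at h4
      exact h4
    rw [this]
  · have e1 : ∀ j ∈ Finset.range N, (if (j:ℤ) < m then x else 0) = (0:ℂ) := by
      intro j hj; rw [if_neg (by omega)]
    have e2 : ∀ j ∈ Finset.range N,
        (if (N:ℤ) + m ≤ (j:ℤ) then x else 0) = (if (N+m).toNat ≤ j then x else 0) := by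
      intro j hj; exact if_congr (by omega) rfl rfl
    rw [Finset.sum_congr rfl e1, Finset.sum_congr rfl e2, cnt_ge, Finset.sum_const_zero,
      zero_sub, nsmul_eq_mul]
    have : ((N - (N+m).toNat : ℕ) : ℂ) = (-m : ℂ) := by
      have h4 : (((N - (N+m).toNat : ℕ) : ℤ) : ℂ) = ((-m : ℤ) : ℂ) := by
        rw [show ((N - (N+m).toNat : ℕ) : ℤ) = -m from by omega]
      rw [Int.cast_natCast] at h4
      rw [h4]; push_cast; ring
    rw [this]; ring

/-- the Dirichlet-type sum -/
noncomputable def rD (N : ℕ) (s : ℝ) : ℂ := ∑ j ∈ Finset.range N, rE j s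

/-- the kernel whose Fourier coefficients are `i·m` for `|m| ≤ N` -/
noncomputable def rK (N : ℕ) (s : ℝ) : ℂ :=
  ∑ j ∈ Finset.range N, ∑ j' ∈ Finset.range N,
    Complex.I * (rE ((N:ℤ) + j - j') s - rE ((j:ℤ) - j' - N) s)

lemma rD_cont (N : ℕ) : Continuous (rD N) :=
  continuous_finset_sum _ (fun j _ => rE_cont j)

lemma rK_cont (N : ℕ) : Continuous (rK N) := by
  apply continuous_finset_sum
  intro j _
  apply continuous_finset_sum
  intro j' _
  exact continuous_const.mul ((rE_cont _).sub (rE_cont _))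

lemma rD_conj (N : ℕ) (s : ℝ) :
    (starRingEnd ℂ) (rD N s) = ∑ j' ∈ Finset.range N, rE (-(j':ℤ)) s := by
  unfold rD
  rw [map_sum]
  apply Finset.sum_congr rfl
  intro j' _
  unfold rE
  rw [← Complex.exp_conj]
  congr 1
  simp [Complex.conj_I, Complex.conj_ofReal]
  try ring

lemma rK_eq (N : ℕ) (s : ℝ) :
    rK N s = Complex.I * (rE N s - rE (-(N:ℤ)) s) * (rD N s * (starRingEnd ℂ) (rD N s)) := by
  have hconj := rD_conj N s
  symm
  calc Complex.I * (rE N s - rE (-(N:ℤ)) s) * (rD N s * (starRingEnd ℂ) (rD N s))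
      = ∑ j ∈ Finset.range N, ∑ j' ∈ Finset.range N,
          Complex.I * (rE N s - rE (-(N:ℤ)) s) * (rE j s * rE (-(j':ℤ)) s) := by
        rw [hconj]; unfold rD
        rw [Finset.sum_mul_sum]
        simp only [Finset.mul_sum]
    _ = rK N s := by
        unfold rK
        apply Finset.sum_congr rfl
        intro j _
        apply Finset.sum_congr rfl
        intro j' _
        calc Complex.I * (rE N s - rE (-(N:ℤ)) s) * (rE j s * rE (-(j':ℤ)) s)
            = Complex.I * (rE N s * rE j s * rE (-(j':ℤ)) s
                - rE (-(N:ℤ)) s * rE j s * rE (-(j':ℤ)) s) := by ring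
          _ = Complex.I * (rE ((N:ℤ) + j - j') s - rE ((j:ℤ) - j' - N) s) := by
              rw [rE_add, rE_add, rE_add, rE_add]
              rw [show (N:ℤ) + j + -(j':ℤ) = (N:ℤ) + j - j' from by ring,
                show -(N:ℤ) + j + -(j':ℤ) = (j:ℤ) - j' - N from by ring]

lemma rK_abs_le (N : ℕ) (s : ℝ) :
    ‖rK N s‖ ≤ 2 * Complex.normSq (rD N s) := by
  rw [rK_eq]
  rw [norm_mul, norm_mul]
  have h1 : ‖Complex.I‖ = 1 := Complex.norm_I
  have h2 : ‖rE N s - rE (-(N:ℤ)) s‖ ≤ 2 := by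
    calc ‖rE N s - rE (-(N:ℤ)) s‖
        ≤ ‖rE N s‖ + ‖rE (-(N:ℤ)) s‖ := by
          exact norm_sub_le _ _
      _ = 2 := by rw [rE_abs, rE_abs]; norm_num
  have h3 : ‖rD N s * (starRingEnd ℂ) (rD N s)‖ = Complex.normSq (rD N s) := by
    rw [Complex.mul_conj]
    simp [Complex.normSq_nonneg, abs_of_nonneg]
  rw [h3, h1, one_mul]
  have := Complex.normSq_nonneg (rD N s)
  nlinarith

lemma rE_sub_arg (m : ℤ) (t s : ℝ) : rE m (t - s) = rE m t * rE (-m) s := by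
  unfold rE; rw [← Complex.exp_add]; congr 1; push_cast; ring

lemma rK_int (N : ℕ) (m : ℤ) (hm : |m| ≤ (N:ℤ)) :
    ∫ s in (0:ℝ)..(2 * π), rE (-m) s * rK N s = 2 * π * Complex.I * m := by
  have hpt : ∀ s : ℝ, rE (-m) s * rK N s
      = ∑ j ∈ Finset.range N, ∑ j' ∈ Finset.range N,
          (Complex.I * rE ((N:ℤ) + j - j' - m) s - Complex.I * rE ((j:ℤ) - j' - N - m) s) := by
    intro s
    unfold rK
    rw [Finset.mul_sum]
    apply Finset.sum_congr rfl
    intro j _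
    rw [Finset.mul_sum]
    apply Finset.sum_congr rfl
    intro j' _
    calc rE (-m) s * (Complex.I * (rE ((N:ℤ) + j - j') s - rE ((j:ℤ) - j' - N) s))
        = Complex.I * (rE (-m) s * rE ((N:ℤ) + j - j') s)
          - Complex.I * (rE (-m) s * rE ((j:ℤ) - j' - N) s) := by ring
      _ = Complex.I * rE ((N:ℤ) + j - j' - m) s - Complex.I * rE ((j:ℤ) - j' - N - m) s := by
          rw [rE_add, rE_add,
            show -m + ((N:ℤ) + j - j') = (N:ℤ) + j - j' - m from by ring,
            show -m + ((j:ℤ) - j' - N) = (j:ℤ) - j' - N - m from by ring]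
  rw [intervalIntegral.integral_congr (fun s _ => hpt s)]
  have hii : ∀ (a b : ℤ), IntervalIntegrable
      (fun s => Complex.I * rE a s - Complex.I * rE b s) volume 0 (2*π) :=
    fun a b => ((continuous_const.mul (rE_cont a)).sub
      (continuous_const.mul (rE_cont b))).intervalIntegrable _ _
  rw [intervalIntegral.integral_finset_sum (f := fun (j : ℕ) (s : ℝ) => ∑ j' ∈ Finset.range N,
      (Complex.I * rE ((N:ℤ) + j - j' - m) s - Complex.I * rE ((j:ℤ) - j' - N - m) s)) (fun j _ =>
    (continuous_finset_sum _ (fun j' _ => ((continuous_const.mul (rE_cont _)).sub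
      (continuous_const.mul (rE_cont _))))).intervalIntegrable _ _)]
  have hj : ∀ j ∈ Finset.range N,
      (∫ s in (0:ℝ)..(2*π), ∑ j' ∈ Finset.range N,
        (Complex.I * rE ((N:ℤ) + j - j' - m) s - Complex.I * rE ((j:ℤ) - j' - N - m) s))
      = ∑ j' ∈ Finset.range N,
          ((if ((N:ℤ) + j - j' - m = 0) then Complex.I * ((2*π:ℝ):ℂ) else 0)
            - (if ((j:ℤ) - j' - N - m = 0) then Complex.I * ((2*π:ℝ):ℂ) else 0)) := by
    intro j _
    rw [intervalIntegral.integral_finset_sum (fun j' _ => hii _ _)]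
    apply Finset.sum_congr rfl
    intro j' _
    rw [intervalIntegral.integral_sub (f := fun s => Complex.I * rE ((N:ℤ) + j - j' - m) s)
      (g := fun s => Complex.I * rE ((j:ℤ) - j' - N - m) s)
      ((continuous_const.mul (rE_cont _)).intervalIntegrable _ _)
      ((continuous_const.mul (rE_cont _)).intervalIntegrable _ _),
      intervalIntegral.integral_const_mul, intervalIntegral.integral_const_mul, rE_int, rE_int]
    rw [mul_ite, mul_zero, mul_ite, mul_zero]
  rw [Finset.sum_congr rfl hj]
  have : ∀ j ∈ Finset.range N, ∑ j' ∈ Finset.range N,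
          ((if ((N:ℤ) + j - j' - m = 0) then Complex.I * ((2*π:ℝ):ℂ) else 0)
            - (if ((j:ℤ) - j' - N - m = 0) then Complex.I * ((2*π:ℝ):ℂ) else 0))
      = ∑ j' ∈ Finset.range N,
          (Complex.I * ((if ((N:ℤ) + j - j' - m = 0) then ((2*π:ℝ):ℂ) else 0)
            - (if ((j:ℤ) - j' - N - m = 0) then ((2*π:ℝ):ℂ) else 0))) := by
    intro j _
    apply Finset.sum_congr rfl
    intro j' _
    rw [mul_sub, mul_ite, mul_zero, mul_ite, mul_zero]
  rw [Finset.sum_congr rfl this]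
  simp only [← Finset.mul_sum]
  rw [key_count N m hm]
  push_cast
  ring

lemma rDsq_int (N : ℕ) :
    ∫ s in (0:ℝ)..(2 * π), (Complex.normSq (rD N s) : ℝ) = 2 * π * N := by
  have hpt : ∀ s : ℝ, ((Complex.normSq (rD N s) : ℝ) : ℂ)
      = ∑ j ∈ Finset.range N, ∑ j' ∈ Finset.range N, rE ((j:ℤ) + -(j':ℤ)) s := by
    intro s
    rw [← Complex.mul_conj, rD_conj]
    unfold rD
    rw [Finset.sum_mul_sum]
    apply Finset.sum_congr rfl
    intro j _
    apply Finset.sum_congr rfl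
    intro j' _
    exact rE_add _ _ _
  have h2 : (∫ s in (0:ℝ)..(2 * π), ((Complex.normSq (rD N s) : ℝ) : ℂ))
      = ((2 * π * N : ℝ) : ℂ) := by
    rw [intervalIntegral.integral_congr (fun s _ => hpt s)]
    rw [intervalIntegral.integral_finset_sum (fun j _ =>
      (continuous_finset_sum _ (fun j' _ => rE_cont _)).intervalIntegrable _ _)]
    have : ∀ j ∈ Finset.range N,
        (∫ s in (0:ℝ)..(2*π), ∑ j' ∈ Finset.range N, rE ((j:ℤ) + -(j':ℤ)) s)
        = ((2*π:ℝ):ℂ) := by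
      intro j hj
      rw [intervalIntegral.integral_finset_sum (fun j' _ => (rE_cont _).intervalIntegrable _ _)]
      have : ∀ j' ∈ Finset.range N, (∫ s in (0:ℝ)..(2*π), rE ((j:ℤ) + -(j':ℤ)) s)
          = if j' = j then ((2*π:ℝ):ℂ) else 0 := by
        intro j' _
        rw [rE_int]
        by_cases h : j' = j
        · rw [if_pos (by omega), if_pos h]
        · rw [if_neg (by omega), if_neg h]
      rw [Finset.sum_congr rfl this, Finset.sum_ite_eq' (Finset.range N) j, if_pos hj]
    rw [Finset.sum_congr rfl this, Finset.sum_const, Finset.card_range, nsmul_eq_mul]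
    push_cast
    ring
  apply Complex.ofReal_injective
  rw [← intervalIntegral.integral_ofReal]
  exact h2

lemma rE_zero (t : ℝ) : rE 0 t = 1 := by unfold rE; simp

lemma one_add_cos_eq (n : ℕ) (t : ℝ) :
    ((1 + Real.cos ((n:ℝ) * t) : ℝ) : ℂ)
      = 1 + 1/2 * rE (n:ℤ) t + 1/2 * rE (-(n:ℤ)) t := by
  have h1 : rE (n:ℤ) t = Complex.cos (((n:ℝ) * t : ℝ) : ℂ) + Complex.sin (((n:ℝ) * t : ℝ) : ℂ) * Complex.I := by
    unfold rE
    rw [show Complex.I * ((n:ℤ):ℂ) * (t:ℝ) = (((n:ℝ) * t : ℝ) : ℂ) * Complex.I from by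
      push_cast; ring]
    exact Complex.exp_mul_I _
  have h2 : rE (-(n:ℤ)) t = Complex.cos (((n:ℝ) * t : ℝ) : ℂ) - Complex.sin (((n:ℝ) * t : ℝ) : ℂ) * Complex.I := by
    unfold rE
    rw [show Complex.I * (Int.cast (-(n:ℤ)) : ℂ) * (t:ℝ) = ((-((n:ℝ) * t) : ℝ) : ℂ) * Complex.I from by
      push_cast; ring]
    rw [Complex.exp_mul_I, Complex.ofReal_neg, Complex.cos_neg, Complex.sin_neg]
    ring
  rw [Complex.ofReal_add, Complex.ofReal_one, Complex.ofReal_cos, h1, h2]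
  ring

lemma riesz_rep (nf : ℕ → ℕ) (k : ℕ) :
    ∃ a : ℤ → ℂ,
      (∀ m : ℤ, a m ≠ 0 →
        m ∈ Finset.Icc (-(∑ j ∈ Finset.range k, (nf j : ℤ))) (∑ j ∈ Finset.range k, (nf j : ℤ))) ∧
      ∀ t : ℝ, ((∏ j ∈ Finset.range k, (1 + Real.cos ((nf j : ℝ) * t)) : ℝ) : ℂ)
        = ∑ m ∈ Finset.Icc (-(∑ j ∈ Finset.range k, (nf j : ℤ)))
            (∑ j ∈ Finset.range k, (nf j : ℤ)), a m * rE m t := by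
  induction k with
  | zero =>
    refine ⟨fun m => if m = 0 then 1 else 0, ?_, ?_⟩
    · intro m hm
      simp only [Finset.range_zero, Finset.sum_empty, neg_zero]
      by_cases h : m = 0
      · simp [h]
      · exfalso; apply hm; simp only; rw [if_neg h]
    · intro t
      simp only [Finset.range_zero, Finset.sum_empty, neg_zero, Finset.prod_empty,
        Finset.Icc_self, Finset.sum_singleton, rE_zero, Complex.ofReal_one]
      simp
  | succ k ih =>
    obtain ⟨a, ha, hrep⟩ := ih
    have hN0 : 0 ≤ ∑ j ∈ Finset.range k, (nf j : ℤ) :=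
      Finset.sum_nonneg (fun j _ => Int.ofNat_nonneg _)
    set N : ℤ := ∑ j ∈ Finset.range k, (nf j : ℤ) with hN
    set n : ℤ := (nf k : ℤ) with hn
    have hn0 : 0 ≤ n := Int.ofNat_nonneg _
    have hN' : ∑ j ∈ Finset.range (k+1), (nf j : ℤ) = N + n := by
      rw [Finset.sum_range_succ]
    have hz : ∀ z : ℤ, z ∉ Finset.Icc (-N) N → a z = 0 := by
      intro z hzmem
      by_contra h
      exact hzmem (ha z h)
    refine ⟨fun m => a m + 1/2 * a (m - n) + 1/2 * a (m + n), ?_, ?_⟩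
    · intro m hm
      rw [hN']
      by_contra hc
      rw [Finset.mem_Icc] at hc
      have h1 : a m = 0 := hz m (by simp only [Finset.mem_Icc]; omega)
      have h2 : a (m - n) = 0 := hz _ (by simp only [Finset.mem_Icc]; omega)
      have h3 : a (m + n) = 0 := hz _ (by simp only [Finset.mem_Icc]; omega)
      apply hm
      show a m + 1/2 * a (m - n) + 1/2 * a (m + n) = 0
      rw [h1, h2, h3]; ring
    · intro t
      rw [hN', Finset.prod_range_succ, Complex.ofReal_mul, hrep t, one_add_cos_eq, ← hn]
      have hsub1 : Finset.Icc (-N) N ⊆ Finset.Icc (-(N+n)) (N+n) := by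
        intro x hx; simp only [Finset.mem_Icc] at *; omega
      have hT0 : ∑ m ∈ Finset.Icc (-(N+n)) (N+n), a m * rE m t
          = ∑ m ∈ Finset.Icc (-N) N, a m * rE m t := by
        symm
        apply Finset.sum_subset hsub1
        intro x _ hx
        rw [hz x hx, zero_mul]
      have hsub2 : Finset.Icc (-N + n) (N + n) ⊆ Finset.Icc (-(N+n)) (N+n) := by
        intro x hx; simp only [Finset.mem_Icc] at *; omega
      have hT1 : ∑ m ∈ Finset.Icc (-(N+n)) (N+n), (1/2 * a (m - n)) * rE m t
          = (∑ m ∈ Finset.Icc (-N) N, a m * rE m t) * (1/2 * rE n t) := by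
        rw [← Finset.sum_subset hsub2 (by
          intro x _ hx
          have : a (x - n) = 0 := hz _ (by simp only [Finset.mem_Icc] at *; omega)
          rw [this]; ring)]
        rw [← Finset.map_add_right_Icc (-N) N n, Finset.sum_map]
        rw [Finset.sum_mul]
        apply Finset.sum_congr rfl
        intro x _
        simp only [addRightEmbedding_apply]
        rw [add_sub_cancel_right, ← rE_add]
        ring
      have hsub3 : Finset.Icc (-N + -n) (N + -n) ⊆ Finset.Icc (-(N+n)) (N+n) := by
        intro x hx; simp only [Finset.mem_Icc] at *; omega
      have hT2 : ∑ m ∈ Finset.Icc (-(N+n)) (N+n), (1/2 * a (m + n)) * rE m t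
          = (∑ m ∈ Finset.Icc (-N) N, a m * rE m t) * (1/2 * rE (-n) t) := by
        rw [← Finset.sum_subset hsub3 (by
          intro x _ hx
          have : a (x + n) = 0 := hz _ (by simp only [Finset.mem_Icc] at *; omega)
          rw [this]; ring)]
        rw [← Finset.map_add_right_Icc (-N) N (-n), Finset.sum_map]
        rw [Finset.sum_mul]
        apply Finset.sum_congr rfl
        intro x _
        simp only [addRightEmbedding_apply]
        rw [show x + -n + n = x from by ring, ← rE_add]
        ring
      calc (∑ m ∈ Finset.Icc (-N) N, a m * rE m t) * (1 + 1/2 * rE n t + 1/2 * rE (-n) t)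
          = (∑ m ∈ Finset.Icc (-N) N, a m * rE m t)
            + (∑ m ∈ Finset.Icc (-N) N, a m * rE m t) * (1/2 * rE n t)
            + (∑ m ∈ Finset.Icc (-N) N, a m * rE m t) * (1/2 * rE (-n) t) := by ring
        _ = ∑ m ∈ Finset.Icc (-(N+n)) (N+n),
              (a m + 1/2 * a (m - n) + 1/2 * a (m + n)) * rE m t := by
            rw [← hT1, ← hT2, ← hT0]
            simp only [add_mul]
            rw [Finset.sum_add_distrib, Finset.sum_add_distrib]

/-- The Riesz product -/
noncomputable def rR (nf : ℕ → ℕ) (k : ℕ) (t : ℝ) : ℝ :=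
  ∏ j ∈ Finset.range k, (1 + Real.cos ((nf j : ℝ) * t))

lemma rR_cont (nf : ℕ → ℕ) (k : ℕ) : Continuous (rR nf k) := by
  unfold rR
  apply continuous_finset_prod
  intro j _
  fun_prop

lemma rR_nonneg (nf : ℕ → ℕ) (k : ℕ) (t : ℝ) : 0 ≤ rR nf k t := by
  unfold rR
  apply Finset.prod_nonneg
  intro j _
  have := Real.neg_one_le_cos ((nf j : ℝ) * t)
  linarith

lemma rR_periodic (nf : ℕ → ℕ) (k : ℕ) : Function.Periodic (rR nf k) (2 * π) := by
  intro t
  unfold rR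
  apply Finset.prod_congr rfl
  intro j _
  rw [show (nf j : ℝ) * (t + 2 * π) = (nf j : ℝ) * t + (nf j : ℤ) * (2 * π) from by
    push_cast; ring]
  rw [Real.cos_add_int_mul_two_pi]

lemma rR_hasDeriv (nf : ℕ → ℕ) (k : ℕ) (t : ℝ) :
    HasDerivAt (rR nf k) (deriv (rR nf k) t) t := by
  have h : ∀ t : ℝ, DifferentiableAt ℝ (rR nf k) t := by
    intro t
    have : ∀ j ∈ Finset.range k, HasDerivAt (fun u : ℝ => 1 + Real.cos ((nf j : ℝ) * u))
        (-Real.sin ((nf j : ℝ) * t) * (nf j : ℝ)) t := by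
      intro j _
      have h1 : HasDerivAt (fun u : ℝ => (nf j : ℝ) * u) ((nf j : ℝ)) t := by
        simpa using (hasDerivAt_id t).const_mul ((nf j : ℝ))
      exact (h1.cos).const_add 1
    exact (HasDerivAt.fun_finsetProd this).differentiableAt
  exact (h t).hasDerivAt

/-- derivative in terms of the Fourier representation -/
lemma rR_deriv_rep (nf : ℕ → ℕ) (k : ℕ) :
    ∃ a : ℤ → ℂ,
      (∀ t : ℝ, ((rR nf k t : ℝ) : ℂ)
          = ∑ m ∈ Finset.Icc (-((∑ j ∈ Finset.range k, nf j : ℕ) : ℤ))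
              ((∑ j ∈ Finset.range k, nf j : ℕ) : ℤ), a m * rE m t) ∧
      (∀ t : ℝ, ((deriv (rR nf k) t : ℝ) : ℂ)
          = ∑ m ∈ Finset.Icc (-((∑ j ∈ Finset.range k, nf j : ℕ) : ℤ))
              ((∑ j ∈ Finset.range k, nf j : ℕ) : ℤ), a m * (rE m t * (Complex.I * m))) := by
  obtain ⟨a, _, hrep⟩ := riesz_rep nf k
  have hcast : (∑ j ∈ Finset.range k, (nf j : ℤ)) = ((∑ j ∈ Finset.range k, nf j : ℕ) : ℤ) := by
    push_cast; ring
  rw [hcast] at hrep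
  refine ⟨a, fun t => hrep t, fun t => ?_⟩
  set I2 : Finset ℤ := Finset.Icc (-((∑ j ∈ Finset.range k, nf j : ℕ) : ℤ))
    ((∑ j ∈ Finset.range k, nf j : ℕ) : ℤ) with hI2
  have hS : HasDerivAt (fun u : ℝ => ∑ m ∈ I2, a m * rE m u)
      (∑ m ∈ I2, a m * (rE m t * (Complex.I * m))) t := by
    apply HasDerivAt.fun_sum
    intro m _
    have h0 : HasDerivAt (fun u : ℝ => Complex.I * (m:ℂ) * (u:ℝ)) (Complex.I * (m:ℂ)) t := by
      simpa using (Complex.ofRealCLM.hasDerivAt (x := t)).const_mul (Complex.I * (m:ℂ))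
    have h1 : HasDerivAt (fun u : ℝ => rE m u) (rE m t * (Complex.I * m)) t := by
      have := h0.cexp
      simpa [rE] using this
    exact h1.const_mul (a m)
  have hRc : HasDerivAt (fun u : ℝ => ((rR nf k u : ℝ) : ℂ)) ((deriv (rR nf k) t : ℝ) : ℂ) t :=
    (rR_hasDeriv nf k t).ofReal_comp
  have heq : (fun u : ℝ => ((rR nf k u : ℝ) : ℂ)) = fun u : ℝ => ∑ m ∈ I2, a m * rE m u := by
    funext u; exact hrep u
  rw [heq] at hRc
  exact hRc.unique hS

lemma rR_deriv_cont (nf : ℕ → ℕ) (k : ℕ) : Continuous (deriv (rR nf k)) := by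
  obtain ⟨a, _, hd⟩ := rR_deriv_rep nf k
  have : deriv (rR nf k) = fun t =>
      (∑ m ∈ Finset.Icc (-((∑ j ∈ Finset.range k, nf j : ℕ) : ℤ))
        ((∑ j ∈ Finset.range k, nf j : ℕ) : ℤ), a m * (rE m t * (Complex.I * m))).re := by
    funext t
    rw [← hd t, Complex.ofReal_re]
  rw [this]
  apply Complex.continuous_re.comp
  apply continuous_finset_sum
  intro m _
  exact continuous_const.mul ((rE_cont m).mul continuous_const)

lemma rR_conv (nf : ℕ → ℕ) (k : ℕ) (t : ℝ) :
    ∫ s in (0:ℝ)..(2 * π), ((rR nf k (t - s) : ℝ) : ℂ) * rK (∑ j ∈ Finset.range k, nf j) s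
      = ((2 * π : ℝ) : ℂ) * ((deriv (rR nf k) t : ℝ) : ℂ) := by
  obtain ⟨a, hrep, hd⟩ := rR_deriv_rep nf k
  set N : ℕ := ∑ j ∈ Finset.range k, nf j with hN
  have hpt : ∀ s : ℝ, ((rR nf k (t - s) : ℝ) : ℂ) * rK N s
      = ∑ m ∈ Finset.Icc (-(N:ℤ)) (N:ℤ), (a m * rE m t) * (rE (-m) s * rK N s) := by
    intro s
    rw [hrep (t - s), Finset.sum_mul]
    apply Finset.sum_congr rfl
    intro m _
    rw [rE_sub_arg]
    ring
  rw [intervalIntegral.integral_congr (fun s _ => hpt s)]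
  rw [intervalIntegral.integral_finset_sum
    (f := fun m s => (a m * rE m t) * (rE (-m) s * rK N s)) (fun m _ =>
    (continuous_const.mul ((rE_cont (-m)).mul (rK_cont N))).intervalIntegrable _ _)]
  have hterm : ∀ m ∈ Finset.Icc (-(N:ℤ)) (N:ℤ),
      (∫ s in (0:ℝ)..(2 * π), (a m * rE m t) * (rE (-m) s * rK N s))
        = (a m * rE m t) * (2 * π * Complex.I * m) := by
    intro m hm
    rw [intervalIntegral.integral_const_mul, rK_int N m]
    rw [Finset.mem_Icc] at hm
    exact abs_le.mpr hm
  rw [Finset.sum_congr rfl hterm, hd t, Finset.mul_sum]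
  apply Finset.sum_congr rfl
  intro m _
  push_cast
  ring

lemma rR_deriv_bound (nf : ℕ → ℕ) (k : ℕ) (t : ℝ) :
    2 * π * |deriv (rR nf k) t|
      ≤ ∫ s in (0:ℝ)..(2 * π),
          rR nf k (t - s) * (2 * Complex.normSq (rD (∑ j ∈ Finset.range k, nf j) s)) := by
  set N : ℕ := ∑ j ∈ Finset.range k, nf j with hN
  have h0 : (0:ℝ) ≤ 2 * π := by positivity
  have h1 : 2 * π * |deriv (rR nf k) t|
      = ‖((2 * π : ℝ) : ℂ) * ((deriv (rR nf k) t : ℝ) : ℂ)‖ := by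
    rw [norm_mul, Complex.norm_real, Complex.norm_real]
    rw [Real.norm_eq_abs, Real.norm_eq_abs, _root_.abs_of_nonneg h0]
  rw [h1, ← rR_conv nf k t]
  calc ‖∫ s in (0:ℝ)..(2 * π), ((rR nf k (t - s) : ℝ) : ℂ) * rK N s‖
      ≤ ∫ s in (0:ℝ)..(2 * π), ‖((rR nf k (t - s) : ℝ) : ℂ) * rK N s‖ :=
        intervalIntegral.norm_integral_le_integral_norm h0
    _ ≤ ∫ s in (0:ℝ)..(2 * π), rR nf k (t - s) * (2 * Complex.normSq (rD N s)) := by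
        apply intervalIntegral.integral_mono_on h0
        · apply Continuous.intervalIntegrable
          apply Continuous.norm
          exact (Complex.continuous_ofReal.comp
            ((rR_cont nf k).comp (continuous_const.sub continuous_id))).mul (rK_cont N)
        · apply Continuous.intervalIntegrable
          apply Continuous.mul
          · exact (rR_cont nf k).comp (continuous_const.sub continuous_id)
          · exact continuous_const.mul (Complex.continuous_normSq.comp (rD_cont N))
        · intro s _
          rw [norm_mul, Complex.norm_real, Real.norm_eq_abs,
            _root_.abs_of_nonneg (rR_nonneg nf k _)]
          exact mul_le_mul_of_nonneg_left (rK_abs_le N s) (rR_nonneg nf k _)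

lemma young_pt (p a b : ℝ) (hp : 1 ≤ p) (ha : 0 ≤ a) (hb : 0 ≤ b) :
    a ^ (p - 1) * b ≤ (p - 1) / p * a ^ p + 1 / p * b ^ p := by
  have hp0 : 0 < p := lt_of_lt_of_le one_pos hp
  have h := Real.geom_mean_le_arith_mean2_weighted
    (w₁ := (p-1)/p) (w₂ := 1/p) (p₁ := a^p) (p₂ := b^p)
    (div_nonneg (by linarith) hp0.le) (by positivity)
    (Real.rpow_nonneg ha p) (Real.rpow_nonneg hb p)
    (by field_simp; ring)
  calc a ^ (p - 1) * b = (a ^ p) ^ ((p - 1) / p) * (b ^ p) ^ (1 / p) := by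
        rw [← Real.rpow_mul ha, ← Real.rpow_mul hb]
        rw [show p * ((p - 1) / p) = p - 1 from by field_simp,
          show p * (1 / p) = 1 from by field_simp, Real.rpow_one]
    _ ≤ (p - 1) / p * a ^ p + 1 / p * b ^ p := h

lemma core_est (p : ℝ) (hp : 1 ≤ p) (nf : ℕ → ℕ) (k : ℕ) :
    ∫ t in (0:ℝ)..(2 * π), (rR nf k t) ^ (p - 1) * |deriv (rR nf k) t|
      ≤ 2 * (∑ j ∈ Finset.range k, nf j : ℕ)
          * ∫ t in (0:ℝ)..(2 * π), (rR nf k t) ^ p := by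
  set N : ℕ := ∑ j ∈ Finset.range k, nf j with hN
  set R : ℝ → ℝ := rR nf k with hR
  set M : ℝ → ℝ := fun s => 2 * Complex.normSq (rD N s) with hM
  set A : ℝ := ∫ t in (0:ℝ)..(2 * π), R t ^ p with hA
  have hp0 : 0 < p := lt_of_lt_of_le one_pos hp
  have h2π : (0:ℝ) < 2 * π := by positivity
  have hMcont : Continuous M := continuous_const.mul (Complex.continuous_normSq.comp (rD_cont N))
  have hMnn : ∀ s, 0 ≤ M s := fun s => by
    have := Complex.normSq_nonneg (rD N s)
    simp only [hM]
    linarith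
  have hIM : ∫ s in (0:ℝ)..(2 * π), M s = 4 * π * N := by
    rw [hM]
    rw [intervalIntegral.integral_const_mul, rDsq_int]
    ring
  have hRcont : Continuous R := rR_cont nf k
  have hRnn : ∀ t, 0 ≤ R t := rR_nonneg nf k
  have hxp : Continuous (fun x : ℝ => x ^ p) := Real.continuous_rpow_const (by linarith)
  have hxq : Continuous (fun x : ℝ => x ^ (p-1)) := Real.continuous_rpow_const (by linarith)
  have hRpc : Continuous (fun t => R t ^ p) := hxp.comp hRcont
  have hRqc : Continuous (fun t => R t ^ (p-1)) := hxq.comp hRcont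
  have hApos : 0 ≤ A := by
    rw [hA]
    apply intervalIntegral.integral_nonneg h2π.le
    intro t _
    exact Real.rpow_nonneg (hRnn t) p
  -- the Fubini setup
  set F : ℝ → ℝ → ℝ := fun t s => R (t - s) ^ p * M s with hF
  have hFcont : Continuous (Function.uncurry F) := by
    apply Continuous.mul
    · exact hxp.comp (hRcont.comp (continuous_fst.sub continuous_snd))
    · exact hMcont.comp continuous_snd
  set μ : Measure ℝ := volume.restrict (Set.Ioc (0:ℝ) (2 * π)) with hμ
  have hprod : Integrable (Function.uncurry F) (μ.prod μ) := by
    rw [hμ, Measure.prod_restrict]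
    have h1 : IntegrableOn (Function.uncurry F)
        ((Set.Icc (0:ℝ) (2*π)) ×ˢ (Set.Icc (0:ℝ) (2*π))) (volume.prod volume) := by
      rw [← Measure.volume_eq_prod]
      exact hFcont.continuousOn.integrableOn_compact (isCompact_Icc.prod isCompact_Icc)
    exact (h1.mono_set (Set.prod_mono Set.Ioc_subset_Icc_self Set.Ioc_subset_Icc_self))
  have hVint : Integrable (fun t => ∫ s, F t s ∂μ) μ := hprod.integral_prod_left
  have hswap : ∫ t, (∫ s, F t s ∂μ) ∂μ = ∫ s, (∫ t, F t s ∂μ) ∂μ :=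
    integral_integral_swap hprod
  -- per-slice integrability of F in s
  have hFs : ∀ t, IntervalIntegrable (fun s => F t s) volume 0 (2 * π) := by
    intro t
    apply Continuous.intervalIntegrable
    exact (hxp.comp (hRcont.comp (continuous_const.sub continuous_id))).mul hMcont
  -- periodic shift
  have hshift : ∀ s : ℝ, ∫ t in (0:ℝ)..(2 * π), R (t - s) ^ p = A := by
    intro s
    rw [intervalIntegral.integral_comp_sub_right (fun u => R u ^ p) s]
    have hper : Function.Periodic (fun t => R t ^ p) (2 * π) := by
      intro u
      exact congrArg (fun x => x ^ p) (rR_periodic nf k u)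
    have h := hper.intervalIntegral_add_eq (0 - s) 0
    rw [show (0:ℝ) - s + 2 * π = 2 * π - s from by ring, zero_add] at h
    exact h
  -- pointwise bound
  have claim1 : ∀ t, R t ^ (p - 1) * |deriv R t|
      ≤ (1 / (2 * π)) * ∫ s in (0:ℝ)..(2 * π),
          ((p - 1) / p * R t ^ p + 1 / p * R (t - s) ^ p) * M s := by
    intro t
    have hd' : 2 * π * |deriv R t| ≤ ∫ s in (0:ℝ)..(2 * π), R (t - s) * M s :=
      rR_deriv_bound nf k t
    have step1 : R t ^ (p - 1) * |deriv R t|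
        ≤ R t ^ (p - 1) * ((1 / (2 * π)) * ∫ s in (0:ℝ)..(2 * π), R (t - s) * M s) := by
      apply mul_le_mul_of_nonneg_left _ (Real.rpow_nonneg (hRnn t) _)
      calc |deriv R t| = (1 / (2 * π)) * (2 * π * |deriv R t|) := by field_simp
        _ ≤ (1 / (2 * π)) * ∫ s in (0:ℝ)..(2 * π), R (t - s) * M s :=
            mul_le_mul_of_nonneg_left hd' (by positivity)
    have step2 : R t ^ (p - 1) * ((1 / (2 * π)) * ∫ s in (0:ℝ)..(2 * π), R (t - s) * M s)
        = (1 / (2 * π)) * ∫ s in (0:ℝ)..(2 * π), R t ^ (p - 1) * (R (t - s) * M s) := by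
      rw [intervalIntegral.integral_const_mul]
      ring
    have step3 : (∫ s in (0:ℝ)..(2 * π), R t ^ (p - 1) * (R (t - s) * M s))
        ≤ ∫ s in (0:ℝ)..(2 * π), ((p - 1) / p * R t ^ p + 1 / p * R (t - s) ^ p) * M s := by
      apply intervalIntegral.integral_mono_on h2π.le
      · apply Continuous.intervalIntegrable
        exact continuous_const.mul
          (((hRcont.comp (continuous_const.sub continuous_id)).mul hMcont))
      · apply Continuous.intervalIntegrable
        apply Continuous.mul _ hMcont
        exact (continuous_const.mul continuous_const).add
          (continuous_const.mul (hxp.comp (hRcont.comp (continuous_const.sub continuous_id))))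
      · intro s _
        rw [← mul_assoc]
        apply mul_le_mul_of_nonneg_right _ (hMnn s)
        exact young_pt p (R t) (R (t - s)) hp (hRnn t) (hRnn _)
    calc R t ^ (p - 1) * |deriv R t|
        ≤ (1 / (2 * π)) * ∫ s in (0:ℝ)..(2 * π), R t ^ (p - 1) * (R (t - s) * M s) := by
          rw [← step2]; exact step1
      _ ≤ (1 / (2 * π)) * ∫ s in (0:ℝ)..(2 * π),
            ((p - 1) / p * R t ^ p + 1 / p * R (t - s) ^ p) * M s := by
          apply mul_le_mul_of_nonneg_left step3 (by positivity)
  -- rewrite the right-hand side of claim1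
  set V : ℝ → ℝ := fun t => ∫ s in (0:ℝ)..(2 * π), F t s with hV
  have hVeq' : V = fun t => ∫ s, F t s ∂μ :=
    funext fun t => intervalIntegral.integral_of_le h2π.le
  have hbeq : ∀ t, (1 / (2 * π)) * ∫ s in (0:ℝ)..(2 * π),
        ((p - 1) / p * R t ^ p + 1 / p * R (t - s) ^ p) * M s
      = ((p - 1) / p * (1 / (2 * π)) * (4 * π * N)) * R t ^ p
          + ((1 / p) * (1 / (2 * π))) * V t := by
    intro t
    rw [intervalIntegral.integral_congr
      (g := fun s => ((p - 1) / p * R t ^ p) * M s + (1 / p) * (F t s))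
      (fun s _ => by simp only [hF]; ring)]
    rw [intervalIntegral.integral_add (f := fun s => ((p - 1) / p * R t ^ p) * M s)
      ((continuous_const.mul hMcont).intervalIntegrable _ _)
      ((hFs t).const_mul _)]
    have e1 : ∫ s in (0:ℝ)..(2 * π), ((p - 1) / p * R t ^ p) * M s
        = ((p - 1) / p * R t ^ p) * (4 * π * N) := by
      rw [intervalIntegral.integral_const_mul, hIM]
    have e2 : ∫ s in (0:ℝ)..(2 * π), (1 / p) * F t s = (1 / p) * V t := by
      rw [intervalIntegral.integral_const_mul, hV]
    rw [e1, e2]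
    ring
  have hVii : IntervalIntegrable V volume 0 (2 * π) := by
    rw [intervalIntegrable_iff_integrableOn_Ioc_of_le h2π.le, hVeq']
    exact hVint
  have hVtot : ∫ t in (0:ℝ)..(2 * π), V t = A * (4 * π * N) := by
    have hinner : ∀ s : ℝ, ∫ t, F t s ∂μ = A * M s := by
      intro s
      rw [← intervalIntegral.integral_of_le h2π.le]
      calc (∫ t in (0:ℝ)..(2 * π), F t s)
          = (∫ t in (0:ℝ)..(2 * π), R (t - s) ^ p) * M s := by
            rw [← intervalIntegral.integral_mul_const]
          _ = A * M s := by rw [hshift s]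
    calc ∫ t in (0:ℝ)..(2 * π), V t
        = ∫ t, (∫ s, F t s ∂μ) ∂μ := by
          rw [hVeq']
          exact intervalIntegral.integral_of_le h2π.le
      _ = ∫ s, (∫ t, F t s ∂μ) ∂μ := hswap
      _ = ∫ s, (A * M s) ∂μ :=
          integral_congr_ae (Filter.Eventually.of_forall fun s => hinner s)
      _ = A * ∫ s, M s ∂μ := integral_const_mul A M
      _ = A * (4 * π * N) := by
          rw [← intervalIntegral.integral_of_le h2π.le, hIM]
  have claim1' : ∀ t ∈ Set.Icc (0:ℝ) (2 * π), R t ^ (p - 1) * |deriv R t|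
      ≤ ((p - 1) / p * (1 / (2 * π)) * (4 * π * N)) * R t ^ p
          + ((1 / p) * (1 / (2 * π))) * V t := by
    intro t _
    rw [← hbeq t]
    exact claim1 t
  calc ∫ t in (0:ℝ)..(2 * π), R t ^ (p - 1) * |deriv R t|
      ≤ ∫ t in (0:ℝ)..(2 * π),
          (((p - 1) / p * (1 / (2 * π)) * (4 * π * N)) * R t ^ p
            + ((1 / p) * (1 / (2 * π))) * V t) := by
        apply intervalIntegral.integral_mono_on h2π.le
        · exact (hRqc.mul (rR_deriv_cont nf k).abs).intervalIntegrable _ _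
        · exact ((hRpc.intervalIntegrable _ _).const_mul _).add (hVii.const_mul _)
        · exact claim1'
    _ = ((p - 1) / p * (1 / (2 * π)) * (4 * π * N)) * A
          + ((1 / p) * (1 / (2 * π))) * (A * (4 * π * N)) := by
        rw [intervalIntegral.integral_add
          ((hRpc.intervalIntegrable _ _).const_mul _) (hVii.const_mul _)]
        rw [intervalIntegral.integral_const_mul, intervalIntegral.integral_const_mul,
          hVtot, ← hA]
    _ = 2 * N * A := by
        field_simp
        ring

theorem stmt_15 (p : ℝ) (hp : 1 ≤ p) (n : ℤ) (hn : n ≠ 0)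
    (k : ℕ) (nf : ℕ → ℕ) (hpos : ∀ j, 0 < nf j) (hmono : StrictMono nf) :
    ‖((1 / (2 * π)) * ∫ t in (0:ℝ)..(2 * π),
        (((∏ j ∈ Finset.range k, (1 + Real.cos ((nf j : ℝ) * t))) ^ p : ℝ) : ℂ) *
          Complex.exp (Complex.I * n * t))‖ ≤
      (2 * π * p * (∑ j ∈ Finset.range k, (nf j : ℝ)) / |(n : ℝ)|) *
        ((1 / (2 * π)) * ∫ t in (0:ℝ)..(2 * π),
          (∏ j ∈ Finset.range k, (1 + Real.cos ((nf j : ℝ) * t))) ^ p) := by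
  have h2π : (0:ℝ) < 2 * π := by positivity
  have hp0 : (0:ℝ) < p := lt_of_lt_of_le one_pos hp
  set N : ℕ := ∑ j ∈ Finset.range k, nf j with hN
  set R : ℝ → ℝ := rR nf k with hR
  set A : ℝ := ∫ t in (0:ℝ)..(2 * π), R t ^ p with hA
  set Dd : ℝ := ∫ t in (0:ℝ)..(2 * π), R t ^ (p - 1) * |deriv R t| with hDd
  have hApos : 0 ≤ A := by
    rw [hA]
    apply intervalIntegral.integral_nonneg h2π.le
    intro t _
    exact Real.rpow_nonneg (rR_nonneg nf k t) p
  have hDdpos : 0 ≤ Dd := by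
    rw [hDd]
    apply intervalIntegral.integral_nonneg h2π.le
    intro t _
    exact mul_nonneg (Real.rpow_nonneg (rR_nonneg nf k t) _) (abs_nonneg _)
  have hcore : Dd ≤ 2 * N * A := core_est p hp nf k
  have hnpos : (0:ℝ) < |(n:ℝ)| := by
    apply abs_pos.mpr
    exact_mod_cast hn
  -- integration by parts
  set c : ℂ := Complex.I * (n:ℂ) with hc
  have hcne : c ≠ 0 := by
    rw [hc]
    exact mul_ne_zero Complex.I_ne_zero (by exact_mod_cast hn)
  set G : ℝ → ℝ := fun t => R t ^ p with hG
  set dG : ℝ → ℝ := fun t => p * R t ^ (p - 1) * deriv R t with hdG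
  have hGd : ∀ t : ℝ, HasDerivAt G (dG t) t := by
    intro t
    have h := (Real.hasDerivAt_rpow_const (x := R t) (p := p) (Or.inr hp)).comp t
      (rR_hasDeriv nf k t)
    exact h.congr_deriv (by simp only [hdG, hR])
  have hdGcont : Continuous dG := by
    rw [hdG]
    apply Continuous.mul
    · exact continuous_const.mul
        ((Real.continuous_rpow_const (by linarith)).comp (rR_cont nf k))
    · exact rR_deriv_cont nf k
  have hecont : Continuous (fun t : ℝ => Complex.exp (c * t)) := by fun_prop
  set J : ℂ := ∫ t in (0:ℝ)..(2 * π), ((G t : ℝ) : ℂ) * Complex.exp (c * t) with hJ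
  set Jd : ℂ := ∫ t in (0:ℝ)..(2 * π), ((dG t : ℝ) : ℂ) * Complex.exp (c * t) with hJd
  have hΦ : ∀ t : ℝ, HasDerivAt (fun u : ℝ => ((G u : ℝ) : ℂ) * Complex.exp (c * u))
      (((dG t : ℝ) : ℂ) * Complex.exp (c * t) + ((G t : ℝ) : ℂ) * (Complex.exp (c * t) * c)) t := by
    intro t
    have h1 : HasDerivAt (fun u : ℝ => ((G u : ℝ) : ℂ)) ((dG t : ℝ) : ℂ) t :=
      (hGd t).ofReal_comp
    have h2 : HasDerivAt (fun u : ℝ => Complex.exp (c * u)) (Complex.exp (c * t) * c) t := by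
      have h0 : HasDerivAt (fun u : ℝ => c * (u : ℂ)) c t := by
        simpa using (Complex.ofRealCLM.hasDerivAt (x := t)).const_mul c
      exact h0.cexp
    exact h1.mul h2
  have hGcont : Continuous G := by
    rw [hG]
    exact (Real.continuous_rpow_const (by linarith)).comp (rR_cont nf k)
  have hibp : Jd + J * c = 0 := by
    have hint : ∫ t in (0:ℝ)..(2 * π),
        (((dG t : ℝ) : ℂ) * Complex.exp (c * t) + ((G t : ℝ) : ℂ) * (Complex.exp (c * t) * c))
        = ((G (2 * π) : ℝ) : ℂ) * Complex.exp (c * (2 * π : ℝ))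
          - ((G 0 : ℝ) : ℂ) * Complex.exp (c * (0 : ℝ)) := by
      apply intervalIntegral.integral_eq_sub_of_hasDerivAt (fun t _ => hΦ t)
      apply Continuous.intervalIntegrable
      apply Continuous.add
      · exact (Complex.continuous_ofReal.comp hdGcont).mul hecont
      · exact (Complex.continuous_ofReal.comp hGcont).mul (hecont.mul continuous_const)
    have hGper : G (2 * π) = G 0 := by
      have h := rR_periodic nf k 0
      rw [zero_add] at h
      exact congrArg (fun x => x ^ p) h
    have hexp1 : Complex.exp (c * ((2 * π : ℝ) : ℂ)) = 1 := by
      rw [show c * ((2 * π : ℝ) : ℂ) = (n : ℂ) * (2 * π * Complex.I) from by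
        rw [hc]; push_cast; ring]
      exact Complex.exp_int_mul_two_pi_mul_I n
    rw [hGper, hexp1] at hint
    simp only [Complex.ofReal_zero, mul_zero, Complex.exp_zero, mul_one, sub_self] at hint
    have hi1 : IntervalIntegrable (fun t : ℝ => ((dG t : ℝ) : ℂ) * Complex.exp (c * t))
        volume 0 (2 * π) :=
      ((Complex.continuous_ofReal.comp hdGcont).mul hecont).intervalIntegrable _ _
    have hi2 : IntervalIntegrable (fun t : ℝ => ((G t : ℝ) : ℂ) * (Complex.exp (c * t) * c))
        volume 0 (2 * π) :=
      ((Complex.continuous_ofReal.comp hGcont).mul (hecont.mul continuous_const)).intervalIntegrable _ _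
    rw [intervalIntegral.integral_add hi1 hi2] at hint
    rw [hJd, hJ]
    rw [← hint]
    congr 1
    rw [← intervalIntegral.integral_mul_const]
    apply intervalIntegral.integral_congr
    intro t _
    ring
  -- norm bounds
  have hJdnorm : ‖Jd‖ ≤ p * Dd := by
    rw [hJd]
    calc ‖∫ t in (0:ℝ)..(2 * π), ((dG t : ℝ) : ℂ) * Complex.exp (c * t)‖
        ≤ ∫ t in (0:ℝ)..(2 * π), ‖((dG t : ℝ) : ℂ) * Complex.exp (c * t)‖ :=
          intervalIntegral.norm_integral_le_integral_norm h2π.le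
      _ = ∫ t in (0:ℝ)..(2 * π), |dG t| := by
          apply intervalIntegral.integral_congr
          intro t _
          show ‖((dG t : ℝ) : ℂ) * Complex.exp (c * t)‖ = |dG t|
          rw [norm_mul, Complex.norm_real, Real.norm_eq_abs]
          have : ‖Complex.exp (c * t)‖ = 1 := by
            rw [Complex.norm_exp]
            have : (c * (t:ℝ)).re = 0 := by
              rw [hc]
              simp
            rw [this, Real.exp_zero]
          rw [this, mul_one]
      _ = p * Dd := by
          rw [hDd, ← intervalIntegral.integral_const_mul]
          apply intervalIntegral.integral_congr
          intro t _
          show |dG t| = p * (R t ^ (p - 1) * |deriv R t|)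
          rw [hdG]
          simp only
          rw [abs_mul, abs_mul, _root_.abs_of_nonneg hp0.le,
            _root_.abs_of_nonneg (Real.rpow_nonneg (rR_nonneg nf k t) _)]
          ring
  have hcnorm : ‖c‖ = |(n:ℝ)| := by
    rw [hc, norm_mul, Complex.norm_I, one_mul,
      show ((n:ℤ):ℂ) = (((n:ℝ)):ℂ) from by push_cast; ring, Complex.norm_real,
      Real.norm_eq_abs]
  have hJnorm : ‖J‖ * |(n:ℝ)| ≤ p * Dd := by
    have : J * c = -Jd := by
      have := hibp
      linear_combination this
    calc ‖J‖ * |(n:ℝ)| = ‖J * c‖ := by rw [norm_mul, hcnorm]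
      _ = ‖Jd‖ := by rw [this, norm_neg]
      _ ≤ p * Dd := hJdnorm
  -- final assembly
  have main : ‖(1 / (2 * (π:ℂ))) * J‖
      ≤ (2 * π * p * (N : ℝ) / |(n : ℝ)|) * ((1 / (2 * π)) * A) := by
    rw [norm_mul]
    have h1 : ‖(1 / (2 * (π:ℂ)))‖ = 1 / (2 * π) := by
      rw [show (1 / (2 * (π:ℂ))) = (((1 / (2 * π) : ℝ)) : ℂ) from by push_cast; ring,
        Complex.norm_real, Real.norm_eq_abs, _root_.abs_of_nonneg (by positivity)]
    rw [h1]
    have h2 : ‖J‖ ≤ p * (2 * N * A) / |(n:ℝ)| := by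
      rw [le_div_iff₀ hnpos]
      calc ‖J‖ * |(n:ℝ)| ≤ p * Dd := hJnorm
        _ ≤ p * (2 * N * A) := mul_le_mul_of_nonneg_left hcore hp0.le
    have hfin : (1 / (2 * π)) * (p * (2 * N * A) / |(n:ℝ)|)
        ≤ (2 * π * p * (N : ℝ) / |(n : ℝ)|) * ((1 / (2 * π)) * A) := by
      rw [show (1 / (2 * π)) * (p * (2 * (N:ℝ) * A) / |(n:ℝ)|)
          = (p * (N:ℝ) * A) / (π * |(n:ℝ)|) from by
        field_simp]
      rw [show (2 * π * p * (N:ℝ) / |(n:ℝ)|) * ((1 / (2 * π)) * A)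
          = (p * (N:ℝ) * A) / |(n:ℝ)| from by
        field_simp]
      apply div_le_div_of_nonneg_left (by positivity) hnpos
      nlinarith [Real.pi_gt_three, hnpos]
    calc (1 / (2 * π)) * ‖J‖ ≤ (1 / (2 * π)) * (p * (2 * N * A) / |(n:ℝ)|) := by
          apply mul_le_mul_of_nonneg_left h2 (by positivity)
      _ ≤ (2 * π * p * (N : ℝ) / |(n : ℝ)|) * ((1 / (2 * π)) * A) := hfin
  rw [show (∑ j ∈ Finset.range k, (nf j : ℝ)) = ((∑ j ∈ Finset.range k, nf j : ℕ) : ℝ) from by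
    push_cast; ring]
  exact main

end RieszProductAux
end
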